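/- arXiv:2604.24619 — 5 statements merged into one kernel-verified Lean document; each statement's English description precedes it below -/
import Mathlib

section
/- Let f : S¹ → S² be a CaTherine wheel, and let I ⊆ S¹ be a closed interval with complementary interval I^c (the closure of S¹ \ I). Then f(I) ∩ f(I^c) = ∂f(I) = ∂f(I^c). -/
open Set Topology

noncomputable section

abbrev S1 := AddCircle (1 : ℝ)
abbrev S2 := ↥(Metric.sphere (0 : EuclideanSpace ℝ (Fin 3)) 1)
abbrev D2 := ↥(Metric.closedBall (0 : EuclideanSpace ℝ (Fin 2)) 1)

/-- A closed interval in the circle: a closed subset homeomorphic to `[0,1]`. -/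
def IsArc (I : Set S1) : Prop := IsClosed I ∧ Nonempty (↥I ≃ₜ ↥(Icc (0:ℝ) 1))

/-- A CaTherine wheel: a continuous surjection `f : S¹ → S²` such that the image of
every closed interval `I` is homeomorphic to the closed unit disk and the image of the
endpoints `∂I` lies in the boundary circle (= topological frontier) of that disk. -/
def IsWheel (f : S1 → S2) : Prop :=
  Continuous f ∧ Function.Surjective f ∧
    ∀ I : Set S1, IsArc I →
      Nonempty (↥(f '' I) ≃ₜ D2) ∧ f '' (frontier I) ⊆ frontier (f '' I)

namespace CW

lemma coe_eq_coe {x y : ℝ} : (↑x : S1) = ↑y ↔ ∃ n : ℤ, y = x + n := by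
  rw [QuotientAddGroup.eq_iff_sub_mem]
  constructor
  · intro h
    obtain ⟨n, hn⟩ := AddSubgroup.mem_zmultiples_iff.mp h
    have : (n:ℝ) = x - y := by simpa using hn
    exact ⟨-n, by push_cast; linarith⟩
  · rintro ⟨n, rfl⟩
    exact AddSubgroup.mem_zmultiples_iff.mpr ⟨-n, by simp⟩

lemma cont_coe : Continuous ((↑) : ℝ → S1) := continuous_quotient_mk'

lemma coe_add_one (x : ℝ) : ((x + 1 : ℝ) : S1) = (x : S1) := AddCircle.coe_add_period 1 x

/-- every point has a representative in `[a, a+1)` -/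
lemma exists_rep (a : ℝ) (z : S1) : ∃ x ∈ Ico a (a + 1), (x : S1) = z := by
  let w := AddCircle.equivIco 1 a z
  refine ⟨w.1, w.2, ?_⟩
  have := (AddCircle.equivIco 1 a).symm_apply_apply z
  exact this

/-- the standard closed arc from `a` to `b` -/
def parc (a b : ℝ) : Set S1 := ((↑) : ℝ → S1) '' Icc a b

lemma parc_compact {a b : ℝ} : IsCompact (parc a b) := isCompact_Icc.image cont_coe

lemma parc_closed {a b : ℝ} : IsClosed (parc a b) := parc_compact.isClosed

lemma parc_mono {a b c : ℝ} (h : b ≤ c) : parc a b ⊆ parc a c :=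
  image_mono (Icc_subset_Icc_right h)

lemma coe_mem_parc {a b x : ℝ} (h : x ∈ Icc a b) : (x : S1) ∈ parc a b := ⟨x, h, rfl⟩

end CW

namespace CW

lemma parc_union_Ioo {a b : ℝ} (hab : a ≤ b) (hb : b < a + 1) :
    parc a b ∪ ((↑) : ℝ → S1) '' Ioo b (a + 1) = univ := by
  have h1 : Icc a b ∪ Ioo b (a + 1) = Ico a (a + 1) := by
    ext x; simp only [mem_union, mem_Icc, mem_Ioo, mem_Ico]
    constructor
    · rintro (⟨h1, h2⟩ | ⟨h1, h2⟩) <;> constructor <;> linarith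
    · rintro ⟨h1, h2⟩
      rcases le_or_gt x b with h | h
      · exact Or.inl ⟨h1, h⟩
      · exact Or.inr ⟨h, h2⟩
  rw [parc, ← image_union, h1, AddCircle.coe_image_Ico_eq]

lemma parc_disj_Ioo {a b : ℝ} (hab : a ≤ b) (hb : b < a + 1) :
    parc a b ∩ ((↑) : ℝ → S1) '' Ioo b (a + 1) = ∅ := by
  ext z
  simp only [mem_inter_iff, mem_empty_iff_false, iff_false, not_and]
  rintro ⟨x, hx, rfl⟩ ⟨y, hy, hxy⟩
  obtain ⟨n, hn⟩ := coe_eq_coe.mp hxy.symm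
  simp only [mem_Icc] at hx; simp only [mem_Ioo] at hy
  have h1 : (0:ℝ) < n := by push_cast [hn] at *; linarith
  have h2 : (n:ℝ) < 1 := by push_cast [hn] at *; linarith
  have : (0:ℤ) < n := by exact_mod_cast h1
  have : n < 1 := by exact_mod_cast h2
  omega

lemma compl_parc {a b : ℝ} (hab : a ≤ b) (hb : b < a + 1) :
    (parc a b)ᶜ = ((↑) : ℝ → S1) '' Ioo b (a + 1) := by
  have h1 := parc_union_Ioo hab hb
  have h2 := parc_disj_Ioo hab hb
  ext z
  constructor
  · intro hz
    have : z ∈ parc a b ∪ _ := h1 ▸ mem_univ z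
    rcases this with h | h
    · exact absurd h hz
    · exact h
  · intro hz hz'
    exact absurd (mem_inter hz' hz) (by rw [h2]; exact notMem_empty z)

lemma closure_image_Ioo {c d : ℝ} (h : c < d) :
    closure (((↑) : ℝ → S1) '' Ioo c d) = parc c d := by
  apply Subset.antisymm
  · exact closure_minimal (image_mono Ioo_subset_Icc_self) parc_closed
  · rw [parc, ← closure_Ioo h.ne]
    exact (image_closure_subset_closure_image cont_coe)

lemma closure_compl_parc {a b : ℝ} (hab : a < b) (hb : b < a + 1) :
    closure (parc a b)ᶜ = parc b (a + 1) := by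
  rw [compl_parc hab.le hb, closure_image_Ioo hb]

lemma parc_inter_parc {a b : ℝ} (hab : a < b) (hb : b < a + 1) :
    parc a b ∩ parc b (a + 1) = {(a : S1), (b : S1)} := by
  ext z
  simp only [mem_inter_iff, mem_insert_iff, mem_singleton_iff]
  constructor
  · rintro ⟨⟨x, hx, rfl⟩, ⟨y, hy, hxy⟩⟩
    obtain ⟨n, hn⟩ := coe_eq_coe.mp hxy.symm
    simp only [mem_Icc] at hx hy
    have h0 : (0:ℝ) ≤ n := by push_cast [hn] at *; linarith
    have h1 : (n:ℝ) ≤ 1 := by push_cast [hn] at *; linarith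
    have h0' : (0:ℤ) ≤ n := by exact_mod_cast h0
    have h1' : n ≤ 1 := by exact_mod_cast h1
    interval_cases n
    · -- n = 0 : x = y, so x = b
      have hxb : x = b := le_antisymm hx.2 (by push_cast at hn; linarith [hy.1])
      exact Or.inr (by rw [hxb])
    · -- n = 1 : x = y - 1 ≤ a and x ≥ a
      have hxa : x = a := le_antisymm (by push_cast at hn; linarith [hy.2]) hx.1
      exact Or.inl (by rw [hxa])
  · rintro (rfl | rfl)
    · exact ⟨coe_mem_parc ⟨le_refl a, hab.le⟩,
        by rw [← coe_add_one a]; exact coe_mem_parc ⟨by linarith, le_refl _⟩⟩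
    · exact ⟨coe_mem_parc ⟨hab.le, le_refl b⟩, coe_mem_parc ⟨le_refl b, by linarith⟩⟩

lemma frontier_parc {a b : ℝ} (hab : a < b) (hb : b < a + 1) :
    frontier (parc a b) = {(a : S1), (b : S1)} := by
  rw [frontier_eq_closure_inter_closure, parc_closed.closure_eq,
    closure_compl_parc hab hb, parc_inter_parc hab hb]

end CW

namespace CW

lemma injOn_coe_Icc {a b : ℝ} (hb : b < a + 1) : InjOn ((↑) : ℝ → S1) (Icc a b) := by
  intro x hx y hy hxy
  obtain ⟨n, hn⟩ := coe_eq_coe.mp hxy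
  simp only [mem_Icc] at hx hy
  have h1 : (-1:ℝ) < n := by push_cast [hn] at *; linarith
  have h2 : (n:ℝ) < 1 := by push_cast [hn] at *; linarith
  have h1' : (-1:ℤ) < n := by exact_mod_cast h1
  have h2' : n < 1 := by exact_mod_cast h2
  have : n = 0 := by omega
  rw [this] at hn; push_cast at hn; linarith

lemma isArc_parc {a b : ℝ} (hab : a < b) (hb : b < a + 1) : IsArc (parc a b) := by
  refine ⟨parc_closed, ?_⟩
  haveI : CompactSpace ↥(Icc a b) := isCompact_iff_compactSpace.mp isCompact_Icc
  let e : ↥(Icc a b) ≃ ↥(parc a b) := Equiv.Set.imageOfInjOn _ _ (injOn_coe_Icc hb)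
  have hc : Continuous e := Continuous.subtype_mk (cont_coe.comp continuous_subtype_val) _
  exact ⟨(Continuous.homeoOfEquivCompactToT2 hc).symm.trans (iccHomeoI a b hab)⟩

end CW

namespace CW

lemma arc_eq_parc {I : Set S1} (hI : IsArc I) (hne : I ≠ univ) :
    ∃ u v : ℝ, u < v ∧ v < u + 1 ∧ I = parc u v := by
  classical
  obtain ⟨t, ht⟩ : ∃ t : S1, t ∉ I := by
    by_contra h; push_neg at h; exact hne (eq_univ_of_forall h)
  obtain ⟨r, -, rfl⟩ := exists_rep 0 t
  set E : Set ℝ := ((↑) : ℝ → S1) ⁻¹' I ∩ Icc r (r + 1) with hE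
  have hpre : IsClosed (((↑) : ℝ → S1) ⁻¹' I) := hI.1.preimage cont_coe
  have hEcompact : IsCompact E := isCompact_Icc.inter_left hpre
  have hrE : r ∉ E := fun h => ht h.1
  have hr1E : r + 1 ∉ E := fun h => ht (by rw [← coe_add_one r]; exact h.1)
  have himg : ((↑) : ℝ → S1) '' E = I := by
    apply Subset.antisymm
    · rintro _ ⟨x, hx, rfl⟩; exact hx.1
    · intro z hz
      obtain ⟨x, hx, rfl⟩ := exists_rep r z
      exact ⟨x, ⟨hz, hx.1, hx.2.le⟩, rfl⟩
  have hinj : InjOn ((↑) : ℝ → S1) E := by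
    intro x hx y hy hxy
    obtain ⟨n, hn⟩ := coe_eq_coe.mp hxy
    have hx' := hx.2; have hy' := hy.2
    simp only [mem_Icc] at hx' hy'
    have h1 : (-1:ℝ) ≤ n := by push_cast [hn] at *; linarith
    have h2 : (n:ℝ) ≤ 1 := by push_cast [hn] at *; linarith
    have h1' : (-1:ℤ) ≤ n := by exact_mod_cast h1
    have h2' : n ≤ 1 := by exact_mod_cast h2
    interval_cases n
    · exfalso; apply hr1E
      have hxr : x = r + 1 := by push_cast at hn; linarith [hy'.1]
      exact hxr ▸ hx
    · push_cast at hn; linarith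
    · exfalso; apply hrE
      have hxr : x = r := by
        have : y = x + 1 := by push_cast at hn; linarith
        have := hy'.2; have := hx'.1; linarith
      exact hxr ▸ hx
  obtain ⟨e⟩ := hI.2
  have hIconn : IsConnected I := by
    haveI : ConnectedSpace ↥(Icc (0:ℝ) 1) :=
      isConnected_iff_connectedSpace.mp (isConnected_Icc zero_le_one)
    have hrg : I = range (Subtype.val ∘ e.symm) := by
      rw [range_comp, e.symm.surjective.range_eq, image_univ, Subtype.range_coe]
    rw [hrg]
    exact isConnected_range (continuous_subtype_val.comp e.symm.continuous)
  -- homeomorphism from E to I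
  haveI : CompactSpace ↥E := isCompact_iff_compactSpace.mp hEcompact
  let g : ↥E ≃ ↥I := (Equiv.Set.imageOfInjOn _ _ hinj).trans (Equiv.setCongr himg)
  have hgc : Continuous g := Continuous.subtype_mk (cont_coe.comp continuous_subtype_val) _
  let gh := Continuous.homeoOfEquivCompactToT2 (f := g) hgc
  have hEconn : IsConnected E := by
    haveI : ConnectedSpace ↥I := isConnected_iff_connectedSpace.mp hIconn
    have hrg : E = range (Subtype.val ∘ gh.symm) := by
      rw [range_comp, gh.symm.surjective.range_eq, image_univ, Subtype.range_coe]
    rw [hrg]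
    exact isConnected_range (continuous_subtype_val.comp gh.symm.continuous)
  -- two distinct points of E
  have hnontriv : ∃ x ∈ E, ∃ y ∈ E, x ≠ y := by
    have h01 : e.symm ⟨0, by norm_num⟩ ≠ e.symm ⟨1, by norm_num⟩ := by
      intro h
      have := e.symm.injective h
      simp only [Subtype.mk.injEq] at this
      norm_num at this
    refine ⟨(gh.symm (e.symm ⟨0, by norm_num⟩) : ↥E), Subtype.mem _,
      (gh.symm (e.symm ⟨1, by norm_num⟩) : ↥E), Subtype.mem _, ?_⟩
    intro h
    exact h01 (gh.symm.injective (Subtype.val_injective h))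
  have hEeq := eq_Icc_of_connected_compact hEconn hEcompact
  set u := sInf E; set v := sSup E
  obtain ⟨x, hx, y, hy, hxy⟩ := hnontriv
  have huv : u < v := by
    rw [hEeq] at hx hy
    rcases hxy.lt_or_gt with h | h
    · exact lt_of_le_of_lt hx.1 (lt_of_lt_of_le h hy.2)
    · exact lt_of_le_of_lt hy.1 (lt_of_lt_of_le h hx.2)
  have huE : u ∈ E := by rw [hEeq]; exact ⟨le_refl u, huv.le⟩
  have hvE : v ∈ E := by rw [hEeq]; exact ⟨huv.le, le_refl v⟩
  have hru : r < u := lt_of_le_of_ne huE.2.1 (fun h => hrE (h ▸ huE))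
  have hvr : v < r + 1 := lt_of_le_of_ne hvE.2.2 (fun h => hr1E (h ▸ hvE))
  exact ⟨u, v, huv, by linarith, by rw [← himg, hEeq]; rfl⟩

end CW

namespace CW

lemma image_closed {f : S1 → S2} (hfc : Continuous f) {A : Set S1} (hA : IsClosed A) :
    IsClosed (f '' A) := (hA.isCompact.image hfc).isClosed

lemma frontier_image_subset {f : S1 → S2} (hfc : Continuous f) (hfs : Function.Surjective f)
    {A B : Set S1} (hA : IsClosed A) (hB : IsClosed B) (hAB : Aᶜ ⊆ B) :
    frontier (f '' A) ⊆ f '' A ∩ f '' B := by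
  intro y hy
  rw [frontier_eq_closure_inter_closure] at hy
  refine ⟨(image_closed hfc hA).closure_eq ▸ hy.1, ?_⟩
  have hcompl : (f '' A)ᶜ ⊆ f '' B := by
    intro z hz
    obtain ⟨t, rfl⟩ := hfs z
    have htA : t ∉ A := fun h => hz ⟨t, h, rfl⟩
    exact ⟨t, hAB htA, rfl⟩
  have := closure_mono hcompl hy.2
  rwa [(image_closed hfc hB).closure_eq] at this

end CW

/-- for a closed interval `I` with complementary interval
`I^c = closure (S¹ \ I)`, one has `f(I) ∩ f(I^c) = ∂f(I) = ∂f(I^c)`. -/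
theorem stmt3 (f : S1 → S2) (hf : IsWheel f) (I : Set S1) (hI : IsArc I) :
    f '' I ∩ f '' (closure Iᶜ) = frontier (f '' I) ∧
      frontier (f '' I) = frontier (f '' (closure Iᶜ)) := by
  classical
  open CW in
  obtain ⟨hfc, hfs, hw⟩ := hf
  by_cases hne : I = univ
  · subst hne
    simp [image_univ, hfs.range_eq]
  obtain ⟨u, v, huv, hv1, hIp⟩ := CW.arc_eq_parc hI hne
  have hJ : closure Iᶜ = CW.parc v (u + 1) := by
    rw [hIp]; exact CW.closure_compl_parc huv hv1
  have hfrI : frontier I = {(u : S1), (v : S1)} := by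
    rw [hIp]; exact CW.frontier_parc huv hv1
  have hJarc : IsArc (closure Iᶜ) := by
    rw [hJ]; exact CW.isArc_parc hv1 (by linarith)
  have hfrJ : frontier (closure Iᶜ) = {(v : S1), (u : S1)} := by
    rw [hJ, CW.frontier_parc hv1 (by linarith), CW.coe_add_one]
  -- key 1 : common points are not in the interior of f '' I
  have key1 : ∀ y ∈ f '' I ∩ f '' (closure Iᶜ), y ∉ interior (f '' I) := by
    rintro y ⟨hyI, hyJ⟩ hint
    rw [hJ] at hyJ
    obtain ⟨t, ht, rfl⟩ := hyJ
    obtain ⟨x, hx, rfl⟩ := ht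
    have hend : ∀ s : S1, (s : S1) ∈ frontier I → f s = f (↑x) → False := by
      intro s hs hfeq
      have hmem := (hw I hI).2 ⟨s, hs, rfl⟩
      rw [hfeq] at hmem
      exact hmem.2 hint
    rcases eq_or_lt_of_le hx.1 with hxv | hxv
    · exact hend _ (by rw [hfrI, ← hxv]; exact Or.inr rfl) rfl
    rcases eq_or_lt_of_le hx.2 with hxu | hxu
    · refine hend ((u : ℝ) : S1) (by rw [hfrI]; exact Or.inl rfl) ?_
      rw [hxu, CW.coe_add_one]
    · -- x strictly between : use the bigger arc K = parc u x
      have hKarc : IsArc (CW.parc u x) := CW.isArc_parc (by linarith) hxu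
      have hIK : I ⊆ CW.parc u x := by rw [hIp]; exact CW.parc_mono (by linarith)
      have hfrK : frontier (CW.parc u x) = {(u : S1), (x : S1)} :=
        CW.frontier_parc (by linarith) hxu
      have hmem := (hw _ hKarc).2 ⟨(x : S1), by rw [hfrK]; exact Or.inr rfl, rfl⟩
      exact hmem.2 (interior_mono (image_mono (f := f) hIK) hint)
  -- key 2 : common points are not in the interior of f '' (closure Iᶜ)
  have key2 : ∀ y ∈ f '' I ∩ f '' (closure Iᶜ), y ∉ interior (f '' (closure Iᶜ)) := by
    rintro y ⟨hyI, hyJ⟩ hint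
    obtain ⟨t, ht, rfl⟩ := hyI
    rw [hIp] at ht
    obtain ⟨x, hx, rfl⟩ := ht
    have hend : ∀ s : S1, (s : S1) ∈ frontier (closure Iᶜ) → f s = f (↑x) → False := by
      intro s hs hfeq
      have hmem := (hw _ hJarc).2 ⟨s, hs, rfl⟩
      rw [hfeq] at hmem
      exact hmem.2 hint
    rcases eq_or_lt_of_le hx.1 with hxu | hxu
    · exact hend _ (by rw [hfrJ, ← hxu]; exact Or.inr rfl) rfl
    rcases eq_or_lt_of_le hx.2 with hxv | hxv
    · exact hend _ (by rw [hfrJ, ← hxv]; exact Or.inl rfl) rfl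
    · have hKarc : IsArc (CW.parc v (x + 1)) := CW.isArc_parc (by linarith) (by linarith)
      have hJK : closure Iᶜ ⊆ CW.parc v (x + 1) := by
        rw [hJ]; exact CW.parc_mono (by linarith)
      have hfrK : frontier (CW.parc v (x + 1)) = {(v : S1), ((x + 1 : ℝ) : S1)} :=
        CW.frontier_parc (by linarith) (by linarith)
      have hmem := (hw _ hKarc).2
        ⟨((x + 1 : ℝ) : S1), by rw [hfrK]; exact Or.inr rfl, by rw [CW.coe_add_one]⟩
      exact hmem.2 (interior_mono (image_mono (f := f) hJK) hint)
  have front1 : frontier (f '' I) ⊆ f '' I ∩ f '' (closure Iᶜ) :=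
    CW.frontier_image_subset hfc hfs hI.1 isClosed_closure subset_closure
  have front2 : frontier (f '' (closure Iᶜ)) ⊆ f '' (closure Iᶜ) ∩ f '' I :=
    CW.frontier_image_subset hfc hfs isClosed_closure hI.1
      (compl_subset_comm.mp subset_closure)
  have sub1 : f '' I ∩ f '' (closure Iᶜ) ⊆ frontier (f '' I) := fun y hy =>
    ⟨subset_closure hy.1, key1 y hy⟩
  have sub2 : f '' I ∩ f '' (closure Iᶜ) ⊆ frontier (f '' (closure Iᶜ)) := fun y hy =>
    ⟨subset_closure hy.2, key2 y hy⟩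
  refine ⟨Subset.antisymm sub1 front1, Subset.antisymm ?_ ?_⟩
  · exact fun y hy => sub2 (front1 hy)
  · exact fun y hy => sub1 ⟨(front2 hy).2, (front2 hy).1⟩
end
end

section
/- Let f : S¹ → S² be a CaTherine wheel. The map I ↦ ∂f(I), sending a closed interval (encoded as an ordered pair of distinct endpoints in S¹ × S¹ minus the diagonal) to the boundary circle of the disk f(I), is continuous with respect to the Hausdorff distance on closed subsets of S². -/
open Set Topology

noncomputable section

/-- The oriented closed arc in the circle from `p` to `q` (traversed in the positive
direction): the image of a lift interval `[a,b]` with `↑a = p`, `↑b = q`, `a ≤ b < a+1`. -/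
def arcCC (p q : S1) : Set S1 :=
  {x | ∃ a b : ℝ, (a : S1) = p ∧ (b : S1) = q ∧ a ≤ b ∧ b < a + 1 ∧
        ∃ t ∈ Icc a b, (t : S1) = x}

/-! ### Auxiliary material -/

namespace Stmt4Aux

open Metric

instance : Fact ((0:ℝ) < 1) := ⟨one_pos⟩

lemma coe_eq_coe {x y : ℝ} : (x : S1) = (y : S1) ↔ ∃ n : ℤ, x - y = n := by
  rw [QuotientAddGroup.eq_iff_sub_mem]
  constructor
  · rintro h
    rcases AddSubgroup.mem_zmultiples_iff.mp h with ⟨n, hn⟩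
    exact ⟨n, by simpa using hn.symm⟩
  · rintro ⟨n, hn⟩
    exact AddSubgroup.mem_zmultiples_iff.mpr ⟨n, by simpa using hn.symm⟩

lemma coe_shift (x : ℝ) (n : ℤ) : ((x + n : ℝ) : S1) = (x : S1) :=
  coe_eq_coe.mpr ⟨n, by ring⟩

lemma dist_coe_le (x y : ℝ) : dist (x : S1) (y : S1) ≤ |x - y| := by
  have h : (x : S1) - (y : S1) = ((x - y : ℝ) : S1) := (AddCircle.coe_sub 1 _ _).symm
  rw [dist_eq_norm, h, AddCircle.norm_eq]
  simp only [inv_one, one_mul, mul_one]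
  rcases le_or_gt (1/2 : ℝ) |x - y| with h | h
  · calc |x - y - round (x-y)| ≤ 1/2 := abs_sub_round _
      _ ≤ |x - y| := h
  · rw [round_eq_zero_iff.mpr ⟨by linarith [abs_lt.mp h], by linarith [abs_lt.mp h]⟩]
    simp

lemma exists_lift_near (x : ℝ) (q : S1) :
    ∃ b : ℝ, (b : S1) = q ∧ |x - b| = dist (x : S1) q := by
  obtain ⟨w, rfl⟩ := QuotientAddGroup.mk_surjective q
  refine ⟨w + round (x - w), coe_shift w _, ?_⟩
  have h : (x : S1) - (w : S1) = ((x - w : ℝ) : S1) := (AddCircle.coe_sub 1 _ _).symm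
  rw [dist_eq_norm, h, AddCircle.norm_eq]
  simp only [inv_one, one_mul, mul_one]
  ring_nf

/-- The image in the circle of the real interval `[a,b]`. -/
def arcSet (a b : ℝ) : Set S1 := (fun t : ℝ => (t : S1)) '' Icc a b

lemma mem_arcSet_of_mem {a b t : ℝ} (h : t ∈ Icc a b) : (t : S1) ∈ arcSet a b := ⟨t, h, rfl⟩

lemma arcSet_shift (a b : ℝ) (n : ℤ) : arcSet (a + n) (b + n) = arcSet a b := by
  unfold arcSet
  ext x
  simp only [mem_image]
  constructor
  · rintro ⟨t, ht, rfl⟩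
    exact ⟨t - n, ⟨by linarith [ht.1], by linarith [ht.2]⟩, by
      simpa using coe_shift (t - n) n⟩
  · rintro ⟨t, ht, rfl⟩
    exact ⟨t + n, ⟨by linarith [ht.1], by linarith [ht.2]⟩, coe_shift t n⟩

lemma arcSet_mono {a b c d : ℝ} (hca : c ≤ a) (hbd : b ≤ d) : arcSet a b ⊆ arcSet c d :=
  image_mono (Icc_subset_Icc hca hbd)

lemma isCompact_arcSet (a b : ℝ) : IsCompact (arcSet a b) :=
  (isCompact_Icc).image (continuous_quotient_mk')

lemma isClosed_arcSet (a b : ℝ) : IsClosed (arcSet a b) :=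
  (isCompact_arcSet a b).isClosed

lemma arcSet_union (a b : ℝ) (h1 : a ≤ b) (h2 : b ≤ a + 1) :
    arcSet a b ∪ arcSet b (a + 1) = univ := by
  rw [eq_univ_iff_forall]
  intro x
  obtain ⟨t, rfl⟩ := QuotientAddGroup.mk_surjective x
  set t' := a + Int.fract (t - a) with ht'
  have hfr := Int.fract_nonneg (t - a)
  have hfr2 := Int.fract_lt_one (t - a)
  have hco : (t' : S1) = (t : S1) := by
    have ht : t = t' + (⌊t - a⌋ : ℤ) := by
      rw [ht', Int.fract]; ring
    rw [ht, coe_shift]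
  rcases le_or_gt t' b with h | h
  · exact Or.inl ⟨t', ⟨by linarith, h⟩, hco⟩
  · exact Or.inr ⟨t', ⟨h.le, by linarith⟩, hco⟩

lemma not_mem_arcSet {a b : ℝ} (h1 : a ≤ b) (h2 : b < a + 1) {u : ℝ}
    (hu : u ∈ Ioo b (a + 1)) : (u : S1) ∉ arcSet a b := by
  rintro ⟨t, ht, hco⟩
  rcases coe_eq_coe.mp hco with ⟨n, hn⟩
  have h0 : (0:ℝ) < -(n:ℝ) := by
    have := ht.2; have := hu.1; linarith [hn]
  have h1' : -(n:ℝ) < 1 := by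
    have := ht.1; have := hu.2; linarith [hn]
  have hn0 : (0:ℤ) < -n := by exact_mod_cast (by push_cast; linarith : ((0:ℤ):ℝ) < ((-n:ℤ):ℝ))
  have hn1 : -n < 1 := by exact_mod_cast (by push_cast; linarith : ((-n:ℤ):ℝ) < ((1:ℤ):ℝ))
  omega

lemma mem_closure_compl_arcSet {a b : ℝ} (h1 : a ≤ b) (h2 : b < a + 1) {u : ℝ}
    (hu : u ∈ Icc b (a + 1)) : (u : S1) ∈ closure (arcSet a b)ᶜ := by
  have hsub : (fun t : ℝ => (t : S1)) '' Ioo b (a+1) ⊆ (arcSet a b)ᶜ := by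
    rintro x ⟨v, hv, rfl⟩
    exact not_mem_arcSet h1 h2 hv
  refine closure_mono hsub ?_
  have h : (u : S1) ∈ (fun t : ℝ => (t : S1)) '' closure (Ioo b (a+1)) :=
    ⟨u, by rwa [closure_Ioo (by linarith : b ≠ a + 1)], rfl⟩
  exact (image_closure_subset_closure_image continuous_quotient_mk') h

lemma frontier_arc_left {a b : ℝ} (h1 : a ≤ b) (h2 : b < a + 1) :
    (a : S1) ∈ frontier (arcSet a b) := by
  rw [frontier_eq_closure_inter_closure]
  refine ⟨subset_closure (mem_arcSet_of_mem ⟨le_refl a, h1⟩), ?_⟩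
  have h := mem_closure_compl_arcSet h1 h2 ⟨by linarith, le_refl (a+1)⟩
  rwa [show ((a + 1 : ℝ) : S1) = (a : S1) by simpa using coe_shift a 1] at h

lemma frontier_arc_right {a b : ℝ} (h1 : a ≤ b) (h2 : b < a + 1) :
    (b : S1) ∈ frontier (arcSet a b) := by
  rw [frontier_eq_closure_inter_closure]
  exact ⟨subset_closure (mem_arcSet_of_mem ⟨h1, le_refl b⟩),
    mem_closure_compl_arcSet h1 h2 ⟨le_refl b, by linarith⟩⟩

lemma isArc_arcSet {a b : ℝ} (h1 : a < b) (h2 : b < a + 1) : IsArc (arcSet a b) := by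
  refine ⟨isClosed_arcSet a b, ?_⟩
  have hinj : Function.Injective (fun t : ↥(Icc a b) => ((t : ℝ) : S1)) := by
    rintro ⟨u, hu⟩ ⟨v, hv⟩ h
    simp only at h
    rcases coe_eq_coe.mp h with ⟨n, hn⟩
    have habs : |u - v| < 1 := by
      rw [abs_lt]
      constructor <;> simp only [mem_Icc] at hu hv <;>
        [linarith [hu.1, hv.2]; linarith [hu.2, hv.1]]
    rw [hn] at habs
    have hn0 : n = 0 := by
      have h0 : |(n:ℝ)| < ((1:ℤ):ℝ) := by push_cast; exact habs
      have h1' := abs_lt.mp h0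
      have h2' : (-1:ℤ) < n ∧ n < 1 := ⟨by exact_mod_cast h1'.1, by exact_mod_cast h1'.2⟩
      omega
    have : u - v = 0 := by rw [hn, hn0]; simp
    exact Subtype.ext (by linarith)
  have hcont : Continuous (fun t : ↥(Icc a b) => ((t : ℝ) : S1)) :=
    continuous_quotient_mk'.comp continuous_subtype_val
  have hemb := hcont.isClosedEmbedding hinj
  have e1 : ↥(Icc a b) ≃ₜ ↥(Set.range fun t : ↥(Icc a b) => ((t : ℝ) : S1)) :=
    hemb.toIsEmbedding.toHomeomorph
  have hr : (Set.range fun t : ↥(Icc a b) => ((t : ℝ) : S1)) = arcSet a b := by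
    rw [arcSet, ← Set.image_eq_range]
  exact ⟨((e1.trans (Homeomorph.setCongr hr)).symm).trans (iccHomeoI a b h1)⟩

lemma arcCC_eq {p q : S1} {a b : ℝ} (ha : (a : S1) = p) (hb : (b : S1) = q)
    (h1 : a ≤ b) (h2 : b < a + 1) : arcCC p q = arcSet a b := by
  ext x
  constructor
  · rintro ⟨a₂, b₂, ha₂, hb₂, h1₂, h2₂, t, ht, rfl⟩
    rcases coe_eq_coe.mp (ha₂.trans ha.symm) with ⟨m, hm⟩
    rcases coe_eq_coe.mp (hb₂.trans hb.symm) with ⟨k, hk⟩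
    have hkm : k = m := by
      have h3 : ((k - m : ℤ) : ℝ) = (b₂ - a₂) - (b - a) := by push_cast; linarith
      have h4 : (-1:ℝ) < ((k - m : ℤ) : ℝ) := by rw [h3]; linarith
      have h5 : ((k - m : ℤ) : ℝ) < 1 := by rw [h3]; linarith
      have h4' : (-1:ℤ) < k - m := by exact_mod_cast h4
      have h5' : k - m < 1 := by exact_mod_cast h5
      omega
    have heq : arcSet a₂ b₂ = arcSet a b := by
      have e1 : a₂ = a + m := by linarith [hm]
      have e2 : b₂ = b + m := by rw [hkm] at hk; linarith [hk]
      rw [e1, e2, arcSet_shift]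
    rw [← heq]
    exact ⟨t, ht, rfl⟩
  · rintro ⟨t, ht, rfl⟩
    exact ⟨a, b, ha, hb, h1, h2, t, ht, rfl⟩

lemma preconnected_inter_frontier {X : Type*} [TopologicalSpace X] {C E : Set X}
    (hC : IsPreconnected C) (hu : (C ∩ E).Nonempty) (hv : (C ∩ Eᶜ).Nonempty) :
    (C ∩ frontier E).Nonempty := by
  by_contra h
  rw [not_nonempty_iff_eq_empty] at h
  have hne : ∀ c ∈ C, c ∉ frontier E := fun c hc hf =>
    (eq_empty_iff_forall_notMem.mp h c) ⟨hc, hf⟩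
  have hcov : C ⊆ interior E ∪ (closure E)ᶜ := by
    intro c hc
    by_cases hcE : c ∈ closure E
    · left
      by_contra hint
      exact hne c hc ⟨hcE, hint⟩
    · exact Or.inr hcE
  obtain ⟨c, hcC, hcE⟩ := hu
  obtain ⟨d, hdC, hdE⟩ := hv
  have h1 : (C ∩ interior E).Nonempty := by
    refine ⟨c, hcC, ?_⟩
    by_contra hint
    exact hne c hcC ⟨subset_closure hcE, hint⟩
  have h2 : (C ∩ (closure E)ᶜ).Nonempty := by
    refine ⟨d, hdC, ?_⟩
    intro hdcl
    exact hne d hdC ⟨hdcl, fun hint => hdE (interior_subset hint)⟩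
  obtain ⟨e, -, he⟩ := hC (interior E) (closure E)ᶜ isOpen_interior (isClosed_closure).isOpen_compl
    hcov h1 h2
  exact he.2 (subset_closure (interior_subset he.1))

local notation "⟪" x ", " y "⟫" => @inner ℝ _ _ x y

lemma isPreconnected_ball_S2 (x : S2) {r : ℝ} (hr : 0 < r) (hr1 : r ≤ 1) :
    IsPreconnected (Metric.ball x r) := by
  set E := EuclideanSpace ℝ (Fin 3)
  set X : E := x.val with hXdef
  have hX : ‖X‖ = 1 := by
    have := x.property
    rwa [mem_sphere_zero_iff_norm] at this
  set c : ℝ := 1 - r^2/2 with hc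
  have hc0 : 0 ≤ c := by rw [hc]; nlinarith
  have hc1 : c < 1 := by rw [hc]; nlinarith
  set U : Set E := {w : E | c * ‖w‖ < ⟪X, w⟫} with hU
  have hUconv : Convex ℝ U := by
    intro w1 h1 w2 h2 s t hs ht hst
    simp only [hU, mem_setOf_eq] at h1 h2 ⊢
    have hnorm : ‖s • w1 + t • w2‖ ≤ s * ‖w1‖ + t * ‖w2‖ := by
      calc ‖s • w1 + t • w2‖ ≤ ‖s • w1‖ + ‖t • w2‖ := norm_add_le _ _
        _ = s * ‖w1‖ + t * ‖w2‖ := by rw [norm_smul, norm_smul, Real.norm_eq_abs,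
            Real.norm_eq_abs, abs_of_nonneg hs, abs_of_nonneg ht]
    have hinner : ⟪X, s • w1 + t • w2⟫ = s * ⟪X, w1⟫ + t * ⟪X, w2⟫ := by
      rw [inner_add_right, real_inner_smul_right, real_inner_smul_right]
    rw [hinner]
    rcases eq_or_lt_of_le hs with rfl | hs'
    · simp only [zero_add] at hst
      subst hst
      simpa using h2
    rcases eq_or_lt_of_le ht with rfl | ht'
    · simp only [add_zero] at hst
      subst hst
      simpa using h1
    have hlt : c * (s * ‖w1‖ + t * ‖w2‖) < s * ⟪X, w1⟫ + t * ⟪X, w2⟫ := by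
      have a1 : s * (c * ‖w1‖) < s * ⟪X, w1⟫ := mul_lt_mul_of_pos_left h1 hs'
      have a2 : t * (c * ‖w2‖) < t * ⟪X, w2⟫ := mul_lt_mul_of_pos_left h2 ht'
      nlinarith
    calc c * ‖s • w1 + t • w2‖ ≤ c * (s * ‖w1‖ + t * ‖w2‖) :=
          mul_le_mul_of_nonneg_left hnorm hc0
      _ < _ := hlt
  have hUne : ∀ w ∈ U, w ≠ 0 := by
    rintro w hw rfl
    simp only [hU, mem_setOf_eq, norm_zero, mul_zero, inner_zero_right] at hw
    exact lt_irrefl 0 hw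
  set φ : E → E := fun w => ‖w‖⁻¹ • w with hφ
  have hφcont : ContinuousOn φ U := by
    refine ContinuousOn.smul (f := fun w => ‖w‖⁻¹) (g := id) ?_ ?_
    · exact (continuous_norm.continuousOn).inv₀ (fun w hw => norm_ne_zero_iff.mpr (hUne w hw))
    · exact continuousOn_id
  have himg : φ '' U = Subtype.val '' (Metric.ball x r) := by
    ext y
    constructor
    · rintro ⟨w, hw, rfl⟩
      have hw0 : w ≠ 0 := hUne w hw
      have hnw : 0 < ‖w‖ := norm_pos_iff.mpr hw0
      have hy1 : ‖φ w‖ = 1 := by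
        rw [hφ]
        simp only [norm_smul, Real.norm_eq_abs, abs_of_nonneg (inv_nonneg.mpr hnw.le)]
        field_simp
      have hinner : c < ⟪X, φ w⟫ := by
        rw [hφ]
        simp only [real_inner_smul_right]
        have hmul : ‖w‖⁻¹ * (c * ‖w‖) < ‖w‖⁻¹ * ⟪X, w⟫ :=
          mul_lt_mul_of_pos_left hw (inv_pos.mpr hnw)
        calc c = ‖w‖⁻¹ * (c * ‖w‖) := by field_simp
          _ < _ := hmul
      have hdist : ‖φ w - X‖ < r := by
        have hsq : ‖φ w - X‖^2 = 2 - 2 * ⟪X, φ w⟫ := by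
          rw [norm_sub_sq_real, hy1, hX, real_inner_comm]
          ring
        have hlt : ‖φ w - X‖^2 < r^2 := by rw [hsq, hc] at *; nlinarith
        exact lt_of_pow_lt_pow_left₀ 2 hr.le hlt
      refine ⟨⟨φ w, mem_sphere_zero_iff_norm.mpr hy1⟩, ?_, rfl⟩
      rw [Metric.mem_ball, Subtype.dist_eq, dist_eq_norm]
      exact hdist
    · rintro ⟨⟨Y, hY⟩, hYball, rfl⟩
      rw [mem_sphere_zero_iff_norm] at hY
      rw [Metric.mem_ball, Subtype.dist_eq, dist_eq_norm] at hYball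
      have hYU : Y ∈ U := by
        simp only [hU, mem_setOf_eq, hY, mul_one]
        have hsq : ‖Y - X‖^2 = 2 - 2 * ⟪X, Y⟫ := by
          rw [norm_sub_sq_real, hY, hX, real_inner_comm]
          ring
        have h2' : ‖Y - X‖^2 < r^2 := by
          apply pow_lt_pow_left₀ hYball (norm_nonneg _)
          norm_num
        rw [hsq] at h2'
        show c * ‖Y‖ < ⟪X, Y⟫; rw [hY, mul_one, hc]
        linarith
      refine ⟨Y, hYU, ?_⟩
      rw [hφ]
      simp only [hY, inv_one, one_smul]
  have hpre : IsPreconnected (Subtype.val '' (Metric.ball x r)) := by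
    rw [← himg]
    exact (hUconv.isPreconnected).image φ hφcont
  exact (IsInducing.subtypeVal.isPreconnected_image).mp hpre

/-- Key structural fact ("the two complementary disks only meet along the boundary"):
the image of the complementary arc cannot meet the interior of the image disk. -/
lemma dagger (f : S1 → S2) (hf : IsWheel f) {a b : ℝ} (hab : a < b) (hb1 : b < a + 1) :
    f '' arcSet b (a + 1) ∩ interior (f '' arcSet a b) = ∅ := by
  obtain ⟨hcont, hsurj, hwheel⟩ := hf
  by_contra h
  rw [← ne_eq, ← nonempty_iff_ne_empty] at h
  obtain ⟨z, hzJ, hzint⟩ := h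
  obtain ⟨xx, hxx, rfl⟩ := hzJ
  obtain ⟨u, hu, rfl⟩ := hxx
  -- endpoint cases
  have hfrontD : f '' frontier (arcSet a b) ⊆ frontier (f '' arcSet a b) :=
    (hwheel _ (isArc_arcSet hab hb1)).2
  have hnotint : ∀ s : S1, s ∈ frontier (arcSet a b) →
      f s ∉ interior (f '' arcSet a b) := by
    intro s hs hint
    have h1 := hfrontD ⟨s, hs, rfl⟩
    rw [← closure_diff_interior] at h1
    exact h1.2 hint
  rcases eq_or_lt_of_le hu.1 with he | hu1
  · exact hnotint _ (he ▸ frontier_arc_right hab.le hb1) hzint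
  rcases eq_or_lt_of_le hu.2 with he | hu2
  · have hco : ((u : ℝ) : S1) = ((a : ℝ) : S1) := by
      rw [he]; simpa using coe_shift a 1
    have hzint' : f ((u : ℝ) : S1) ∈ interior (f '' arcSet a b) := hzint
    rw [hco] at hzint'
    exact hnotint _ (frontier_arc_left hab.le hb1) hzint'
  -- interior case
  obtain ⟨r, hr, hball⟩ := Metric.isOpen_iff.mp isOpen_interior _ hzint
  have hballD : Metric.ball (f ↑u) r ⊆ f '' arcSet a b :=
    hball.trans interior_subset
  have hgcont : Continuous (fun t : ℝ => f (t : S1)) :=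
    hcont.comp continuous_quotient_mk'
  obtain ⟨η, hη, hηball⟩ := Metric.continuousAt_iff.mp (hgcont.continuousAt (x := u)) r hr
  set c' : ℝ := max ((b + u)/2) (u - η/2) with hc'
  set d' : ℝ := min ((u + (a+1))/2) (u + η/2) with hd'
  have hbc' : b < c' := lt_max_of_lt_left (by linarith)
  have hc'u : c' < u := max_lt (by linarith) (by linarith)
  have hud' : u < d' := lt_min (by linarith) (by linarith)
  have hd'a : d' < a + 1 := min_lt_of_left_lt (by linarith)
  have hc'd' : c' < d' := hc'u.trans hud'
  have hd'c1 : d' < c' + 1 := by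
    have h1 : d' ≤ (u + (a+1))/2 := min_le_left _ _
    have h2 : (b + u)/2 ≤ c' := le_max_left _ _
    linarith
  have hKball : f '' arcSet c' d' ⊆ Metric.ball (f ↑u) r := by
    rintro y ⟨s, ⟨t, ht, rfl⟩, rfl⟩
    apply hηball
    have h1 : u - η/2 ≤ t := le_trans (le_max_right _ _) ht.1
    have h2 : t ≤ u + η/2 := le_trans ht.2 (min_le_right _ _)
    rw [Real.dist_eq, abs_lt]
    constructor <;> linarith
  have hIM : arcSet a b ⊆ arcSet d' (c' + 1) := by
    have h1 : arcSet a b = arcSet (a+1) (b+1) := by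
      have := arcSet_shift a b 1
      simpa using this.symm
    rw [h1]
    exact arcSet_mono (by linarith) (by linarith)
  have huniv : f '' arcSet d' (c' + 1) = univ := by
    rw [eq_univ_iff_forall]
    intro y
    obtain ⟨x, rfl⟩ := hsurj y
    have hx : x ∈ arcSet c' d' ∪ arcSet d' (c' + 1) := by
      rw [arcSet_union c' d' hc'd'.le (by linarith)]
      trivial
    rcases hx with hx | hx
    · have : f x ∈ f '' arcSet a b := hballD (hKball ⟨x, hx, rfl⟩)
      obtain ⟨s, hs, hfs⟩ := this
      exact ⟨s, hIM hs, hfs⟩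
    · exact ⟨x, hx, rfl⟩
  have hM : IsArc (arcSet d' (c' + 1)) := isArc_arcSet hd'c1 (by linarith)
  have hfr := (hwheel _ hM).2
  have hd'mem : ((d' : ℝ) : S1) ∈ frontier (arcSet d' (c' + 1)) :=
    frontier_arc_left hd'c1.le (by linarith)
  have : f ((d' : ℝ) : S1) ∈ frontier (f '' arcSet d' (c' + 1)) := hfr ⟨_, hd'mem, rfl⟩
  rw [huniv, frontier_univ] at this
  exact this

lemma frontier_image_subset (f : S1 → S2) (hsurj : Function.Surjective f)
    (hcont : Continuous f) {a b : ℝ} (h1 : a ≤ b) (h2 : b ≤ a + 1) :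
    frontier (f '' arcSet a b) ⊆ f '' arcSet a b ∩ f '' arcSet b (a + 1) := by
  intro x hx
  have hclD : IsClosed (f '' arcSet a b) := ((isCompact_arcSet a b).image hcont).isClosed
  have hclJ : IsClosed (f '' arcSet b (a+1)) :=
    ((isCompact_arcSet b (a+1)).image hcont).isClosed
  rw [frontier_eq_closure_inter_closure] at hx
  refine ⟨hclD.closure_eq ▸ hx.1, ?_⟩
  have hsub : (f '' arcSet a b)ᶜ ⊆ f '' arcSet b (a+1) := by
    intro y hy
    obtain ⟨w, rfl⟩ := hsurj y
    have hw : w ∈ arcSet a b ∪ arcSet b (a + 1) := by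
      rw [arcSet_union a b h1 h2]; trivial
    rcases hw with hw | hw
    · exact absurd ⟨w, hw, rfl⟩ hy
    · exact ⟨w, hw, rfl⟩
  have := closure_mono hsub hx.2
  rwa [hclJ.closure_eq] at this

/-- The key approximation step: every frontier point of the perturbed disk is close to
the frontier of the original disk. -/
lemma approx (f : S1 → S2) (hf : IsWheel f) {a b a' b' : ℝ}
    (hab : a < b) (hb1 : b < a + 1) (hab' : a' < b') (hb1' : b' < a' + 1)
    {δ₀ ω : ℝ} (hδ₀ : 0 < δ₀) (hω : 0 < ω) (hω4 : ω ≤ 1/4)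
    (hU : ∀ x y : S1, dist x y < δ₀ → dist (f x) (f y) < ω)
    (ha : |a - a'| < δ₀) (hb : |b - b'| < δ₀) :
    ∀ x ∈ frontier (f '' arcSet a' b'),
      Metric.infDist x (frontier (f '' arcSet a b)) ≤ 2 * ω := by
  have hcont := hf.1
  have hsurj := hf.2.1
  intro x hx
  have hclD : IsClosed (f '' arcSet a b) := ((isCompact_arcSet a b).image hcont).isClosed
  have hx' := frontier_image_subset f hsurj hcont hab'.le (by linarith) hx
  have haa := abs_lt.mp ha
  have hbb := abs_lt.mp hb
  -- a point of f '' arcSet a b near x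
  obtain ⟨s', ⟨t', ht', hs't⟩, hxD⟩ := hx'.1
  set t : ℝ := min b (max a t') with htdef
  have htmem : t ∈ Icc a b := ⟨le_min (by linarith) (le_max_left _ _), min_le_left _ _⟩
  have htclose : |t' - t| < δ₀ := by
    rcases lt_or_ge t' a with h | h
    · have h2 : t = a := by rw [htdef, max_eq_left h.le, min_eq_right hab.le]
      have h3 : a' ≤ t' := ht'.1
      rw [h2, abs_lt]
      exact ⟨by linarith, by linarith⟩
    · rcases le_or_gt t' b with h' | h'
      · have h2 : t = t' := by rw [htdef, max_eq_right h, min_eq_right h']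
        rw [h2, sub_self, abs_zero]
        exact hδ₀
      · have h2 : t = b := by
          rw [htdef, min_eq_left]
          exact le_max_of_le_right h'.le
        have h3 : t' ≤ b' := ht'.2
        rw [h2, abs_lt]
        exact ⟨by linarith, by linarith⟩
  set u : S2 := f ((t : ℝ) : S1) with hudef
  have hdistu : dist x u < ω := by
    rw [← hxD, ← hs't]
    exact hU _ _ (lt_of_le_of_lt (dist_coe_le t' t) htclose)
  have huD : u ∈ f '' arcSet a b := ⟨_, mem_arcSet_of_mem htmem, rfl⟩
  -- a point of f '' arcSet b (a+1) near x
  obtain ⟨s'', ⟨τ', hτ', hs''τ⟩, hxJ⟩ := hx'.2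
  set τ : ℝ := min (a+1) (max b τ') with hτdef
  have hτmem : τ ∈ Icc b (a+1) := ⟨le_min (by linarith) (le_max_left _ _), min_le_left _ _⟩
  have hτclose : |τ' - τ| < δ₀ := by
    rcases lt_or_ge τ' b with h | h
    · have h2 : τ = b := by
        rw [hτdef, max_eq_left h.le, min_eq_right (by linarith)]
      have h3 : b' ≤ τ' := hτ'.1
      rw [h2, abs_lt]
      exact ⟨by linarith, by linarith⟩
    · rcases le_or_gt τ' (a+1) with h' | h'
      · have h2 : τ = τ' := by rw [hτdef, max_eq_right h, min_eq_right h']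
        rw [h2, sub_self, abs_zero]
        exact hδ₀
      · have h2 : τ = a + 1 := by
          rw [hτdef, min_eq_left]
          exact le_max_of_le_right h'.le
        have h3 : τ' ≤ a' + 1 := hτ'.2
        rw [h2, abs_lt]
        exact ⟨by linarith, by linarith⟩
  set v : S2 := f ((τ : ℝ) : S1) with hvdef
  have hdistv : dist x v < ω := by
    rw [← hxJ, ← hs''τ]
    exact hU _ _ (lt_of_le_of_lt (dist_coe_le τ' τ) hτclose)
  have hvJ : v ∈ f '' arcSet b (a+1) := ⟨_, mem_arcSet_of_mem hτmem, rfl⟩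
  by_cases hvD : v ∈ f '' arcSet a b
  · -- v is on the frontier of the original disk
    have hvint : v ∉ interior (f '' arcSet a b) := by
      intro hint
      exact (eq_empty_iff_forall_notMem.mp (dagger f hf hab hb1) v) ⟨hvJ, hint⟩
    have hvF : v ∈ frontier (f '' arcSet a b) := by
      rw [hclD.frontier_eq]
      exact ⟨hvD, hvint⟩
    calc Metric.infDist x (frontier (f '' arcSet a b)) ≤ dist x v :=
          Metric.infDist_le_dist_of_mem hvF
      _ ≤ 2 * ω := by linarith
  · -- connect u and v inside a small ball
    have hC : IsPreconnected (Metric.ball x (2*ω)) :=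
      isPreconnected_ball_S2 x (by linarith) (by linarith)
    have humem : u ∈ Metric.ball x (2*ω) := by
      rw [Metric.mem_ball, dist_comm]
      linarith
    have hvmem : v ∈ Metric.ball x (2*ω) := by
      rw [Metric.mem_ball, dist_comm]
      linarith
    obtain ⟨y, hyC, hyF⟩ := preconnected_inter_frontier hC ⟨u, humem, huD⟩ ⟨v, hvmem, hvD⟩
    calc Metric.infDist x (frontier (f '' arcSet a b)) ≤ dist x y :=
          Metric.infDist_le_dist_of_mem hyF
      _ ≤ 2 * ω := by
          rw [dist_comm]
          exact (Metric.mem_ball.mp hyC).le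

end Stmt4Aux

/-- the map sending a closed interval (encoded by its ordered pair of
distinct endpoints) to the boundary circle `∂f(I)` is continuous for the
Hausdorff distance on closed subsets of `S²`. -/
theorem stmt4 (f : S1 → S2) (hf : IsWheel f) :
    ∀ p q : S1, p ≠ q → ∀ ε : ℝ, 0 < ε → ∃ δ : ℝ, 0 < δ ∧
      ∀ p' q' : S1, p' ≠ q' → dist p p' < δ → dist q q' < δ →
        Metric.hausdorffDist (frontier (f '' arcCC p q)) (frontier (f '' arcCC p' q')) < ε := by
  intro p q hpq ε hε
  obtain ⟨a, ha⟩ := QuotientAddGroup.mk_surjective p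
  obtain ⟨v, hv⟩ := QuotientAddGroup.mk_surjective q
  set b : ℝ := v - ⌊v - a⌋ with hbdef
  have hbq : (b : S1) = q := by
    have h1 := Stmt4Aux.coe_shift v (-⌊v - a⌋)
    have h2 : v + ((-⌊v - a⌋ : ℤ) : ℝ) = b := by push_cast; rw [hbdef]; ring
    rw [← hv, ← h1, h2]
  have hfr : b - a = Int.fract (v - a) := by rw [hbdef, Int.fract]; ring
  have hab0 : a ≤ b := by
    have := Int.fract_nonneg (v - a)
    linarith [hfr]
  have hb1 : b < a + 1 := by
    have := Int.fract_lt_one (v - a)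
    linarith [hfr]
  have hab : a < b := by
    rcases eq_or_lt_of_le hab0 with he | h
    · exfalso
      apply hpq
      rw [← ha, ← hbq, he]
    · exact h
  set ω : ℝ := min (ε/4) (1/4) with hωdef
  have hω : 0 < ω := lt_min (by linarith) (by norm_num)
  have hω4 : ω ≤ 1/4 := min_le_right _ _
  have hωε : ω ≤ ε/4 := min_le_left _ _
  have hunif : UniformContinuous f := CompactSpace.uniformContinuous_of_continuous hf.1
  obtain ⟨δ₀, hδ₀, hUC⟩ := Metric.uniformContinuous_iff.mp hunif ω hω
  have hU : ∀ x y : S1, dist x y < δ₀ → dist (f x) (f y) < ω := fun x y h => hUC h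
  refine ⟨min δ₀ (min ((b - a)/4) ((a + 1 - b)/4)), ?_, ?_⟩
  · exact lt_min hδ₀ (lt_min (by linarith) (by linarith))
  intro p' q' hpq' hp' hq'
  obtain ⟨a', ha'1, ha'2⟩ := Stmt4Aux.exists_lift_near a p'
  obtain ⟨b', hb'1, hb'2⟩ := Stmt4Aux.exists_lift_near b q'
  have haa' : |a - a'| < δ₀ ∧ |a - a'| < (b - a)/4 ∧ |a - a'| < (a + 1 - b)/4 := by
    rw [ha'2, ha]
    exact ⟨hp'.trans_le (min_le_left _ _),
      hp'.trans_le ((min_le_right _ _).trans (min_le_left _ _)),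
      hp'.trans_le ((min_le_right _ _).trans (min_le_right _ _))⟩
  have hbb' : |b - b'| < δ₀ ∧ |b - b'| < (b - a)/4 ∧ |b - b'| < (a + 1 - b)/4 := by
    rw [hb'2, hbq]
    exact ⟨hq'.trans_le (min_le_left _ _),
      hq'.trans_le ((min_le_right _ _).trans (min_le_left _ _)),
      hq'.trans_le ((min_le_right _ _).trans (min_le_right _ _))⟩
  have ha2 := abs_lt.mp haa'.2.1
  have ha3 := abs_lt.mp haa'.2.2
  have hb2 := abs_lt.mp hbb'.2.1
  have hb3 := abs_lt.mp hbb'.2.2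
  have hab' : a' < b' := by linarith
  have hb1' : b' < a' + 1 := by linarith
  rw [Stmt4Aux.arcCC_eq ha hbq hab0 hb1, Stmt4Aux.arcCC_eq ha'1 hb'1 hab'.le hb1']
  have H1 := Stmt4Aux.approx f hf hab' hb1' hab hb1 hδ₀ hω hω4 hU
    (by rw [abs_sub_comm]; exact haa'.1) (by rw [abs_sub_comm]; exact hbb'.1)
  have H2 := Stmt4Aux.approx f hf hab hb1 hab' hb1' hδ₀ hω hω4 hU haa'.1 hbb'.1
  have hle : Metric.hausdorffDist (frontier (f '' Stmt4Aux.arcSet a b))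
      (frontier (f '' Stmt4Aux.arcSet a' b')) ≤ ε/2 := by
    apply Metric.hausdorffDist_le_of_infDist (by linarith)
    · intro x hx
      have := H1 x hx
      linarith
    · intro x hx
      have := H2 x hx
      linarith
  linarith
end
end

section
/- Suppose Λ is a lamination of the circle S¹ (a closed set of unordered pairs of distinct points, pairwise unlinked) such that no point of S¹ lies in more than two leaves of Λ, and Λ has no isolated leaves. Let ℒ = Rel(Λ) be the big laminar relation generated by Λ. Then the boundary lamination Lam(ℒ) equals Λ. -/
open Set Topology

noncomputable section

/-- The closed arc in the circle which is the image of the lift interval `[a,b]`. -/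
def arcR (a b : ℝ) : Set S1 := (fun t : ℝ => (t : S1)) '' Icc a b

/-- The unordered pairs `{p,q}` and `{r,s}` are unlinked in the circle. -/
def UnlinkedPairs (p q r s : S1) : Prop :=
  ∃ u v : ℝ, u ≤ v ∧ v < u + 1 ∧ r ∈ arcR u v ∧ s ∈ arcR u v ∧ arcR u v ∩ {p, q} = ∅

/-- The unordered pairs `{p,q}` and `{r,s}` are linked in the circle. -/
def LinkedPairs (p q r s : S1) : Prop :=
  ∀ u v : ℝ, u ≤ v → v < u + 1 → r ∈ arcR u v → s ∈ arcR u v →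
    (arcR u v ∩ {p, q}).Nonempty

/-- A lamination of the circle: a symmetric set of unordered pairs of distinct points,
closed in the space of unordered distinct pairs, no two of which are linked. -/
def IsLamination (Λ : Set (S1 × S1)) : Prop :=
  (∀ x ∈ Λ, x.1 ≠ x.2) ∧ (∀ x ∈ Λ, (x.2, x.1) ∈ Λ) ∧
  (∀ x ∈ closure Λ, x.1 ≠ x.2 → x ∈ Λ) ∧
  ∀ x ∈ Λ, ∀ y ∈ Λ, ({x.1, x.2} ∩ {y.1, y.2} : Set S1) = ∅ →
    UnlinkedPairs x.1 x.2 y.1 y.2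

/-- The big relation `Rel(Λ)`: the smallest closed equivalence relation on `S¹`
containing `Λ` and containing every unordered pair that crosses only countably many
leaves of `Λ`. -/
def bigRel (Λ : Set (S1 × S1)) : S1 → S1 → Prop := fun p q =>
  ∀ r : S1 → S1 → Prop,
    (Equivalence r ∧ IsClosed {x : S1 × S1 | r x.1 x.2} ∧
      (∀ x ∈ Λ, r x.1 x.2) ∧
      (∀ p' q' : S1,
        {x ∈ Λ | ({x.1, x.2} ∩ {p', q'} : Set S1) = ∅ ∧
          LinkedPairs p' q' x.1 x.2}.Countable → r p' q')) →
    r p q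

/-- The boundary lamination `Lam(ℒ)` of an equivalence relation `r` on the circle:
pairs `{p,q}` of distinct related points such that one of the open arcs bounded by
`p` and `q` is disjoint from the class of `p`. -/
def boundaryLamRel (r : S1 → S1 → Prop) : Set (S1 × S1) :=
  {x | r x.1 x.2 ∧ x.1 ≠ x.2 ∧
    ∃ u v : ℝ, u < v ∧ v < u + 1 ∧
      (((u : S1) = x.1 ∧ (v : S1) = x.2) ∨ ((u : S1) = x.2 ∧ (v : S1) = x.1)) ∧
      ∀ t ∈ Ioo u v, ¬ r x.1 (t : S1)}

namespace Stmt9Aux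

lemma s1_eq_iff {x y : ℝ} : (x : S1) = (y : S1) ↔ ∃ n : ℤ, y = x + n := by
  rw [QuotientAddGroup.eq_iff_sub_mem]
  constructor
  · rintro h
    rw [AddSubgroup.mem_zmultiples_iff] at h
    obtain ⟨n, hn⟩ := h
    rw [zsmul_eq_mul, mul_one] at hn
    exact ⟨-n, by push_cast; linarith [hn]⟩
  · rintro ⟨n, rfl⟩
    rw [AddSubgroup.mem_zmultiples_iff]
    exact ⟨-n, by rw [zsmul_eq_mul, mul_one]; push_cast; ring⟩

lemma s1_coe_add_int (x : ℝ) (n : ℤ) : ((x + n : ℝ) : S1) = (x : S1) :=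
  (s1_eq_iff.mpr ⟨n, rfl⟩).symm

lemma s1_inj {x y : ℝ} (h : |y - x| < 1) (he : (x : S1) = (y : S1)) : x = y := by
  obtain ⟨n, rfl⟩ := s1_eq_iff.mp he
  have : |(n:ℝ)| < 1 := by simpa using h
  have : n = 0 := by
    have h1 : |n| < 1 := by exact_mod_cast this
    rw [abs_lt] at h1; omega
  subst this; simp

lemma s1_ne {x y : ℝ} (h1 : 0 < y - x) (h2 : y - x < 1) : (x : S1) ≠ (y : S1) := by
  intro he
  have := s1_inj (by rw [abs_lt]; constructor <;> linarith) he
  linarith [this]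

lemma s1_lift (z : S1) (c : ℝ) : ∃ t : ℝ, t ∈ Ico c (c + 1) ∧ (t : S1) = z := by
  let w := QuotientAddGroup.equivIcoMod (one_pos : (0:ℝ) < 1) c z
  refine ⟨w.1, w.2, ?_⟩
  have := (QuotientAddGroup.equivIcoMod (one_pos : (0:ℝ) < 1) c).symm_apply_apply z
  rw [QuotientAddGroup.equivIcoMod_symm_apply] at this
  exact this

lemma mem_arcR {s t r : ℝ} (h1 : s ≤ r) (h2 : r ≤ t) : (r : S1) ∈ arcR s t :=
  ⟨r, ⟨h1, h2⟩, rfl⟩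

lemma mem_arcR_iff {s t : ℝ} {z : S1} : z ∈ arcR s t ↔ ∃ r, s ≤ r ∧ r ≤ t ∧ (r : S1) = z := by
  simp only [arcR, mem_image, mem_Icc]; tauto

lemma not_mem_arcR {s t w : ℝ} (h : ∀ n : ℤ, ¬ (s ≤ w + n ∧ w + n ≤ t)) :
    (w : S1) ∉ arcR s t := by
  intro hm
  obtain ⟨r, hr1, hr2, hr3⟩ := mem_arcR_iff.mp hm
  obtain ⟨n, rfl⟩ := s1_eq_iff.mp hr3.symm
  exact h n ⟨hr1, hr2⟩

lemma not_mem_arcR' {s t w : ℝ} (_hst : t < s + 1) (h1 : t - 1 < w) (h2 : w < s) :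
    (w : S1) ∉ arcR s t := by
  refine not_mem_arcR fun n hn => ?_
  rcases le_or_gt n 0 with h | h
  · have : (n:ℝ) ≤ 0 := by exact_mod_cast h
    linarith [hn.1]
  · have : (1:ℝ) ≤ (n:ℝ) := by exact_mod_cast h
    linarith [hn.2]


/-- Separation implies linking. -/
lemma linked_of_sep {α β γ δ : ℝ} (h1 : α < γ) (h2 : γ < β) (h3 : β < δ) (h4 : δ < α + 1) :
    LinkedPairs (α : S1) (β : S1) (γ : S1) (δ : S1) := by
  intro s t hst hts hγ hδ
  obtain ⟨r1, hr1s, hr1t, hr1⟩ := mem_arcR_iff.mp hγ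
  obtain ⟨r2, hr2s, hr2t, hr2⟩ := mem_arcR_iff.mp hδ
  obtain ⟨m, hm⟩ := s1_eq_iff.mp hr1.symm
  obtain ⟨n, hn⟩ := s1_eq_iff.mp hr2.symm
  -- r1 = γ + m, r2 = δ + n
  have hd1 : (0:ℝ) < δ - γ := by linarith
  have hd2 : δ - γ < 1 := by linarith
  have hmn : n = m ∨ n = m - 1 := by
    have b1 : r2 - r1 ≤ t - s := by linarith
    have b2 : r1 - r2 ≤ t - s := by linarith
    have hts' : t - s < 1 := by linarith
    have e1 : (δ + n) - (γ + m) < 1 := by rw [← hm, ← hn]; linarith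
    have e2 : (γ + m) - (δ + n) < 1 := by rw [← hm, ← hn]; linarith
    have i1 : ((n:ℝ) - m) < 1 := by linarith
    have i2 : ((m:ℝ) - n) < 2 := by linarith
    have i1' : n - m < 1 := by exact_mod_cast (by push_cast; linarith : ((n - m : ℤ):ℝ) < 1)
    have i2' : m - n < 2 := by exact_mod_cast (by push_cast; linarith : ((m - n : ℤ):ℝ) < 2)
    omega
  rcases hmn with h | h
  · refine ⟨(β : S1), mem_arcR_iff.mpr ⟨β + m, ?_, ?_, s1_coe_add_int β m⟩, by simp⟩
    · have := hm ▸ hr1s; linarith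
    · have := hn ▸ hr2t
      have : δ + (m:ℝ) ≤ t := by rw [h] at this; exact_mod_cast this
      linarith
  · refine ⟨(α : S1), mem_arcR_iff.mpr ⟨α + m, ?_, ?_, s1_coe_add_int α m⟩, by simp⟩
    · have h2' := hn ▸ hr2s
      have : s ≤ δ + ((m:ℝ) - 1) := by
        rw [h] at h2'; push_cast at h2'; linarith
      linarith
    · have := hm ▸ hr1t; linarith

/-- Both points on the same side gives unlinkedness. -/
lemma unlinked_of_side {α β γ δ : ℝ} (h0 : α < γ) (h1 : γ ≤ δ) (h2 : δ < β) (h3 : β ≤ α + 1) :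
    UnlinkedPairs (α : S1) (β : S1) (γ : S1) (δ : S1) := by
  refine ⟨γ, δ, h1, by linarith, mem_arcR le_rfl h1, mem_arcR h1 le_rfl, ?_⟩
  rw [eq_empty_iff_forall_notMem]
  rintro z ⟨hz1, hz2⟩
  rcases hz2 with rfl | rfl
  · exact not_mem_arcR' (by linarith) (by linarith) h0 hz1
  · rw [← s1_coe_add_int β (-1)] at hz1
    exact not_mem_arcR' (by linarith) (by push_cast; linarith) (by push_cast; linarith) hz1

lemma unlinked_pair_comm {p q r s : S1} (h : UnlinkedPairs p q r s) : UnlinkedPairs q p r s := by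
  obtain ⟨u, v, h1, h2, h3, h4, h5⟩ := h
  exact ⟨u, v, h1, h2, h3, h4, by rwa [Set.pair_comm q p]⟩

lemma unlinked_swap {p q r s : S1} (h : UnlinkedPairs p q r s) : UnlinkedPairs p q s r := by
  obtain ⟨u, v, h1, h2, h3, h4, h5⟩ := h
  exact ⟨u, v, h1, h2, h4, h3, h5⟩

lemma linked_pair_comm {p q r s : S1} (h : LinkedPairs p q r s) : LinkedPairs q p r s := by
  intro u v h1 h2 h3 h4
  rw [Set.pair_comm q p]; exact h u v h1 h2 h3 h4

lemma linked_swap {p q r s : S1} (h : LinkedPairs p q r s) : LinkedPairs p q s r := by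
  intro u v h1 h2 h3 h4
  exact h u v h1 h2 h4 h3

lemma not_linked_of_unlinked {p q r s : S1} (h : UnlinkedPairs p q r s) :
    ¬ LinkedPairs p q r s := by
  obtain ⟨u, v, h1, h2, h3, h4, h5⟩ := h
  intro hL
  obtain ⟨z, hz1, hz2⟩ := hL u v h1 h2 h3 h4
  rw [eq_empty_iff_forall_notMem] at h5
  exact h5 z ⟨hz1, hz2⟩

/-- Linking plus distinctness forces separation (in a window). -/
lemma sep_of_linked {α w γ δ : ℝ} (hw1 : α < w) (hw2 : w < α + 1)
    (hγ1 : α < γ) (hγ2 : γ < α + 1) (hδ1 : α < δ) (hδ2 : δ < α + 1)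
    (hγw : γ ≠ w) (hδw : δ ≠ w)
    (hL : LinkedPairs (α : S1) (w : S1) (γ : S1) (δ : S1)) :
    (γ < w ∧ w < δ) ∨ (δ < w ∧ w < γ) := by
  by_contra hcon
  push_neg at hcon
  have hboth : (γ < w ∧ δ < w) ∨ (w < γ ∧ w < δ) := by
    rcases lt_or_gt_of_ne hγw with h | h
    · rcases lt_or_gt_of_ne hδw with h' | h'
      · exact Or.inl ⟨h, h'⟩
      · exact absurd h' (not_lt.mpr (hcon.1 h))
    · rcases lt_or_gt_of_ne hδw with h' | h'
      · exact absurd h (not_lt.mpr (hcon.2 h'))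
      · exact Or.inr ⟨h, h'⟩
  have : UnlinkedPairs (α : S1) (w : S1) (γ : S1) (δ : S1) := by
    rcases hboth with ⟨h, h'⟩ | ⟨h, h'⟩
    · rcases le_total γ δ with hle | hle
      · exact unlinked_of_side hγ1 hle h' (by linarith)
      · exact unlinked_swap (unlinked_of_side hδ1 hle h (by linarith))
    · have key : ∀ x y : ℝ, w < x → x ≤ y → y < α + 1 →
          UnlinkedPairs (α : S1) (w : S1) (x : S1) (y : S1) := by
        intro x y hx hxy hy
        have h5 := unlinked_of_side (α := w) (β := α + 1) hx hxy hy (by linarith)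
        rw [show ((α + 1 : ℝ) : S1) = (α : S1) by
          rw [show (α + 1 : ℝ) = α + (1:ℤ) by push_cast; ring]; exact s1_coe_add_int α 1] at h5
        exact unlinked_pair_comm h5
      rcases le_total γ δ with hle | hle
      · exact key γ δ h hle hδ2
      · exact unlinked_swap (key δ γ h' hle hγ2)
  exact not_linked_of_unlinked this hL


lemma pair_inter_empty {x1 x2 a b : S1} (h1 : x1 ≠ a) (h2 : x1 ≠ b) (h3 : x2 ≠ a) (h4 : x2 ≠ b) :
    ({x1, x2} ∩ {a, b} : Set S1) = ∅ := by
  rw [eq_empty_iff_forall_notMem]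
  rintro z ⟨hz1, hz2⟩
  rcases hz1 with rfl | rfl <;> rcases hz2 with rfl | rfl <;> simp_all

lemma pair_inter_empty_iff {x1 x2 a b : S1} :
    ({x1, x2} ∩ {a, b} : Set S1) = ∅ ↔ (x1 ≠ a ∧ x1 ≠ b ∧ x2 ≠ a ∧ x2 ≠ b) := by
  constructor
  · intro h
    rw [eq_empty_iff_forall_notMem] at h
    refine ⟨?_, ?_, ?_, ?_⟩ <;> rintro rfl
    · exact h x1 ⟨by simp, by simp⟩
    · exact h x1 ⟨by simp, by simp⟩
    · exact h x2 ⟨by simp, by simp⟩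
    · exact h x2 ⟨by simp, by simp⟩
  · rintro ⟨h1, h2, h3, h4⟩; exact pair_inter_empty h1 h2 h3 h4

def cross (Λ : Set (S1 × S1)) (a b : S1) : Set (S1 × S1) :=
  {x ∈ Λ | ({x.1, x.2} ∩ {a, b} : Set S1) = ∅ ∧ LinkedPairs a b x.1 x.2}

def relC (Λ : Set (S1 × S1)) (a b : S1) : Prop := (cross Λ a b).Countable

lemma mem_cross_of_sep {Λ : Set (S1 × S1)} {α w γ δ : ℝ}
    (hx : (((γ:ℝ) : S1), ((δ:ℝ) : S1)) ∈ Λ)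
    (h1 : α < γ) (h2 : γ < w) (h3 : w < δ) (h4 : δ < α + 1) :
    (((γ:ℝ) : S1), ((δ:ℝ) : S1)) ∈ cross Λ (α : S1) (w : S1) := by
  refine ⟨hx, ?_, linked_of_sep h1 h2 h3 h4⟩
  exact pair_inter_empty
    ((s1_ne (x := α) (y := γ) (by linarith) (by linarith)).symm)
    (s1_ne (x := γ) (y := w) (by linarith) (by linarith))
    ((s1_ne (x := α) (y := δ) (by linarith) (by linarith)).symm)
    ((s1_ne (x := w) (y := δ) (by linarith) (by linarith)).symm)

lemma cross_elem_sep {Λ : Set (S1 × S1)} {α w : ℝ} {x : S1 × S1}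
    (hw1 : α < w) (hw2 : w < α + 1)
    (hx : x ∈ cross Λ (α : S1) (w : S1)) :
    ∃ γ δ : ℝ, x.1 = (γ : S1) ∧ x.2 = (δ : S1) ∧
      α < γ ∧ γ < α + 1 ∧ α < δ ∧ δ < α + 1 ∧
      ((γ < w ∧ w < δ) ∨ (δ < w ∧ w < γ)) := by
  obtain ⟨hxΛ, hdisj, hL⟩ := hx
  obtain ⟨hne1, hne2, hne3, hne4⟩ := pair_inter_empty_iff.mp hdisj
  obtain ⟨γ, hγm, hγe⟩ := s1_lift x.1 α
  obtain ⟨δ, hδm, hδe⟩ := s1_lift x.2 α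
  have hγα : γ ≠ α := fun h => hne1 (by rw [← hγe, h])
  have hδα : δ ≠ α := fun h => hne3 (by rw [← hδe, h])
  have hγ1 : α < γ := lt_of_le_of_ne hγm.1 (Ne.symm hγα)
  have hδ1 : α < δ := lt_of_le_of_ne hδm.1 (Ne.symm hδα)
  have hγw : γ ≠ w := fun h => hne2 (by rw [← hγe, h])
  have hδw : δ ≠ w := fun h => hne4 (by rw [← hδe, h])
  have hL' : LinkedPairs (α : S1) (w : S1) (γ : S1) (δ : S1) := by
    rwa [← hγe, ← hδe] at hL
  exact ⟨γ, δ, hγe.symm, hδe.symm, hγ1, hγm.2, hδ1, hδm.2,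
    sep_of_linked hw1 hw2 hγ1 hγm.2 hδ1 hδm.2 hγw hδw hL'⟩


variable {Λ : Set (S1 × S1)}

lemma cross_self_empty (a : S1) : cross Λ a a = ∅ := by
  rw [eq_empty_iff_forall_notMem]
  rintro x ⟨hxΛ, hdisj, hL⟩
  obtain ⟨hne1, _, hne3, _⟩ := pair_inter_empty_iff.mp hdisj
  obtain ⟨α, _, hαe⟩ := s1_lift a 0
  subst hαe
  obtain ⟨γ, hγm, hγe⟩ := s1_lift x.1 α
  obtain ⟨δ, hδm, hδe⟩ := s1_lift x.2 α
  have hγ1 : α < γ := lt_of_le_of_ne hγm.1 (by rintro rfl; exact hne1 hγe.symm)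
  have hδ1 : α < δ := lt_of_le_of_ne hδm.1 (by rintro rfl; exact hne3 hδe.symm)
  have key : ∀ y z : ℝ, α < y → y ≤ z → z < α + 1 →
      UnlinkedPairs (α : S1) (α : S1) (y : S1) (z : S1) := by
    intro y z hy hyz hz
    have h5 := unlinked_of_side (α := α) (β := α + 1) hy hyz hz le_rfl
    rwa [show ((α + 1 : ℝ) : S1) = (α : S1) by
      rw [show (α + 1 : ℝ) = α + (1:ℤ) by push_cast; ring]; exact s1_coe_add_int α 1] at h5
  have hU : UnlinkedPairs (α : S1) (α : S1) x.1 x.2 := by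
    rcases le_total γ δ with h | h
    · rw [← hγe, ← hδe]; exact key γ δ hγ1 h hδm.2
    · rw [← hγe, ← hδe]; exact unlinked_swap (key δ γ hδ1 h hγm.2)
  exact not_linked_of_unlinked hU hL

lemma cross_comm (a b : S1) : cross Λ a b = cross Λ b a := by
  ext x
  constructor <;> rintro ⟨h1, h2, h3⟩
  · exact ⟨h1, by rwa [Set.pair_comm b a], linked_pair_comm h3⟩
  · exact ⟨h1, by rwa [Set.pair_comm a b], linked_pair_comm h3⟩

lemma relC_refl (a : S1) : relC Λ a a := by
  rw [relC, cross_self_empty]; exact countable_empty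

lemma relC_symm {a b : S1} (h : relC Λ a b) : relC Λ b a := by
  rwa [relC, cross_comm] at h

lemma leavesThrough_countable (hsym : ∀ x ∈ Λ, (x.2, x.1) ∈ Λ)
    (htwo : ∀ p : S1, {q : S1 | (p, q) ∈ Λ}.encard ≤ 2) (b : S1) :
    {x : S1 × S1 | x ∈ Λ ∧ (x.1 = b ∨ x.2 = b)}.Countable := by
  have hT : {q : S1 | (b, q) ∈ Λ}.Finite :=
    Set.finite_of_encard_le_coe (k := 2) (by exact_mod_cast htwo b)
  have hsub : {x : S1 × S1 | x ∈ Λ ∧ (x.1 = b ∨ x.2 = b)} ⊆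
      ({b} ×ˢ {q : S1 | (b, q) ∈ Λ}) ∪ ({q : S1 | (b, q) ∈ Λ} ×ˢ {b}) := by
    rintro ⟨x1, x2⟩ ⟨hxΛ, h | h⟩
    · subst h; exact Or.inl ⟨rfl, hxΛ⟩
    · subst h; exact Or.inr ⟨hsym _ hxΛ, rfl⟩
  exact Set.Countable.mono hsub
    (((Set.finite_singleton b).prod hT).countable.union
      ((hT.prod (Set.finite_singleton b)).countable))

/-- The four-position case analysis: a leaf crossing `(a,c)` and avoiding `b`
crosses `(a,b)` or `(b,c)`. -/
lemma crossing_split {α w β γ δ : ℝ}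
    (hx : (((γ:ℝ) : S1), ((δ:ℝ) : S1)) ∈ Λ)
    (h1 : α < γ) (h2 : γ < w) (h3 : w < δ) (h4 : δ < α + 1)
    (hβ1 : α < β) (hβ2 : β < α + 1) (hβγ : β ≠ γ) (hβδ : β ≠ δ) (hβw : β ≠ w) :
    (((γ:ℝ) : S1), ((δ:ℝ) : S1)) ∈ cross Λ (α : S1) (β : S1) ∪ cross Λ (β : S1) (w : S1) := by
  rcases lt_or_gt_of_ne hβγ with hc | hc
  · -- β < γ : crosses (b, c)
    exact Or.inr (mem_cross_of_sep hx hc h2 h3 (by linarith))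
  rcases lt_or_gt_of_ne hβw with hd | hd
  · -- γ < β < w : crosses (a, b)
    exact Or.inl (mem_cross_of_sep hx h1 hc (by linarith) h4)
  rcases lt_or_gt_of_ne hβδ with he | he
  · -- w < β < δ : crosses (a, b)
    exact Or.inl (mem_cross_of_sep hx h1 (by linarith) he h4)
  · -- δ < β : crosses (b, c)
    refine Or.inr ⟨hx, ?_, ?_⟩
    · exact pair_inter_empty
        (s1_ne (x := γ) (y := β) (by linarith) (by linarith))
        (s1_ne (x := γ) (y := w) (by linarith) (by linarith))
        (s1_ne (x := δ) (y := β) (by linarith) (by linarith))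
        ((s1_ne (x := w) (y := δ) (by linarith) (by linarith)).symm)
    · have hLp := linked_of_sep (α := w) (β := β) (γ := δ) (δ := γ + 1)
        h3 he (by linarith) (by linarith)
      rw [show ((γ + 1 : ℝ) : S1) = (γ : S1) by
        rw [show (γ + 1 : ℝ) = γ + (1:ℤ) by push_cast; ring]; exact s1_coe_add_int γ 1] at hLp
      exact linked_pair_comm (linked_swap hLp)

lemma mem_cross_swap {a b : S1} {y : S1 × S1} (hy : y ∈ Λ)
    (h : (y.2, y.1) ∈ cross Λ a b) : y ∈ cross Λ a b := by
  obtain ⟨_, h2, h3⟩ := h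
  refine ⟨hy, ?_, linked_swap h3⟩
  rw [pair_inter_empty_iff] at h2 ⊢
  exact ⟨h2.2.2.1, h2.2.2.2, h2.1, h2.2.1⟩

lemma relC_trans (hΛ : IsLamination Λ)
    (htwo : ∀ p : S1, {q : S1 | (p, q) ∈ Λ}.encard ≤ 2)
    {a b c : S1} (hab : relC Λ a b) (hbc : relC Λ b c) : relC Λ a c := by
  by_cases h1 : a = b; · rwa [h1]
  by_cases h2 : b = c; · rwa [← h2]
  by_cases h3 : a = c; · rw [h3]; exact relC_refl c
  have hsub : cross Λ a c ⊆
      cross Λ a b ∪ cross Λ b c ∪ {x : S1 × S1 | x ∈ Λ ∧ (x.1 = b ∨ x.2 = b)} := by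
    intro x hx
    by_cases hb : x.1 = b ∨ x.2 = b
    · exact Or.inr ⟨hx.1, hb⟩
    push_neg at hb
    left
    obtain ⟨α, _, hαe⟩ := s1_lift a 0
    obtain ⟨w, hwm, hwe⟩ := s1_lift c α
    have hw1 : α < w := lt_of_le_of_ne hwm.1 (by rintro rfl; exact h3 (hαe.symm.trans hwe))
    obtain ⟨β, hβm, hβe⟩ := s1_lift b α
    have hβ1 : α < β := lt_of_le_of_ne hβm.1 (by rintro rfl; exact h1 (hαe.symm.trans hβe))
    rw [← hαe, ← hwe] at hx
    obtain ⟨γ, δ, hγe, hδe, hγ1, hγ2, hδ1, hδ2, hsep⟩ := cross_elem_sep hw1 hwm.2 hx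
    have hβγ : β ≠ γ := by rintro rfl; exact hb.1 (hγe.trans hβe)
    have hβδ : β ≠ δ := by rintro rfl; exact hb.2 (hδe.trans hβe)
    have hβw : β ≠ w := by rintro rfl; exact h2 (hβe.symm.trans hwe)
    have hgoal : x ∈ cross Λ ((α:ℝ) : S1) ((β:ℝ) : S1) ∪ cross Λ ((β:ℝ) : S1) ((w:ℝ) : S1) := by
      rcases hsep with ⟨hs1, hs2⟩ | ⟨hs1, hs2⟩
      · have hxpair : x = (((γ:ℝ):S1), ((δ:ℝ):S1)) := Prod.ext hγe hδe
        have hxΛ : (((γ:ℝ):S1), ((δ:ℝ):S1)) ∈ Λ := hxpair ▸ hx.1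
        have := crossing_split hxΛ hγ1 hs1 hs2 hδ2 hβ1 hβm.2 hβγ hβδ hβw
        rwa [← hxpair] at this
      · have hswap : (x.2, x.1) = (((δ:ℝ):S1), ((γ:ℝ):S1)) := Prod.ext hδe hγe
        have hxΛ' : (((δ:ℝ):S1), ((γ:ℝ):S1)) ∈ Λ := by
          rw [← hswap]; exact hΛ.2.1 x hx.1
        have := crossing_split hxΛ' hδ1 hs1 hs2 hγ2 hβ1 hβm.2 hβδ hβγ hβw
        rcases this with h | h
        · exact Or.inl (mem_cross_swap hx.1 (by rw [hswap]; exact h))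
        · exact Or.inr (mem_cross_swap hx.1 (by rw [hswap]; exact h))
    rwa [hαe, hβe, hwe] at hgoal
  exact Set.Countable.mono hsub
    ((hab.union hbc).union (leavesThrough_countable hΛ.2.1 htwo b))


lemma relC_contains (hΛ : IsLamination Λ) : ∀ x ∈ Λ, relC Λ x.1 x.2 := by
  intro x hx
  have : cross Λ x.1 x.2 = ∅ := by
    rw [eq_empty_iff_forall_notMem]
    rintro y ⟨hyΛ, hdisj, hL⟩
    have hdisj' : ({x.1, x.2} ∩ {y.1, y.2} : Set S1) = ∅ := by
      rw [pair_inter_empty_iff] at hdisj ⊢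
      exact ⟨hdisj.1.symm, hdisj.2.2.1.symm, hdisj.2.1.symm, hdisj.2.2.2.symm⟩
    exact not_linked_of_unlinked (hΛ.2.2.2 x hx y hyΛ hdisj') hL
  rw [relC, this]; exact countable_empty

lemma isOpenMap_qq : IsOpenMap (fun gd : ℝ × ℝ => ((gd.1 : S1), (gd.2 : S1))) := by
  have h : IsOpenMap ((↑) : ℝ → S1) := QuotientAddGroup.isOpenMap_coe
  exact IsOpenMap.prodMap h h

lemma relC_closed (hΛ : IsLamination Λ) : IsClosed {x : S1 × S1 | relC Λ x.1 x.2} := by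
  rw [← isOpen_compl_iff]
  rw [isOpen_iff_forall_mem_open]
  rintro ⟨A, B⟩ hz
  simp only [mem_compl_iff, mem_setOf_eq] at hz
  have hAB : A ≠ B := by
    rintro rfl
    exact hz (relC_refl A)
  obtain ⟨α, _, hαe⟩ := s1_lift A 0
  obtain ⟨w, hwm, hwe⟩ := s1_lift B α
  have hw1 : α < w := lt_of_le_of_ne hwm.1 (by rintro rfl; exact hAB (hαe.symm.trans hwe))
  set e : ℕ → ℝ := fun k => 1 / (k + 1) with he
  have hepos : ∀ k, 0 < e k := fun k => by positivity
  set S : ℕ → Set (S1 × S1) := fun k =>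
    {x ∈ cross Λ A B | ∃ γ δ : ℝ, x = (((γ:ℝ):S1), ((δ:ℝ):S1)) ∧
      ((α + e k ≤ γ ∧ γ + e k ≤ w ∧ w + e k ≤ δ ∧ δ + e k ≤ α + 1) ∨
       (α + e k ≤ δ ∧ δ + e k ≤ w ∧ w + e k ≤ γ ∧ γ + e k ≤ α + 1))} with hS
  have hcover : cross Λ A B ⊆ ⋃ k, S k := by
    intro x hx
    have hx' := hx
    rw [← hαe, ← hwe] at hx'
    obtain ⟨γ, δ, hγe, hδe, hγ1, hγ2, hδ1, hδ2, hsep⟩ := cross_elem_sep hw1 hwm.2 hx'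
    have hxpair : x = (((γ:ℝ):S1), ((δ:ℝ):S1)) := Prod.ext hγe hδe
    rcases hsep with ⟨hs1, hs2⟩ | ⟨hs1, hs2⟩
    · have hm : 0 < min (min (γ - α) (w - γ)) (min (δ - w) (α + 1 - δ)) := by
        simp only [lt_min_iff]; refine ⟨⟨by linarith, by linarith⟩, by linarith, by linarith⟩
      obtain ⟨k, hk⟩ := exists_nat_one_div_lt hm
      refine mem_iUnion.mpr ⟨k, hx, γ, δ, hxpair, Or.inl ?_⟩
      simp only [lt_min_iff] at hk
      push_cast at hk
      refine ⟨by linarith [hk.1.1], by linarith [hk.1.2], by linarith [hk.2.1], by linarith [hk.2.2]⟩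
    · have hm : 0 < min (min (δ - α) (w - δ)) (min (γ - w) (α + 1 - γ)) := by
        simp only [lt_min_iff]; refine ⟨⟨by linarith, by linarith⟩, by linarith, by linarith⟩
      obtain ⟨k, hk⟩ := exists_nat_one_div_lt hm
      refine mem_iUnion.mpr ⟨k, hx, γ, δ, hxpair, Or.inr ?_⟩
      simp only [lt_min_iff] at hk
      push_cast at hk
      refine ⟨by linarith [hk.1.1], by linarith [hk.1.2], by linarith [hk.2.1], by linarith [hk.2.2]⟩
  have hbig : ∃ k, ¬ (S k).Countable := by
    by_contra hcon
    push_neg at hcon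
    exact hz (Set.Countable.mono hcover (Set.countable_iUnion hcon))
  obtain ⟨k, hk⟩ := hbig
  set ε : ℝ := e k / 2 with hε
  have hεpos : 0 < ε := by positivity
  refine ⟨(fun gd : ℝ × ℝ => ((gd.1 : S1), (gd.2 : S1))) ''
    (Ioo (α - ε) (α + ε) ×ˢ Ioo (w - ε) (w + ε)), ?_, ?_, ?_⟩
  · rintro z ⟨⟨s, t⟩, ⟨hs, ht⟩, rfl⟩
    simp only [mem_compl_iff, mem_setOf_eq]
    intro hcount
    apply hk
    refine Set.Countable.mono ?_ hcount
    intro x hxS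
    obtain ⟨hxc, γ, δ, hxpair, hor⟩ := hxS
    have hxΛ : x ∈ Λ := hxc.1
    simp only [mem_Ioo] at hs ht
    have heε : e k = 2 * ε := by rw [hε]; ring
    rcases hor with ⟨o1, o2, o3, o4⟩ | ⟨o1, o2, o3, o4⟩
    · have := mem_cross_of_sep (Λ := Λ) (α := s) (w := t) (γ := γ) (δ := δ)
        (by rw [← hxpair]; exact hxΛ)
        (by linarith) (by linarith) (by linarith) (by linarith)
      rwa [← hxpair] at this
    · refine mem_cross_swap hxΛ ?_
      have hswapΛ : (((δ:ℝ):S1), ((γ:ℝ):S1)) ∈ Λ := by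
        have := hΛ.2.1 x hxΛ
        rw [hxpair] at this
        exact this
      have := mem_cross_of_sep (Λ := Λ) (α := s) (w := t) (γ := δ) (δ := γ) hswapΛ
        (by linarith) (by linarith) (by linarith) (by linarith)
      rw [hxpair]
      exact this
  · exact isOpenMap_qq _ (isOpen_Ioo.prod isOpen_Ioo)
  · refine ⟨(α, w), ⟨?_, ?_⟩, ?_⟩
    · simp only [mem_Ioo]; constructor <;> linarith
    · simp only [mem_Ioo]; constructor <;> linarith
    · simp only [hαe, hwe]


lemma relC_admissible (hΛ : IsLamination Λ)
    (htwo : ∀ p : S1, {q : S1 | (p, q) ∈ Λ}.encard ≤ 2) :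
    Equivalence (relC Λ) ∧ IsClosed {x : S1 × S1 | relC Λ x.1 x.2} ∧
      (∀ x ∈ Λ, relC Λ x.1 x.2) ∧
      (∀ p' q' : S1,
        {x ∈ Λ | ({x.1, x.2} ∩ {p', q'} : Set S1) = ∅ ∧
          LinkedPairs p' q' x.1 x.2}.Countable → relC Λ p' q') :=
  ⟨⟨relC_refl, relC_symm, fun h h' => relC_trans hΛ htwo h h'⟩,
    relC_closed hΛ, relC_contains hΛ, fun _ _ h => h⟩

lemma bigRel_le_relC (hΛ : IsLamination Λ)
    (htwo : ∀ p : S1, {q : S1 | (p, q) ∈ Λ}.encard ≤ 2)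
    {p q : S1} (h : bigRel Λ p q) : relC Λ p q :=
  h _ (relC_admissible hΛ htwo)

lemma countable_cross_bigRel {p q : S1} (hc : (cross Λ p q).Countable) : bigRel Λ p q :=
  fun _ hr => hr.2.2.2 p q hc

lemma bigRel_refl (p : S1) : bigRel Λ p p := fun _ hr => hr.1.refl p

lemma bigRel_symm {p q : S1} (h : bigRel Λ p q) : bigRel Λ q p :=
  fun r hr => hr.1.symm (h r hr)

lemma bigRel_trans {p q s : S1} (h : bigRel Λ p q) (h' : bigRel Λ q s) : bigRel Λ p s :=
  fun r hr => hr.1.trans (h r hr) (h' r hr)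

lemma bigRel_contains {x : S1 × S1} (hx : x ∈ Λ) : bigRel Λ x.1 x.2 :=
  fun _ hr => hr.2.2.1 x hx

lemma bigRel_closed : IsClosed {x : S1 × S1 | bigRel Λ x.1 x.2} := by
  have : {x : S1 × S1 | bigRel Λ x.1 x.2} =
      ⋂ (r : S1 → S1 → Prop), ⋂ (_ : Equivalence r ∧ IsClosed {x : S1 × S1 | r x.1 x.2} ∧
        (∀ x ∈ Λ, r x.1 x.2) ∧
        (∀ p' q' : S1,
          {x ∈ Λ | ({x.1, x.2} ∩ {p', q'} : Set S1) = ∅ ∧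
            LinkedPairs p' q' x.1 x.2}.Countable → r p' q')), {x : S1 × S1 | r x.1 x.2} := by
    ext x
    simp only [mem_setOf_eq, mem_iInter, bigRel]
  rw [this]
  exact isClosed_iInter fun r => isClosed_iInter fun hP => hP.2.1

lemma bigRel_mem_closure {p q : S1} {f : ℕ → S1 × S1}
    (hf : ∀ n, bigRel Λ (f n).1 (f n).2)
    (hlim : Filter.Tendsto f Filter.atTop (nhds (p, q))) : bigRel Λ p q := by
  have := bigRel_closed (Λ := Λ)
  have hmem : (p, q) ∈ {x : S1 × S1 | bigRel Λ x.1 x.2} :=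
    this.mem_of_tendsto hlim (Filter.Eventually.of_forall hf)
  exact hmem


lemma continuous_qq : Continuous (fun gd : ℝ × ℝ => ((gd.1 : S1), (gd.2 : S1))) := by
  exact (QuotientAddGroup.continuous_mk.comp continuous_fst).prodMk
    (QuotientAddGroup.continuous_mk.comp continuous_snd)

lemma not_countable_nat_bool : ¬ Countable (ℕ → Bool) := by
  intro h
  obtain ⟨F, hF⟩ := exists_surjective_nat (ℕ → Bool)
  obtain ⟨m, hm⟩ := hF (fun n => ! F n n)
  have := congrFun hm m
  simp at this

/-- The key uncountability lemma: under the no-isolated-leaves hypothesis, a nonempty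
crossing set is uncountable. -/
lemma cross_uncountable (hΛ : IsLamination Λ)
    (htwo : ∀ p : S1, {q : S1 | (p, q) ∈ Λ}.encard ≤ 2)
    (hiso : ∀ x ∈ Λ, x ∈ closure (Λ \ {x, (x.2, x.1)}))
    {a b : S1} (hne : (cross Λ a b).Nonempty) : ¬ (cross Λ a b).Countable := by
  intro hc
  have hab : a ≠ b := by
    rintro rfl
    rw [cross_self_empty] at hne
    exact Set.not_nonempty_empty hne
  obtain ⟨α, _, hαe⟩ := s1_lift a 0
  obtain ⟨w, hwm, hwe⟩ := s1_lift b α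
  have hw1 : α < w := lt_of_le_of_ne hwm.1 (by rintro rfl; exact hab (hαe.symm.trans hwe))
  set W : Set (ℝ × ℝ) := {gd | α < gd.1 ∧ gd.1 < w ∧ w < gd.2 ∧ gd.2 < α + 1 ∧
    ((gd.1 : S1), (gd.2 : S1)) ∈ Λ} with hW
  set f : ℝ × ℝ → S1 × S1 := fun gd => ((gd.1 : S1), (gd.2 : S1)) with hf
  -- W is nonempty
  have hWne : W.Nonempty := by
    obtain ⟨x, hx⟩ := hne
    have hx' := hx
    rw [← hαe, ← hwe] at hx'
    obtain ⟨γ, δ, hγe, hδe, hγ1, hγ2, hδ1, hδ2, hsep⟩ := cross_elem_sep hw1 hwm.2 hx'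
    rcases hsep with ⟨hs1, hs2⟩ | ⟨hs1, hs2⟩
    · refine ⟨(γ, δ), hγ1, hs1, hs2, hδ2, ?_⟩
      rw [← hγe, ← hδe]; exact hx.1
    · refine ⟨(δ, γ), hδ1, hs1, hs2, hγ2, ?_⟩
      have := hΛ.2.1 x hx.1
      rwa [hγe, hδe] at this
  -- W is countable
  have hWc : W.Countable := by
    refine Set.countable_of_injective_of_countable_image (f := f) ?_ ?_
    · rintro ⟨γ, δ⟩ ⟨h1, h2, h3, h4, h5⟩ ⟨γ', δ'⟩ ⟨h1', h2', h3', h4', h5'⟩ heq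
      simp only [hf, Prod.mk.injEq] at heq
      have e1 : γ = γ' := s1_inj (by rw [abs_lt]; constructor <;> linarith) heq.1
      have e2 : δ = δ' := s1_inj (by rw [abs_lt]; constructor <;> linarith) heq.2
      simp [e1, e2]
    · refine hc.mono ?_
      rintro y ⟨⟨γ, δ⟩, ⟨h1, h2, h3, h4, h5⟩, rfl⟩
      have := mem_cross_of_sep (Λ := Λ) h5 h1 h2 h3 h4
      rwa [hαe, hwe] at this
  -- W is preperfect
  have hpre : Preperfect W := by
    intro gd hgd
    rw [accPt_iff_nhds]
    intro U hU
    obtain ⟨h1, h2, h3, h4, h5⟩ := hgd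
    set V : Set (ℝ × ℝ) := interior U ∩
      ((Ioo α w ×ˢ Ioo w (α + 1)) : Set (ℝ × ℝ)) with hV
    have hVopen : IsOpen V := isOpen_interior.inter (isOpen_Ioo.prod isOpen_Ioo)
    have hVmem : gd ∈ V := ⟨mem_interior_iff_mem_nhds.mpr hU, ⟨h1, h2⟩, ⟨h3, h4⟩⟩
    have himg : f gd ∈ f '' V := mem_image_of_mem f hVmem
    have hopen : IsOpen (f '' V) := isOpenMap_qq V hVopen
    have hclos := hiso (f gd) h5
    rw [mem_closure_iff] at hclos
    obtain ⟨y, hyV, hyD⟩ := hclos (f '' V) hopen himg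
    obtain ⟨gd', hgd'V, hgd'e⟩ := hyV
    refine ⟨gd', ⟨?_, ?_⟩, ?_⟩
    · exact interior_subset hgd'V.1
    · obtain ⟨⟨k1, k2⟩, ⟨k3, k4⟩⟩ := hgd'V.2
      refine ⟨k1, k2, k3, k4, ?_⟩
      rw [show ((gd'.1 : S1), (gd'.2 : S1)) = f gd' from rfl, hgd'e]
      exact hyD.1
    · rintro rfl
      exact hyD.2 (Or.inl (by rw [← hgd'e]))
  -- closure W is countable
  have hboxW : W ⊆ Icc α w ×ˢ Icc w (α + 1) := by
    rintro ⟨γ, δ⟩ ⟨k1, k2, k3, k4, _⟩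
    exact ⟨⟨k1.le, k2.le⟩, ⟨k3.le, k4.le⟩⟩
  have hboxc : ∀ gd ∈ closure W, (α ≤ gd.1 ∧ gd.1 ≤ w) ∧ (w ≤ gd.2 ∧ gd.2 ≤ α + 1) := by
    intro gd h
    have := closure_minimal hboxW (isClosed_Icc.prod isClosed_Icc) h
    exact ⟨⟨this.1.1, this.1.2⟩, ⟨this.2.1, this.2.2⟩⟩
  have hclΛ : ∀ gd ∈ closure W, ((gd.1 : S1), (gd.2 : S1)) ∈ closure Λ := by
    intro gd h
    have hWsub : W ⊆ f ⁻¹' Λ := fun y hy => hy.2.2.2.2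
    have : closure W ⊆ f ⁻¹' closure Λ :=
      closure_minimal (hWsub.trans (preimage_mono subset_closure))
        (IsClosed.preimage continuous_qq isClosed_closure)
    exact this h
  have hTa : {q : S1 | (a, q) ∈ Λ}.Finite :=
    Set.finite_of_encard_le_coe (k := 2) (by exact_mod_cast htwo a)
  have hTb : {q : S1 | (b, q) ∈ Λ}.Finite :=
    Set.finite_of_encard_le_coe (k := 2) (by exact_mod_cast htwo b)
  have hclosc : (closure W).Countable := by
    have hsnd_inj : ∀ gd ∈ closure W, ∀ gd' ∈ closure W, gd.1 = gd'.1 →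
        (gd.2 : S1) = (gd'.2 : S1) → gd = gd' := by
      rintro ⟨γ, δ⟩ h ⟨γ', δ'⟩ h' he1 he2
      have h3 : w ≤ δ := (hboxc _ h).2.1
      have h4 : δ ≤ α + 1 := (hboxc _ h).2.2
      have h3' : w ≤ δ' := (hboxc _ h').2.1
      have h4' : δ' ≤ α + 1 := (hboxc _ h').2.2
      have : δ = δ' := s1_inj (by rw [abs_lt]; constructor <;> linarith [hwm.1, hwm.2, hw1]) he2
      simp_all
    have hfst_inj : ∀ gd ∈ closure W, ∀ gd' ∈ closure W, gd.2 = gd'.2 →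
        (gd.1 : S1) = (gd'.1 : S1) → gd = gd' := by
      rintro ⟨γ, δ⟩ h ⟨γ', δ'⟩ h' he2 he1
      have h1 : α ≤ γ := (hboxc _ h).1.1
      have h2 : γ ≤ w := (hboxc _ h).1.2
      have h1' : α ≤ γ' := (hboxc _ h').1.1
      have h2' : γ' ≤ w := (hboxc _ h').1.2
      have : γ = γ' := s1_inj (by rw [abs_lt]; constructor <;> linarith [hwm.1, hwm.2, hw1]) he1
      simp_all
    have hE1 : {gd ∈ closure W | gd.1 = α}.Countable := by
      refine Set.countable_of_injective_of_countable_image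
        (f := fun gd : ℝ × ℝ => (gd.2 : S1)) ?_ ?_
      · rintro gd ⟨h, he⟩ gd' ⟨h', he'⟩ heq
        exact hsnd_inj gd h gd' h' (he.trans he'.symm) heq
      · refine ((hTa.insert a).countable).mono ?_
        rintro y ⟨⟨γ, δ⟩, ⟨hcw, he1⟩, rfl⟩
        dsimp only at he1 ⊢
        have h3 : w ≤ δ := (hboxc _ hcw).2.1
        have h4 : δ ≤ α + 1 := (hboxc _ hcw).2.2
        rcases eq_or_lt_of_le h4 with he | hlt
        · left
          rw [show (δ : S1) = ((α + 1 : ℝ) : S1) by rw [he], ← hαe,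
            show ((α + 1 : ℝ) : S1) = (α : S1) by
              rw [show (α + 1 : ℝ) = α + (1:ℤ) by push_cast; ring]; exact s1_coe_add_int α 1]
        · right
          have hmem : ((α : S1), (δ : S1)) ∈ closure Λ := by
            have := hclΛ _ hcw; rwa [he1] at this
          have hdist : (α : S1) ≠ (δ : S1) := s1_ne (by linarith) (by linarith)
          have := hΛ.2.2.1 _ hmem hdist
          rw [hαe] at this
          exact this
    have hE2 : {gd ∈ closure W | gd.1 = w}.Countable := by
      refine Set.countable_of_injective_of_countable_image
        (f := fun gd : ℝ × ℝ => (gd.2 : S1)) ?_ ?_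
      · rintro gd ⟨h, he⟩ gd' ⟨h', he'⟩ heq
        exact hsnd_inj gd h gd' h' (he.trans he'.symm) heq
      · refine (((hTb.insert a).insert b).countable).mono ?_
        rintro y ⟨⟨γ, δ⟩, ⟨hcw, he1⟩, rfl⟩
        dsimp only at he1 ⊢
        have h3 : w ≤ δ := (hboxc _ hcw).2.1
        have h4 : δ ≤ α + 1 := (hboxc _ hcw).2.2
        rcases eq_or_lt_of_le h3 with he | hlt
        · left
          rw [show (δ : S1) = (w : S1) by rw [he], hwe]
        right
        rcases eq_or_lt_of_le h4 with he | hlt2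
        · left
          rw [show (δ : S1) = ((α + 1 : ℝ) : S1) by rw [he], ← hαe,
            show ((α + 1 : ℝ) : S1) = (α : S1) by
              rw [show (α + 1 : ℝ) = α + (1:ℤ) by push_cast; ring]; exact s1_coe_add_int α 1]
        · right
          have hmem : ((w : S1), (δ : S1)) ∈ closure Λ := by
            have := hclΛ _ hcw; rwa [he1] at this
          have hdist : (w : S1) ≠ (δ : S1) := s1_ne (by linarith) (by linarith)
          have := hΛ.2.2.1 _ hmem hdist
          rw [hwe] at this
          exact this
    have hE3 : {gd ∈ closure W | gd.2 = w}.Countable := by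
      refine Set.countable_of_injective_of_countable_image
        (f := fun gd : ℝ × ℝ => (gd.1 : S1)) ?_ ?_
      · rintro gd ⟨h, he⟩ gd' ⟨h', he'⟩ heq
        exact hfst_inj gd h gd' h' (he.trans he'.symm) heq
      · refine (((hTb.insert a).insert b).countable).mono ?_
        rintro y ⟨⟨γ, δ⟩, ⟨hcw, he2⟩, rfl⟩
        dsimp only at he2 ⊢
        have h1 : α ≤ γ := (hboxc _ hcw).1.1
        have h2 : γ ≤ w := (hboxc _ hcw).1.2
        rcases eq_or_lt_of_le h1 with he | hlt
        · right; left
          rw [show (γ : S1) = (α : S1) by rw [← he], hαe]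
        rcases eq_or_lt_of_le h2 with he | hlt2
        · left
          rw [show (γ : S1) = (w : S1) by rw [he], hwe]
        · right; right
          have hmem : ((γ : S1), (w : S1)) ∈ closure Λ := by
            have := hclΛ _ hcw; rwa [he2] at this
          have hdist : (γ : S1) ≠ (w : S1) := s1_ne (by linarith) (by linarith [hwm.2])
          have hΛm := hΛ.2.2.1 _ hmem hdist
          have := hΛ.2.1 _ hΛm
          rw [hwe] at this
          exact this
    have hE4 : {gd ∈ closure W | gd.2 = α + 1}.Countable := by
      refine Set.countable_of_injective_of_countable_image
        (f := fun gd : ℝ × ℝ => (gd.1 : S1)) ?_ ?_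
      · rintro gd ⟨h, he⟩ gd' ⟨h', he'⟩ heq
        exact hfst_inj gd h gd' h' (he.trans he'.symm) heq
      · refine (((hTa.insert a).insert b).countable).mono ?_
        rintro y ⟨⟨γ, δ⟩, ⟨hcw, he2⟩, rfl⟩
        dsimp only at he2 ⊢
        have h1 : α ≤ γ := (hboxc _ hcw).1.1
        have h2 : γ ≤ w := (hboxc _ hcw).1.2
        rcases eq_or_lt_of_le h1 with he | hlt
        · right; left
          rw [show (γ : S1) = (α : S1) by rw [← he], hαe]
        rcases eq_or_lt_of_le h2 with he | hlt2
        · left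
          rw [show (γ : S1) = (w : S1) by rw [he], hwe]
        · right; right
          have hmem : ((γ : S1), ((α + 1 : ℝ) : S1)) ∈ closure Λ := by
            have := hclΛ _ hcw; rwa [he2] at this
          rw [show ((α + 1 : ℝ) : S1) = (α : S1) by
            rw [show (α + 1 : ℝ) = α + (1:ℤ) by push_cast; ring];
            exact s1_coe_add_int α 1] at hmem
          have hdist : (γ : S1) ≠ (α : S1) :=
            (s1_ne (x := α) (y := γ) (by linarith) (by linarith [hwm.2])).symm
          have hΛm := hΛ.2.2.1 _ hmem hdist
          have := hΛ.2.1 _ hΛm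
          rw [hαe] at this
          exact this
    have hsub : closure W ⊆ W ∪ ({gd ∈ closure W | gd.1 = α} ∪ {gd ∈ closure W | gd.1 = w}
        ∪ {gd ∈ closure W | gd.2 = w} ∪ {gd ∈ closure W | gd.2 = α + 1}) := by
      intro gd hgd
      by_cases e1 : gd.1 = α
      · exact Or.inr (Or.inl (Or.inl (Or.inl ⟨hgd, e1⟩)))
      by_cases e2 : gd.1 = w
      · exact Or.inr (Or.inl (Or.inl (Or.inr ⟨hgd, e2⟩)))
      by_cases e3 : gd.2 = w
      · exact Or.inr (Or.inl (Or.inr ⟨hgd, e3⟩))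
      by_cases e4 : gd.2 = α + 1
      · exact Or.inr (Or.inr ⟨hgd, e4⟩)
      · obtain ⟨⟨k1, k2⟩, ⟨k3, k4⟩⟩ := hboxc _ hgd
        have hk1 : α < gd.1 := lt_of_le_of_ne k1 (Ne.symm e1)
        have hk2 : gd.1 < w := lt_of_le_of_ne k2 e2
        have hk3 : w < gd.2 := lt_of_le_of_ne k3 (Ne.symm e3)
        have hk4 : gd.2 < α + 1 := lt_of_le_of_ne k4 e4
        have hdist : (gd.1 : S1) ≠ (gd.2 : S1) := s1_ne (by linarith) (by linarith)
        exact Or.inl ⟨hk1, hk2, hk3, hk4, hΛ.2.2.1 (f gd) (hclΛ _ hgd) hdist⟩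
    exact Set.Countable.mono hsub
      (hWc.union (((hE1.union hE2).union hE3).union hE4))
  -- perfect set argument
  have hperf : Perfect (closure W) := hpre.perfect_closure
  obtain ⟨F, hFrange, _, hFinj⟩ := hperf.exists_nat_bool_injection ⟨_, subset_closure hWne.some_mem⟩
  apply not_countable_nat_bool
  have : Countable ↥(closure W) := hclosc.to_subtype
  exact Function.Injective.countable (f := fun y => (⟨F y, hFrange ⟨y, rfl⟩⟩ : ↥(closure W)))
    fun y z h => hFinj (congrArg Subtype.val h)


lemma coe_add_one (α : ℝ) : ((α + 1 : ℝ) : S1) = (α : S1) := by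
  rw [show (α + 1 : ℝ) = α + (1:ℤ) by push_cast; ring]; exact s1_coe_add_int α 1

/-- Direction ⊇ : every leaf is a boundary leaf of the big relation. -/
lemma leaf_mem_boundary (hΛ : IsLamination Λ)
    (htwo : ∀ p : S1, {q : S1 | (p, q) ∈ Λ}.encard ≤ 2)
    (hiso : ∀ x ∈ Λ, x ∈ closure (Λ \ {x, (x.2, x.1)})) :
    Λ ⊆ boundaryLamRel (bigRel Λ) := by
  intro x hx
  have hne : x.1 ≠ x.2 := hΛ.1 x hx
  obtain ⟨α, _, hαe⟩ := s1_lift x.1 0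
  obtain ⟨w, hwm, hwe⟩ := s1_lift x.2 α
  have hw1 : α < w := lt_of_le_of_ne hwm.1 (by rintro rfl; exact hne (hαe.symm.trans hwe))
  -- the finite set of leaves through x.1 or x.2
  have hT1 : {q : S1 | (x.1, q) ∈ Λ}.Finite :=
    Set.finite_of_encard_le_coe (k := 2) (by exact_mod_cast htwo x.1)
  have hT2 : {q : S1 | (x.2, q) ∈ Λ}.Finite :=
    Set.finite_of_encard_le_coe (k := 2) (by exact_mod_cast htwo x.2)
  set F : Set (S1 × S1) := {y | y ∈ Λ ∧ (y.1 = x.1 ∨ y.1 = x.2 ∨ y.2 = x.1 ∨ y.2 = x.2)}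
    with hF
  have hFfin : F.Finite := by
    have hsub : F ⊆ (({x.1, x.2} : Set S1) ×ˢ ({q : S1 | (x.1, q) ∈ Λ} ∪ {q : S1 | (x.2, q) ∈ Λ}))
        ∪ (({q : S1 | (x.1, q) ∈ Λ} ∪ {q : S1 | (x.2, q) ∈ Λ}) ×ˢ ({x.1, x.2} : Set S1)) := by
      rintro ⟨y1, y2⟩ ⟨hyΛ, hcase⟩
      have hmm : ∀ z : S1, z = x.1 ∨ z = x.2 → z ∈ ({x.1, x.2} : Set S1) := by
        intro z hz
        simp only [mem_insert_iff, mem_singleton_iff]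
        exact hz
      rcases hcase with h | h | h | h
      · exact Or.inl ⟨hmm y1 (Or.inl h), Or.inl (by rw [← h]; exact hyΛ)⟩
      · exact Or.inl ⟨hmm y1 (Or.inr h), Or.inr (by rw [← h]; exact hyΛ)⟩
      · refine Or.inr ⟨Or.inl ?_, hmm y2 (Or.inl h)⟩
        have := hΛ.2.1 _ hyΛ
        rw [h] at this
        exact this
      · refine Or.inr ⟨Or.inr ?_, hmm y2 (Or.inr h)⟩
        have := hΛ.2.1 _ hyΛ
        rw [h] at this
        exact this
    exact Set.Finite.subset ((((Set.finite_singleton x.2).insert x.1).prod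
      (hT1.union hT2)).union ((hT1.union hT2).prod
        ((Set.finite_singleton x.2).insert x.1))) hsub
  -- dichotomy of sides
  have hdich : (∀ t : ℝ, α < t → t < w → (cross Λ x.1 ((t : ℝ) : S1)).Nonempty) ∨
      (∀ t : ℝ, w < t → t < α + 1 → (cross Λ x.1 ((t : ℝ) : S1)).Nonempty) := by
    by_contra hcon
    push_neg at hcon
    obtain ⟨⟨tA, htA1, htA2, htAe⟩, ⟨tB, htB1, htB2, htBe⟩⟩ := hcon
    have htAe' : cross Λ x.1 ((tA : ℝ) : S1) = ∅ := htAe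
    have htBe' : cross Λ x.1 ((tB : ℝ) : S1) = ∅ := htBe
    clear htAe htBe
    set ε : ℝ := min (min ((tA - α)/2) ((w - tA)/2)) (min ((tB - w)/2) ((α + 1 - tB)/2)) with hε
    have hεpos : 0 < ε := by
      simp only [hε, lt_min_iff]
      refine ⟨⟨by linarith, by linarith⟩, by linarith, by linarith⟩
    have hε1 : ε ≤ (tA - α)/2 := le_trans (min_le_left _ _) (min_le_left _ _)
    have hε2 : ε ≤ (w - tA)/2 := le_trans (min_le_left _ _) (min_le_right _ _)
    have hε3 : ε ≤ (tB - w)/2 := le_trans (min_le_right _ _) (min_le_left _ _)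
    have hε4 : ε ≤ (α + 1 - tB)/2 := le_trans (min_le_right _ _) (min_le_right _ _)
    set U : Set (S1 × S1) := ((fun gd : ℝ × ℝ => ((gd.1 : S1), (gd.2 : S1))) ''
      (Ioo (α - ε) (α + ε) ×ˢ Ioo (w - ε) (w + ε))) \ (F \ {x}) with hU
    have hUopen : IsOpen U :=
      (isOpenMap_qq _ (isOpen_Ioo.prod isOpen_Ioo)).sdiff hFfin.diff.isClosed
    have hUx : x ∈ U := by
      constructor
      · exact ⟨(α, w), ⟨⟨by linarith, by linarith⟩, ⟨by linarith, by linarith⟩⟩,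
          by simp only [hαe, hwe]⟩
      · rintro ⟨_, hxx⟩
        exact hxx rfl
    have hclos := hiso x hx
    rw [mem_closure_iff] at hclos
    obtain ⟨y, hyU, hyD⟩ := hclos U hUopen hUx
    obtain ⟨⟨γ, δ⟩, ⟨⟨hγ1, hγ2⟩, ⟨hδ1, hδ2⟩⟩, hye⟩ := hyU.1
    have hyΛ : y ∈ Λ := hyD.1
    have hynF : y ∉ F \ {x} := hyU.2
    have hyne : y ≠ x := by
      intro h
      exact hyD.2 (Or.inl h)
    have hyF : y ∉ F := fun h => hynF ⟨h, hyne⟩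
    have hyav : y.1 ≠ x.1 ∧ y.1 ≠ x.2 ∧ y.2 ≠ x.1 ∧ y.2 ≠ x.2 := by
      by_contra hcon2
      apply hyF
      refine ⟨hyΛ, ?_⟩
      tauto
    have hy1 : y.1 = ((γ : ℝ) : S1) := by rw [← hye]
    have hy2 : y.2 = ((δ : ℝ) : S1) := by rw [← hye]
    have hγα : γ ≠ α := by
      rintro rfl
      exact hyav.1 (by rw [hy1, hαe])
    rcases lt_or_gt_of_ne hγα with hlt | hgt
    · -- γ < α : y crosses (x.1, tB)
      have hpair : (((δ : ℝ) : S1), ((γ + 1 : ℝ) : S1)) ∈ Λ := by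
        rw [coe_add_one, ← hy1, ← hy2]
        exact hΛ.2.1 y hyΛ
      have hmem := mem_cross_of_sep (Λ := Λ) (α := α) (w := tB) hpair
        (by linarith) (by linarith) (by linarith) (by linarith)
      have hswap : (y.2, y.1) ∈ cross Λ ((α : ℝ) : S1) ((tB : ℝ) : S1) := by
        rw [hy1, hy2, show ((γ:ℝ) : S1) = ((γ + 1 : ℝ) : S1) from (coe_add_one γ).symm]
        exact hmem
      have : y ∈ cross Λ x.1 ((tB : ℝ) : S1) := by
        rw [← hαe] at htBe' ⊢
        exact mem_cross_swap hyΛ hswap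
      rw [htBe'] at this
      exact this
    · -- γ > α : y crosses (x.1, tA)
      have hpair : (((γ : ℝ) : S1), ((δ : ℝ) : S1)) ∈ Λ := by
        rw [← hy1, ← hy2]; exact hyΛ
      have hmem := mem_cross_of_sep (Λ := Λ) (α := α) (w := tA) hpair
        hgt (by linarith) (by linarith) (by linarith)
      have : y ∈ cross Λ x.1 ((tA : ℝ) : S1) := by
        rw [← hαe] at htAe' ⊢
        rw [show y = (((γ : ℝ) : S1), ((δ : ℝ) : S1)) from Prod.ext hy1 hy2]
        exact hmem
      rw [htAe'] at this
      exact this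
  refine ⟨bigRel_contains hx, hne, ?_⟩
  rcases hdich with hside | hside
  · refine ⟨α, w, hw1, hwm.2, Or.inl ⟨hαe, hwe⟩, ?_⟩
    intro t ht hbig
    exact cross_uncountable hΛ htwo hiso (hside t ht.1 ht.2)
      (bigRel_le_relC hΛ htwo hbig)
  · refine ⟨w, α + 1, hwm.2, by linarith, Or.inr ⟨hwe, by rw [coe_add_one]; exact hαe⟩, ?_⟩
    intro t ht hbig
    exact cross_uncountable hΛ htwo hiso (hside t ht.1 ht.2)
      (bigRel_le_relC hΛ htwo hbig)


/-- Two leaves cannot cross. -/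
lemma no_crossing (hΛ : IsLamination Λ) {u γ δ γ' δ' : ℝ}
    (h0 : u ≤ γ) (h1 : γ < γ') (h2 : γ' < δ) (h3 : δ < δ') (h4 : δ' < u + 1)
    (hx : (((γ:ℝ) : S1), ((δ:ℝ) : S1)) ∈ Λ) (hy : (((γ':ℝ) : S1), ((δ':ℝ) : S1)) ∈ Λ) :
    False := by
  have hL : LinkedPairs ((γ:ℝ) : S1) ((δ:ℝ) : S1) ((γ':ℝ) : S1) ((δ':ℝ) : S1) :=
    linked_of_sep h1 h2 h3 (by linarith)
  have hdisj : ({((γ:ℝ) : S1), ((δ:ℝ) : S1)} ∩ {((γ':ℝ) : S1), ((δ':ℝ) : S1)} : Set S1) = ∅ :=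
    pair_inter_empty
      (s1_ne (by linarith) (by linarith))
      (s1_ne (by linarith) (by linarith))
      ((s1_ne (x := γ') (y := δ) (by linarith) (by linarith)).symm)
      (s1_ne (by linarith) (by linarith))
  exact not_linked_of_unlinked
    (hΛ.2.2.2 _ hx _ hy hdisj) hL

/-- Direction ⊆ core: a boundary pair of the big relation is a leaf. -/
lemma boundary_pair_leaf (hΛ : IsLamination Λ)
    (htwo : ∀ p : S1, {q : S1 | (p, q) ∈ Λ}.encard ≤ 2)
    (hiso : ∀ x ∈ Λ, x ∈ closure (Λ \ {x, (x.2, x.1)}))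
    {u v : ℝ} (huv : u < v) (hv1 : v < u + 1)
    (hab : bigRel Λ ((u:ℝ) : S1) ((v:ℝ) : S1))
    (harc : ∀ t ∈ Ioo u v, ¬ bigRel Λ ((u:ℝ) : S1) ((t:ℝ) : S1)) :
    (((u:ℝ) : S1), ((v:ℝ) : S1)) ∈ Λ := by
  by_contra hnot
  -- no leaf crosses (a, b)
  have hcrossab : cross Λ ((u:ℝ) : S1) ((v:ℝ) : S1) = ∅ := by
    by_contra h
    rw [← Ne, ← nonempty_iff_ne_empty] at h
    exact cross_uncountable hΛ htwo hiso h (bigRel_le_relC hΛ htwo hab)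
  -- every interior point is crossed by a leaf strictly inside
  have step2 : ∀ t : ℝ, u < t → t < v →
      ∃ γ δ : ℝ, u < γ ∧ γ < t ∧ t < δ ∧ δ < v ∧ (((γ:ℝ) : S1), ((δ:ℝ) : S1)) ∈ Λ := by
    intro t ht1 ht2
    have hnet : (cross Λ ((u:ℝ) : S1) ((t:ℝ) : S1)).Nonempty := by
      by_contra h
      rw [not_nonempty_iff_eq_empty] at h
      exact harc t ⟨ht1, ht2⟩ (countable_cross_bigRel (by rw [h]; exact countable_empty))
    obtain ⟨z, hz⟩ := hnet
    obtain ⟨γ, δ, hγe, hδe, hγ1, hγ2, hδ1, hδ2, hsep⟩ :=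
      cross_elem_sep (α := u) (w := t) ht1 (by linarith) hz
    -- normalize to an oriented leaf (γ', δ') with u < γ' < t < δ' < u + 1
    have hmain : ∀ γ' δ' : ℝ, u < γ' → γ' < t → t < δ' → δ' < u + 1 →
        (((γ':ℝ) : S1), ((δ':ℝ) : S1)) ∈ Λ →
        ∃ γ0 δ0 : ℝ, u < γ0 ∧ γ0 < t ∧ t < δ0 ∧ δ0 < v ∧ (((γ0:ℝ) : S1), ((δ0:ℝ) : S1)) ∈ Λ := by
      intro γ' δ' k1 k2 k3 k4 hpair
      rcases lt_trichotomy δ' v with hlt | heq | hgt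
      · exact ⟨γ', δ', k1, k2, k3, hlt, hpair⟩
      · -- δ' = v : leaf ending at b, contradiction with harc
        exfalso
        have hbig1 : bigRel Λ ((γ':ℝ) : S1) ((v:ℝ) : S1) := by
          have := bigRel_contains (Λ := Λ) (x := (((γ':ℝ) : S1), ((δ':ℝ) : S1))) hpair
          rwa [heq] at this
        exact harc γ' ⟨k1, by linarith⟩ (bigRel_trans hab (bigRel_symm hbig1))
      · -- δ' > v : leaf crosses (a, b), contradiction
        exfalso
        have := mem_cross_of_sep (Λ := Λ) (α := u) (w := v) hpair
          k1 (by linarith) hgt k4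
        rw [hcrossab] at this
        exact this
    rcases hsep with ⟨hs1, hs2⟩ | ⟨hs1, hs2⟩
    · refine hmain γ δ hγ1 hs1 hs2 hδ2 ?_
      have : z = (((γ:ℝ) : S1), ((δ:ℝ) : S1)) := Prod.ext hγe hδe
      rw [← this]; exact hz.1
    · refine hmain δ γ hδ1 hs1 hs2 hγ2 ?_
      have : (z.2, z.1) = (((δ:ℝ) : S1), ((γ:ℝ) : S1)) := Prod.ext hδe hγe
      rw [← this]; exact hΛ.2.1 z hz.1
  -- the chain/supremum argument
  set x₀ : ℝ := (u + v) / 2 with hx₀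
  have hx₀1 : u < x₀ := by rw [hx₀]; linarith
  have hx₀2 : x₀ < v := by rw [hx₀]; linarith
  set D : Set ℝ := {d | ∃ g : ℝ, u < g ∧ g < x₀ ∧ x₀ < d ∧ d < v ∧
    (((g:ℝ) : S1), ((d:ℝ) : S1)) ∈ Λ} with hD
  have hDne : D.Nonempty := by
    obtain ⟨γ, δ, k1, k2, k3, k4, k5⟩ := step2 x₀ hx₀1 hx₀2
    exact ⟨δ, γ, k1, k2, k3, k4, k5⟩
  have hDbdd : BddAbove D := by
    refine ⟨v, fun d hd => ?_⟩
    obtain ⟨g, _, _, _, k4, _⟩ := hd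
    exact k4.le
  set B : ℝ := sSup D with hB
  have hBx : x₀ < B := by
    obtain ⟨d, hd⟩ := hDne
    have hk3 : x₀ < d := hd.choose_spec.2.2.1
    exact lt_of_lt_of_le hk3 (le_csSup hDbdd hd)
  have hBv : B ≤ v := csSup_le hDne (fun d hd => hd.choose_spec.2.2.2.1.le)
  -- approximating sequence
  have hseq : ∀ n : ℕ, ∃ d ∈ D, B - 1/(n+1) < d := by
    intro n
    refine exists_lt_of_lt_csSup hDne ?_
    have : (0:ℝ) < 1/(n+1) := by positivity
    linarith
  choose dd hdD hdgt using hseq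
  have hdmem : ∀ n, ∃ g : ℝ, u < g ∧ g < x₀ ∧ x₀ < dd n ∧ dd n < v ∧
      (((g:ℝ) : S1), ((dd n:ℝ) : S1)) ∈ Λ := fun n => hdD n
  choose gg hgg using hdmem
  have hdB : ∀ n, dd n ≤ B := fun n => le_csSup hDbdd (hdD n)
  have hdtend : Filter.Tendsto dd Filter.atTop (nhds B) := by
    have hlow : Filter.Tendsto (fun n : ℕ => B - 1/(n+1)) Filter.atTop (nhds B) := by
      have : Filter.Tendsto (fun n : ℕ => 1 / ((n : ℝ) + 1)) Filter.atTop (nhds 0) :=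
        tendsto_one_div_add_atTop_nhds_zero_nat
      have := Filter.Tendsto.const_sub B this
      simpa using this
    exact tendsto_of_tendsto_of_tendsto_of_le_of_le hlow tendsto_const_nhds
      (fun n => (hdgt n).le) hdB
  obtain ⟨glim, hglimmem, φ, hφ, hgtend⟩ := (isCompact_Icc (a := u) (b := x₀)).tendsto_subseq
    (x := gg) (hx := fun n => ⟨(hgg n).1.le, (hgg n).2.1.le⟩)
  have hdtend' : Filter.Tendsto (fun n => dd (φ n)) Filter.atTop (nhds B) :=
    hdtend.comp hφ.tendsto_atTop
  have hlim : Filter.Tendsto (fun n => (((gg (φ n) : ℝ) : S1), ((dd (φ n) : ℝ) : S1)))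
      Filter.atTop (nhds (((glim:ℝ) : S1), ((B:ℝ) : S1))) :=
    Filter.Tendsto.prodMk_nhds
      ((QuotientAddGroup.continuous_mk.tendsto _).comp hgtend)
      ((QuotientAddGroup.continuous_mk.tendsto _).comp hdtend')
  have hclos : (((glim:ℝ) : S1), ((B:ℝ) : S1)) ∈ closure Λ :=
    mem_closure_of_tendsto hlim (Filter.Eventually.of_forall fun n => (hgg (φ n)).2.2.2.2)
  have hglimx : glim ≤ x₀ := hglimmem.2
  have hglimu : u ≤ glim := hglimmem.1
  have hdist : ((glim:ℝ) : S1) ≠ ((B:ℝ) : S1) :=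
    s1_ne (by linarith) (by linarith)
  have hleaf : (((glim:ℝ) : S1), ((B:ℝ) : S1)) ∈ Λ := hΛ.2.2.1 _ hclos hdist
  rcases eq_or_lt_of_le hBv with hBe | hBlt
  · -- B = v
    rcases eq_or_lt_of_le hglimu with hge | hglt
    · -- glim = u : we found the leaf (a, b), contradicting hnot
      apply hnot
      rw [← hge, hBe] at hleaf
      exact hleaf
    · -- u < glim : contradiction with harc at glim
      have hbig1 : bigRel Λ ((glim:ℝ) : S1) ((v:ℝ) : S1) := by
        have := bigRel_contains (Λ := Λ) hleaf
        rwa [hBe] at this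
      exact harc glim ⟨hglt, by linarith⟩ (bigRel_trans hab (bigRel_symm hbig1))
  · -- B < v : coverage at B gives a contradiction
    obtain ⟨γ', δ', k1, k2, k3, k4, k5⟩ := step2 B (by linarith) hBlt
    rcases lt_trichotomy γ' x₀ with h1 | h1 | h1
    · -- γ' < x₀ : δ' would be in D above the sup
      have : δ' ∈ D := ⟨γ', k1, h1, by linarith, k4, k5⟩
      have := le_csSup hDbdd this
      linarith
    · -- γ' = x₀ : cross with an approximating leaf
      exact no_crossing hΛ (u := u) (γ := gg (φ 0)) (δ := dd (φ 0)) (γ' := γ') (δ' := δ')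
        (hgg (φ 0)).1.le (by rw [h1]; exact (hgg (φ 0)).2.1)
        (by rw [h1]; exact (hgg (φ 0)).2.2.1)
        (by linarith [hdB (φ 0)]) (by linarith)
        (hgg (φ 0)).2.2.2.2 k5
    · -- x₀ < γ' : cross with the limit leaf
      exact no_crossing hΛ (u := u) (γ := glim) (δ := B) (γ' := γ') (δ' := δ')
        hglimu (by linarith) k2 k3 (by linarith) hleaf k5

end Stmt9Aux

/-- Back and forth: if `Λ` is a lamination such that no point lies in more
than two leaves and `Λ` has no isolated leaves, then the boundary lamination of the big
relation `Rel(Λ)` is `Λ` itself. -/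
theorem stmt9 (Λ : Set (S1 × S1)) (hΛ : IsLamination Λ)
    (htwo : ∀ p : S1, {q : S1 | (p, q) ∈ Λ}.encard ≤ 2)
    (hiso : ∀ x ∈ Λ, x ∈ closure (Λ \ {x, (x.2, x.1)})) :
    boundaryLamRel (bigRel Λ) = Λ := by
  apply Set.Subset.antisymm
  · rintro x ⟨hbig, hne, u, v, huv, hv1, hor, harc⟩
    rcases hor with ⟨hu, hv⟩ | ⟨hu, hv⟩
    · have hab : bigRel Λ ((u:ℝ) : S1) ((v:ℝ) : S1) := by rw [hu, hv]; exact hbig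
      have harc' : ∀ t ∈ Ioo u v, ¬ bigRel Λ ((u:ℝ) : S1) ((t:ℝ) : S1) := by
        intro t ht
        rw [hu]
        exact harc t ht
      have hm := Stmt9Aux.boundary_pair_leaf hΛ htwo hiso huv hv1 hab harc'
      rw [hu, hv] at hm
      simpa using hm
    · have hab : bigRel Λ ((u:ℝ) : S1) ((v:ℝ) : S1) := by
        rw [hu, hv]; exact Stmt9Aux.bigRel_symm hbig
      have harc' : ∀ t ∈ Ioo u v, ¬ bigRel Λ ((u:ℝ) : S1) ((t:ℝ) : S1) := by
        intro t ht hcon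
        apply harc t ht
        rw [hu] at hcon
        exact Stmt9Aux.bigRel_trans hbig hcon
      have hm := Stmt9Aux.boundary_pair_leaf hΛ htwo hiso huv hv1 hab harc'
      rw [hu, hv] at hm
      have := hΛ.2.1 _ hm
      simpa using this
  · exact Stmt9Aux.leaf_mem_boundary hΛ htwo hiso
end
end

section
/- Let Z⁺, Z⁻ ⊆ S² be a zipper: disjoint, dense, path-connected subsets each of which is a countable increasing union of finite topological trees, and in which every point is a path cut point. Then any two distinct points of Z⁺ are joined by a unique embedded path in Z⁺ (and similarly for Z⁻). -/
open Set Topology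

noncomputable section

/-- `B ⊆ S²` is an embedded closed arc from `x` to `y`. -/
def IsArcBtw (B : Set S2) (x y : S2) : Prop :=
  ∃ γ : ℝ → S2, ContinuousOn γ (Icc 0 1) ∧ InjOn γ (Icc 0 1) ∧
    γ '' Icc 0 1 = B ∧ γ 0 = x ∧ γ 1 = y

/-- A finite topological tree in the sphere: a point, or a compact path-connected set
which is a finite union of embedded arcs and contains a unique embedded arc between
any two of its points. -/
def IsFiniteTree (T : Set S2) : Prop :=
  (∃ x : S2, T = {x}) ∨
  (IsCompact T ∧ IsPathConnected T ∧
    (∃ (n : ℕ) (A : Fin n → Set S2), (∀ i, ∃ x y, IsArcBtw (A i) x y) ∧ T = ⋃ i, A i) ∧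
    ∀ x ∈ T, ∀ y ∈ T, ∀ B C : Set S2, B ⊆ T → C ⊆ T →
      IsArcBtw B x y → IsArcBtw C x y → B = C)

/-- `p` is a path cut point of `Z`: removing it leaves at least two path components. -/
def IsCutPt (Z : Set S2) (p : S2) : Prop :=
  ∃ a ∈ Z \ {p}, ∃ b ∈ Z \ {p}, ¬ JoinedIn (Z \ {p}) a b

/-- A zipper: a pair of disjoint, dense subsets of the sphere, each a countable
increasing union of finite trees, in each of which every point is a path cut point. -/
def IsZipper (Zp Zm : Set S2) : Prop :=
  Zp.Nonempty ∧ Zm.Nonempty ∧ Zp ∩ Zm = ∅ ∧ Dense Zp ∧ Dense Zm ∧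
  (∀ p ∈ Zp, IsCutPt Zp p) ∧ (∀ p ∈ Zm, IsCutPt Zm p) ∧
  (∃ T : ℕ → Set S2, Monotone T ∧ (∀ n, IsFiniteTree (T n)) ∧ Zp = ⋃ n, T n) ∧
  (∃ T : ℕ → Set S2, Monotone T ∧ (∀ n, IsFiniteTree (T n)) ∧ Zm = ⋃ n, T n)

namespace Aux

lemma affine_mem {a b t : ℝ} (ht : t ∈ Icc (0:ℝ) 1) (hab : a ≤ b) :
    a + t * (b - a) ∈ Icc a b := by
  obtain ⟨h0, h1⟩ := ht
  constructor <;> nlinarith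

lemma affine_image {a b : ℝ} (hab : a ≤ b) :
    (fun t => a + t * (b - a)) '' Icc (0:ℝ) 1 = Icc a b := by
  ext s
  constructor
  · rintro ⟨t, ht, rfl⟩; exact affine_mem ht hab
  · intro hs
    rcases eq_or_lt_of_le hab with h | h
    · subst h
      refine ⟨0, ⟨le_refl _, zero_le_one⟩, ?_⟩
      have : s = a := le_antisymm hs.2 hs.1
      simp [this]
    · refine ⟨(s - a) / (b - a), ⟨?_, ?_⟩, ?_⟩
      · exact div_nonneg (by linarith [hs.1]) (by linarith)
      · rw [div_le_one (by linarith)]; linarith [hs.2]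
      · show a + (s - a) / (b - a) * (b - a) = s
        rw [div_mul_cancel₀ _ (by linarith : b - a ≠ 0)]
        ring

lemma affine_continuous (a b : ℝ) : Continuous (fun t : ℝ => a + t * (b - a)) := by
  continuity

lemma affine_injOn {a b : ℝ} (hab : a < b) :
    Function.Injective (fun t : ℝ => a + t * (b - a)) := by
  intro t t' h
  simp only at h
  have hb : b - a ≠ 0 := by linarith
  have := mul_right_cancel₀ hb (by linarith : t * (b - a) = t' * (b - a))
  exact this

/-- endpoints of an arc are distinct -/
lemma arc_ne {B : Set S2} {x y : S2} (h : IsArcBtw B x y) : x ≠ y := by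
  obtain ⟨γ, _, hi, _, h0, h1⟩ := h
  intro hxy
  have : (0:ℝ) = 1 := hi (by simp) (by simp) (by rw [h0, h1, hxy])
  norm_num at this

lemma arc_mem_left {B : Set S2} {x y : S2} (h : IsArcBtw B x y) : x ∈ B := by
  obtain ⟨γ, _, _, him, h0, _⟩ := h
  exact him ▸ ⟨0, by simp, h0⟩

lemma arc_mem_right {B : Set S2} {x y : S2} (h : IsArcBtw B x y) : y ∈ B := by
  obtain ⟨γ, _, _, him, _, h1⟩ := h
  exact him ▸ ⟨1, by simp, h1⟩

lemma arc_isCompact {B : Set S2} {x y : S2} (h : IsArcBtw B x y) : IsCompact B := by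
  obtain ⟨γ, hc, _, him, _, _⟩ := h
  exact him ▸ isCompact_Icc.image_of_continuousOn hc

lemma arc_isClosed {B : Set S2} {x y : S2} (h : IsArcBtw B x y) : IsClosed B :=
  (arc_isCompact h).isClosed

lemma arc_nonempty {B : Set S2} {x y : S2} (h : IsArcBtw B x y) : B.Nonempty :=
  ⟨x, arc_mem_left h⟩

/-- reversal -/
lemma arc_symm {B : Set S2} {x y : S2} (h : IsArcBtw B x y) : IsArcBtw B y x := by
  obtain ⟨γ, hc, hi, him, h0, h1⟩ := h
  have hmaps : ∀ t ∈ Icc (0:ℝ) 1, 1 - t ∈ Icc (0:ℝ) 1 := by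
    intro t ht; exact ⟨by linarith [ht.2], by linarith [ht.1]⟩
  refine ⟨fun t => γ (1 - t), ?_, ?_, ?_, ?_, ?_⟩
  case refine_4 => show γ (1 - 0) = y; simpa using h1
  case refine_5 => show γ (1 - 1) = x; simpa using h0
  · exact hc.comp (Continuous.continuousOn (by continuity : Continuous fun t : ℝ => 1 - t)) hmaps
  · intro t ht t' ht' hh
    have := hi (hmaps t ht) (hmaps t' ht') hh
    linarith
  · rw [← him]
    ext z
    constructor
    · rintro ⟨t, ht, rfl⟩; exact ⟨1 - t, hmaps t ht, rfl⟩
    · rintro ⟨t, ht, rfl⟩; exact ⟨1 - t, hmaps t ht, by simp⟩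

/-- subarc with increasing parameters -/
lemma subarc {γ : ℝ → S2} (hc : ContinuousOn γ (Icc 0 1)) (hi : InjOn γ (Icc 0 1))
    {c d : ℝ} (hc0 : c ∈ Icc (0:ℝ) 1) (hd0 : d ∈ Icc (0:ℝ) 1) (hcd : c < d) :
    IsArcBtw (γ '' Icc c d) (γ c) (γ d) := by
  have hsub : Icc c d ⊆ Icc (0:ℝ) 1 := Icc_subset_Icc hc0.1 hd0.2
  have hmaps : ∀ t ∈ Icc (0:ℝ) 1, c + t * (d - c) ∈ Icc c d := fun t ht => affine_mem ht hcd.le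
  refine ⟨fun t => γ (c + t * (d - c)), ?_, ?_, ?_, ?_, ?_⟩
  case refine_4 => show γ (c + 0 * (d - c)) = γ c; norm_num
  case refine_5 => show γ (c + 1 * (d - c)) = γ d; norm_num
  · exact (hc.mono hsub).comp (affine_continuous c d).continuousOn hmaps
  · intro t ht t' ht' hh
    exact affine_injOn hcd ((hi.mono hsub) (hmaps t ht) (hmaps t' ht') hh)
  · rw [show (fun t => γ (c + t * (d - c))) = γ ∘ (fun t => c + t * (d - c)) from rfl,
      image_comp, affine_image hcd.le]

/-- subarc between two parameters, any order -/
lemma subarcU {γ : ℝ → S2} (hc : ContinuousOn γ (Icc 0 1)) (hi : InjOn γ (Icc 0 1))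
    {c d : ℝ} (hc0 : c ∈ Icc (0:ℝ) 1) (hd0 : d ∈ Icc (0:ℝ) 1) (hcd : c ≠ d) :
    IsArcBtw (γ '' Icc (min c d) (max c d)) (γ c) (γ d) := by
  rcases lt_or_gt_of_ne hcd with h | h
  · rw [min_eq_left h.le, max_eq_right h.le]; exact subarc hc hi hc0 hd0 h
  · rw [min_eq_right h.le, max_eq_left h.le]; exact arc_symm (subarc hc hi hd0 hc0 h)

/-- a continuous piece of curve joins its endpoints inside its image -/
lemma joined_sub {γ : ℝ → S2} {a b : ℝ} (hc : ContinuousOn γ (Icc a b)) (hab : a ≤ b) :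
    JoinedIn (γ '' Icc a b) (γ a) (γ b) := by
  have hmaps : ∀ t : unitInterval, a + (t:ℝ) * (b - a) ∈ Icc a b :=
    fun t => affine_mem t.2 hab
  refine ⟨⟨⟨fun t => γ (a + (t:ℝ) * (b - a)), ?_⟩, by simp, by simp⟩, ?_⟩
  · exact hc.comp_continuous (by continuity) hmaps
  · intro t; exact ⟨_, hmaps t, rfl⟩

lemma arc_joinedIn {B : Set S2} {x y : S2} (h : IsArcBtw B x y)
    {s : Set S2} (hBs : B ⊆ s) : JoinedIn s x y := by
  obtain ⟨γ, hc, _, him, h0, h1⟩ := h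
  have := joined_sub hc (zero_le_one' ℝ)
  rw [him, h0, h1] at this
  exact this.mono hBs



/-- turn arc data into a bundled path -/
def pathOf {γ : ℝ → S2} (hc : ContinuousOn γ (Icc 0 1)) : Path (γ 0) (γ 1) where
  toFun := fun t => γ t
  continuous_toFun := hc.comp_continuous continuous_subtype_val (fun t => t.2)
  source' := rfl
  target' := rfl

lemma pathOf_range {γ : ℝ → S2} (hc : ContinuousOn γ (Icc 0 1)) :
    range (pathOf hc) = γ '' Icc 0 1 := by
  rw [show range (pathOf hc) = range (fun t : ↥(Icc (0:ℝ) 1) => γ ↑t) from rfl]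
  rw [← image_univ, ← image_image γ Subtype.val, Subtype.coe_image_univ]

/-- concatenation of two arcs meeting only at the common endpoint -/
lemma arc_concat {P Q : Set S2} {x w y : S2} (hP : IsArcBtw P x w) (hQ : IsArcBtw Q w y)
    (hPQ : P ∩ Q ⊆ {w}) : IsArcBtw (P ∪ Q) x y := by
  obtain ⟨γ₁, hc1, hi1, him1, h01, h11⟩ := hP
  obtain ⟨γ₂, hc2, hi2, him2, h02, h12⟩ := hQ
  have hmid : γ₁ 1 = γ₂ 0 := by rw [h11, h02]
  set p : Path (γ₁ 0) (γ₁ 1) := pathOf hc1 with hp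
  set q : Path (γ₁ 1) (γ₂ 1) := (pathOf hc2).cast hmid rfl with hq
  set R : Path (γ₁ 0) (γ₂ 1) := p.trans q with hR
  have happ : ∀ (τ : unitInterval), R τ =
      if (τ:ℝ) ≤ 1 / 2 then γ₁ (2 * τ) else γ₂ (2 * τ - 1) := by
    intro τ
    rw [hR, Path.trans_apply]
    split_ifs <;> rfl
  have hrange : range ⇑R = P ∪ Q := by
    rw [hR, Path.trans_range]
    have h1 : range ⇑p = P := by rw [hp, pathOf_range hc1, him1]
    have h2 : range ⇑q = Q := by
      rw [show ⇑q = ⇑(pathOf hc2) from rfl, pathOf_range hc2, him2]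
    rw [h1, h2]
  have hval : ∀ t (ht : t ∈ Icc (0:ℝ) 1), R.extend t =
      if t ≤ 1 / 2 then γ₁ (2 * t) else γ₂ (2 * t - 1) := by
    intro t ht
    rw [R.extend_apply ht, happ ⟨t, ht⟩]
  have hmem2 : ∀ t : ℝ, t ∈ Icc (0:ℝ) 1 → t ≤ 1/2 → 2 * t ∈ Icc (0:ℝ) 1 := by
    intro t ht h; exact ⟨by linarith [ht.1], by linarith⟩
  have hmem2' : ∀ t : ℝ, t ∈ Icc (0:ℝ) 1 → ¬ (t ≤ 1/2) → 2 * t - 1 ∈ Icc (0:ℝ) 1 := by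
    intro t ht h; push_neg at h; exact ⟨by linarith, by linarith [ht.2]⟩
  refine ⟨R.extend, R.continuous_extend.continuousOn, ?_, ?_, ?_, ?_⟩
  · -- injectivity
    intro t ht t' ht' hh
    rw [hval t ht, hval t' ht'] at hh
    by_cases h : t ≤ 1/2 <;> by_cases h' : t' ≤ 1/2
    · rw [if_pos h, if_pos h'] at hh
      have := hi1 (hmem2 t ht h) (hmem2 t' ht' h') hh
      linarith
    · rw [if_pos h, if_neg h'] at hh
      have hz : γ₁ (2*t) ∈ P ∩ Q := by
        constructor
        · exact him1 ▸ mem_image_of_mem γ₁ (hmem2 t ht h)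
        · exact hh ▸ (him2 ▸ mem_image_of_mem γ₂ (hmem2' t' ht' h'))
      have hzw : γ₁ (2*t) = w := hPQ hz
      have e1 : 2*t = 1 := hi1 (hmem2 t ht h) (by norm_num) (by rw [hzw, h11])
      have e2 : 2*t' - 1 = 0 := hi2 (hmem2' t' ht' h') (by norm_num)
        (by rw [← hh, hzw, h02])
      push_neg at h'
      exfalso; linarith
    · rw [if_neg h, if_pos h'] at hh
      have hz : γ₁ (2*t') ∈ P ∩ Q := by
        constructor
        · exact him1 ▸ mem_image_of_mem γ₁ (hmem2 t' ht' h')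
        · exact hh ▸ (him2 ▸ mem_image_of_mem γ₂ (hmem2' t ht h))
      have hzw : γ₁ (2*t') = w := hPQ hz
      have e1 : 2*t' = 1 := hi1 (hmem2 t' ht' h') (by norm_num) (by rw [hzw, h11])
      have e2 : 2*t - 1 = 0 := hi2 (hmem2' t ht h) (by norm_num)
        (by rw [hh, hzw, h02])
      push_neg at h
      exfalso; linarith
    · rw [if_neg h, if_neg h'] at hh
      have := hi2 (hmem2' t ht h) (hmem2' t' ht' h') hh
      linarith
  · -- image
    rw [← hrange]
    ext z
    constructor
    · rintro ⟨t, ht, rfl⟩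
      rw [R.extend_apply ht]
      exact mem_range_self _
    · rintro ⟨τ, rfl⟩
      exact ⟨↑τ, τ.2, R.extend_extends' τ⟩
  · show R.extend 0 = x
    rw [R.extend_zero]; exact h01
  · show R.extend 1 = y
    rw [R.extend_one]; exact h12



lemma arc_between_points {A : Set S2} (hA : ∃ a b, IsArcBtw A a b) {x z : S2}
    (hx : x ∈ A) (hz : z ∈ A) (hxz : x ≠ z) : ∃ B, B ⊆ A ∧ IsArcBtw B x z := by
  obtain ⟨a, b, γ, hc, hi, him, h0, h1⟩ := hA
  rw [← him] at hx hz
  obtain ⟨cx, hcx, hgx⟩ := hx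
  obtain ⟨cz, hcz, hgz⟩ := hz
  have hne : cx ≠ cz := fun h => hxz (by rw [← hgx, ← hgz, h])
  refine ⟨γ '' Icc (min cx cz) (max cx cz), ?_, ?_⟩
  · rw [← him]
    exact image_mono (f := γ) (Icc_subset_Icc (le_min hcx.1 hcz.1) (max_le hcx.2 hcz.2))
  · rw [← hgx, ← hgz]
    exact subarcU hc hi hcx hcz hne

lemma first_hit {γ : ℝ → S2} (hc : ContinuousOn γ (Icc 0 1)) {A : Set S2} (hA : IsClosed A)
    (hne : ∃ t ∈ Icc (0:ℝ) 1, γ t ∈ A) :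
    ∃ s ∈ Icc (0:ℝ) 1, γ s ∈ A ∧ ∀ t ∈ Icc (0:ℝ) 1, t < s → γ t ∉ A := by
  set S := {t | t ∈ Icc (0:ℝ) 1 ∧ γ t ∈ A} with hS
  have hScl : IsClosed S := by
    have := hc.preimage_isClosed_of_isClosed isClosed_Icc hA
    convert this using 1
    rfl
  have hSne : S.Nonempty := by obtain ⟨t, ht, htA⟩ := hne; exact ⟨t, ht, htA⟩
  have hbdd : BddBelow S := ⟨0, fun t ht => ht.1.1⟩
  have hmem : sInf S ∈ S := hScl.csInf_mem hSne hbdd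
  refine ⟨sInf S, hmem.1, hmem.2, ?_⟩
  intro t ht hlt htA
  exact absurd (csInf_le hbdd ⟨ht, htA⟩) (not_le.mpr hlt)

lemma extend_arc {P A : Set S2} {x v y : S2} (hP : IsArcBtw P x v) (hA : ∃ a b, IsArcBtw A a b)
    (hv : v ∈ A) (hy : y ∈ A) (hyx : y ≠ x) (hyP : y ∉ P) :
    ∃ B, B ⊆ P ∪ A ∧ IsArcBtw B x y := by
  have hAcl : IsClosed A := by obtain ⟨a, b, h⟩ := hA; exact arc_isClosed h
  obtain ⟨γ, hc, hi, him, h0, h1⟩ := hP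
  obtain ⟨s, hsI, hsA, hmin⟩ := first_hit hc hAcl ⟨1, by norm_num, h1 ▸ hv⟩
  by_cases hs0 : s = 0
  · have hxA : x ∈ A := by rw [← h0, ← hs0]; exact hsA
    obtain ⟨B, hBA, hB⟩ := arc_between_points hA hxA hy hyx.symm
    exact ⟨B, hBA.trans subset_union_right, hB⟩
  · have hspos : 0 < s := lt_of_le_of_ne hsI.1 (Ne.symm hs0)
    have hP' : IsArcBtw (γ '' Icc 0 s) x (γ s) := by
      rw [← h0]
      exact subarc hc hi (by norm_num) hsI hspos
    have hwP : γ s ∈ P := him ▸ mem_image_of_mem γ hsI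
    have hwy : γ s ≠ y := fun h => hyP (h ▸ hwP)
    obtain ⟨Q, hQA, hQ⟩ := arc_between_points hA hsA hy hwy
    have hPQ : (γ '' Icc 0 s) ∩ Q ⊆ {γ s} := by
      rintro z ⟨⟨t, htI, rfl⟩, hzQ⟩
      have htI' : t ∈ Icc (0:ℝ) 1 := ⟨htI.1, htI.2.trans hsI.2⟩
      rcases lt_or_eq_of_le htI.2 with h | h
      · exact absurd (hQA hzQ) (hmin t htI' h)
      · rw [h]; rfl
    obtain hB := arc_concat hP' hQ hPQ
    refine ⟨γ '' Icc 0 s ∪ Q, union_subset_union ?_ hQA, hB⟩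
    rw [← him]
    exact image_mono (f := γ) (Icc_subset_Icc le_rfl hsI.2)

lemma chain_reach {n : ℕ} {A : Fin n → Set S2} (hcl : ∀ i, IsClosed (A i))
    (hconn : IsPreconnected (⋃ i, A i)) {i j : Fin n} {x y : S2}
    (hx : x ∈ A i) (hy : y ∈ A j) :
    Relation.ReflTransGen (fun a b => (A a ∩ A b).Nonempty) i j := by
  by_contra hR
  set Rel := Relation.ReflTransGen (fun a b => (A a ∩ A b).Nonempty) with hRel
  set U := ⋃ k ∈ {k | Rel i k}, A k with hU
  set V := ⋃ k ∈ {k | ¬ Rel i k}, A k with hV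
  have hUcl : IsClosed U := (Set.toFinite _).isClosed_biUnion (fun k _ => hcl k)
  have hVcl : IsClosed V := (Set.toFinite _).isClosed_biUnion (fun k _ => hcl k)
  have hdisj : ∀ z, z ∈ U → z ∈ V → False := by
    intro z hzU hzV
    obtain ⟨k, hk, hzk⟩ := mem_iUnion₂.mp hzU
    obtain ⟨l, hl, hzl⟩ := mem_iUnion₂.mp hzV
    exact hl (hk.tail ⟨z, hzk, hzl⟩)
  have hcover : (⋃ m, A m) ⊆ U ∪ V := by
    intro z hz
    obtain ⟨k, hzk⟩ := mem_iUnion.mp hz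
    by_cases h : Rel i k
    · exact Or.inl (mem_iUnion₂.mpr ⟨k, h, hzk⟩)
    · exact Or.inr (mem_iUnion₂.mpr ⟨k, h, hzk⟩)
  obtain ⟨z, hzs, hzVc, hzUc⟩ := hconn Vᶜ Uᶜ hVcl.isOpen_compl hUcl.isOpen_compl
    (fun z hz => by
      rcases hcover hz with h | h
      · exact Or.inl (fun hzV => hdisj z h hzV)
      · exact Or.inr (fun hzU => hdisj z hzU h))
    ⟨x, mem_iUnion.mpr ⟨i, hx⟩, fun hxV => hdisj x (mem_iUnion₂.mpr ⟨i, Relation.ReflTransGen.refl, hx⟩) hxV⟩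
    ⟨y, mem_iUnion.mpr ⟨j, hy⟩, fun hyU => hdisj y hyU (mem_iUnion₂.mpr ⟨j, hR, hy⟩)⟩
  rcases hcover hzs with h | h
  · exact hzUc h
  · exact hzVc h

lemma exists_arc_in_union {n : ℕ} {A : Fin n → Set S2}
    (harc : ∀ i, ∃ a b, IsArcBtw (A i) a b) (hpc : IsPathConnected (⋃ i, A i)) :
    ∀ x ∈ (⋃ i, A i), ∀ y ∈ (⋃ i, A i), x ≠ y → ∃ B, B ⊆ (⋃ i, A i) ∧ IsArcBtw B x y := by
  intro x hx y hy hxy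
  obtain ⟨i, hxi⟩ := mem_iUnion.mp hx
  obtain ⟨j, hyj⟩ := mem_iUnion.mp hy
  have hcl : ∀ k, IsClosed (A k) := fun k => by
    obtain ⟨a, b, h⟩ := harc k; exact arc_isClosed h
  have hreach := chain_reach hcl hpc.isConnected.isPreconnected hxi hyj
  have claim : ∀ k, Relation.ReflTransGen (fun a b => (A a ∩ A b).Nonempty) i k →
      ∀ z ∈ A k, z ≠ x → ∃ B, B ⊆ (⋃ m, A m) ∧ IsArcBtw B x z := by
    intro k hk
    induction hk with
    | refl =>
      intro z hz hzx
      obtain ⟨B, hBA, hB⟩ := arc_between_points (harc i) hxi hz hzx.symm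
      exact ⟨B, hBA.trans (subset_iUnion A i), hB⟩
    | @tail b c h1 h2 ih =>
      intro z hzc hzx
      obtain ⟨v, hvb, hvc⟩ := h2
      by_cases hvx : v = x
      · obtain ⟨B, hBA, hB⟩ := arc_between_points (harc c) (hvx ▸ hvc) hzc hzx.symm
        exact ⟨B, hBA.trans (subset_iUnion A c), hB⟩
      · obtain ⟨P, hPsub, hP⟩ := ih v hvb hvx
        by_cases hzP : z ∈ P
        · obtain ⟨B, hBP, hB⟩ := arc_between_points ⟨x, v, hP⟩ (arc_mem_left hP) hzP hzx.symm
          exact ⟨B, hBP.trans hPsub, hB⟩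
        · obtain ⟨B, hBP, hB⟩ := extend_arc hP (harc c) hvc hzc hzx hzP
          exact ⟨B, hBP.trans (union_subset hPsub (subset_iUnion A c)), hB⟩
  rcases claim j hreach y hyj hxy.symm with ⟨B, h1, h2⟩
  exact ⟨B, h1, h2⟩

lemma exists_arcHomeo {γ : ℝ → S2} (hc : ContinuousOn γ (Icc 0 1)) (hi : InjOn γ (Icc 0 1)) :
    ∃ H : ↥(Icc (0:ℝ) 1) ≃ₜ ↥(γ '' Icc 0 1), ∀ t, (H t : S2) = γ ↑t := by
  haveI : CompactSpace ↥(Icc (0:ℝ) 1) := isCompact_iff_compactSpace.mp isCompact_Icc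
  have hfc : Continuous (fun t : ↥(Icc (0:ℝ) 1) => (⟨γ ↑t, mem_image_of_mem γ t.2⟩ : ↥(γ '' Icc 0 1))) :=
    Continuous.subtype_mk (hc.comp_continuous continuous_subtype_val fun t => t.2) _
  have hbij : Function.Bijective (fun t : ↥(Icc (0:ℝ) 1) => (⟨γ ↑t, mem_image_of_mem γ t.2⟩ : ↥(γ '' Icc 0 1))) := by
    constructor
    · intro t t' h
      exact Subtype.ext (hi t.2 t'.2 (congrArg Subtype.val h))
    · rintro ⟨z, t, ht, rfl⟩
      exact ⟨⟨t, ht⟩, rfl⟩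
  have hfc' : Continuous ⇑(Equiv.ofBijective _ hbij) := hfc
  exact ⟨hfc'.homeoOfEquivCompactToT2, fun t => rfl⟩

lemma arc_subset_eq {B C : Set S2} {x y : S2} (hB : IsArcBtw B x y) (hC : IsArcBtw C x y)
    (hCB : C ⊆ B) : C = B := by
  obtain ⟨θ, hc, hi, him, h0, h1⟩ := hB
  obtain ⟨γ, hc', hi', him', h0', h1'⟩ := hC
  obtain ⟨H, hH⟩ := exists_arcHomeo hc hi
  haveI : PreconnectedSpace ↥(Icc (0:ℝ) 1) := Subtype.preconnectedSpace isPreconnected_Icc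
  have hmemB : ∀ t : ↥(Icc (0:ℝ) 1), γ ↑t ∈ θ '' Icc 0 1 := by
    intro t
    rw [him]
    exact hCB (him' ▸ mem_image_of_mem γ t.2)
  set m : ↥(Icc (0:ℝ) 1) → ℝ := fun t => ↑(H.symm ⟨γ ↑t, hmemB t⟩) with hm
  have hmc : Continuous m := continuous_subtype_val.comp (H.symm.continuous.comp
    (Continuous.subtype_mk (hc'.comp_continuous continuous_subtype_val fun t => t.2) _))
  have hmI : ∀ t, m t ∈ Icc (0:ℝ) 1 := fun t => (H.symm ⟨γ ↑t, hmemB t⟩).2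
  have hmval : ∀ t : ↥(Icc (0:ℝ) 1), θ (m t) = γ ↑t := by
    intro t
    have h2 := hH (H.symm ⟨γ ↑t, hmemB t⟩)
    rw [Homeomorph.apply_symm_apply] at h2
    exact h2.symm
  have e0 : m ⟨0, by norm_num⟩ = 0 := by
    apply hi (hmI _) (by norm_num)
    rw [hmval]
    show γ (0:ℝ) = θ 0
    rw [h0', h0]
  have e1 : m ⟨1, by norm_num⟩ = 1 := by
    apply hi (hmI _) (by norm_num)
    rw [hmval]
    show γ (1:ℝ) = θ 1
    rw [h1', h1]
  have hsub : Icc (0:ℝ) 1 ⊆ range m :=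
    (isPreconnected_range hmc).Icc_subset ⟨_, e0⟩ ⟨_, e1⟩
  refine le_antisymm hCB ?_
  intro z hz
  rw [← him] at hz
  obtain ⟨s, hs, rfl⟩ := hz
  obtain ⟨t, rfl⟩ := hsub hs
  rw [hmval, ← him']
  exact mem_image_of_mem γ t.2

lemma ja {P : Set S2} {a b : S2} (h : IsArcBtw P a b) {p q : S2} (hq : q ∈ P) (hqp : q ≠ p) :
    (p ≠ a ∧ JoinedIn (P \ {p}) q a) ∨ (p ≠ b ∧ JoinedIn (P \ {p}) q b) := by
  obtain ⟨γ, hc, hi, him, h0, h1⟩ := h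
  rw [← him] at hq
  obtain ⟨c, hcI, hgc⟩ := hq
  by_cases hpP : p ∈ P
  · rw [← him] at hpP
    obtain ⟨e, heI, hge⟩ := hpP
    have hce : c ≠ e := fun h => hqp (by rw [← hgc, ← hge, h])
    rcases lt_or_gt_of_ne hce with hlt | hgt
    · left
      have he0 : e ≠ 0 := fun h => absurd (h ▸ hlt) (not_lt.mpr hcI.1)
      constructor
      · rw [← hge, ← h0]
        exact fun h => he0 (hi heI (by norm_num) h)
      · have hsub2 : γ '' Icc 0 c ⊆ P \ {p} := by
          rintro z ⟨t, htI, rfl⟩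
          have htI' : t ∈ Icc (0:ℝ) 1 := ⟨htI.1, htI.2.trans hcI.2⟩
          refine ⟨him ▸ mem_image_of_mem γ htI', ?_⟩
          simp only [mem_singleton_iff]
          rw [← hge]
          exact fun h => absurd (hi htI' heI h ▸ htI.2) (not_le.mpr hlt)
        rw [← hgc, ← h0]
        exact ((joined_sub (hc.mono (Icc_subset_Icc le_rfl hcI.2)) hcI.1).mono hsub2).symm
    · right
      have he1 : e ≠ 1 := fun h => absurd (h ▸ hgt) (not_lt.mpr hcI.2)
      constructor
      · rw [← hge, ← h1]
        exact fun h => he1 (hi heI (by norm_num) h)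
      · have hsub2 : γ '' Icc c 1 ⊆ P \ {p} := by
          rintro z ⟨t, htI, rfl⟩
          have htI' : t ∈ Icc (0:ℝ) 1 := ⟨hcI.1.trans htI.1, htI.2⟩
          refine ⟨him ▸ mem_image_of_mem γ htI', ?_⟩
          simp only [mem_singleton_iff]
          rw [← hge]
          exact fun h => absurd (hi htI' heI h ▸ htI.1) (not_le.mpr hgt)
        have hjoin := joined_sub (hc.mono (Icc_subset_Icc hcI.1 le_rfl)) hcI.2
        rw [← hgc, ← h1]
        exact hjoin.mono hsub2
  · left
    have haP : a ∈ P := him ▸ ⟨0, by norm_num, h0⟩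
    refine ⟨fun h => hpP (h ▸ haP), ?_⟩
    have hsub2 : γ '' Icc 0 c ⊆ P \ {p} := by
      rintro z ⟨t, htI, rfl⟩
      have htI' : t ∈ Icc (0:ℝ) 1 := ⟨htI.1, htI.2.trans hcI.2⟩
      exact ⟨him ▸ mem_image_of_mem γ htI', fun h => hpP (h ▸ (him ▸ mem_image_of_mem γ htI'))⟩
    rw [← hgc, ← h0]
    exact ((joined_sub (hc.mono (Icc_subset_Icc le_rfl hcI.2)) hcI.1).mono hsub2).symm

lemma exists_arc_zip {Z : Set S2}
    (hT : ∃ T : ℕ → Set S2, Monotone T ∧ (∀ n, IsFiniteTree (T n)) ∧ Z = ⋃ n, T n) :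
    ∀ x ∈ Z, ∀ y ∈ Z, x ≠ y → ∃ B, B ⊆ Z ∧ IsArcBtw B x y := by
  obtain ⟨T, hmono, htree, hZ⟩ := hT
  subst hZ
  intro x hx y hy hxy
  obtain ⟨na, hxa⟩ := mem_iUnion.mp hx
  obtain ⟨nb, hyb⟩ := mem_iUnion.mp hy
  have hxn : x ∈ T (max na nb) := hmono (le_max_left _ _) hxa
  have hyn : y ∈ T (max na nb) := hmono (le_max_right _ _) hyb
  rcases htree (max na nb) with ⟨z, hz⟩ | ⟨_, hpc, ⟨k, A, harc, hTeq⟩, _⟩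
  · rw [hz, mem_singleton_iff] at hxn hyn
    exact absurd (hxn.trans hyn.symm) hxy
  · rw [hTeq] at hxn hyn hpc
    obtain ⟨B, hBsub, hB⟩ := exists_arc_in_union harc hpc x hxn y hyn hxy
    refine ⟨B, hBsub.trans ?_, hB⟩
    rw [← hTeq]
    exact subset_iUnion T (max na nb)

lemma mem_diff_singleton {Z : Set S2} {z p : S2} (hz : z ∈ Z) (h : z ≠ p) : z ∈ Z \ {p} :=
  ⟨hz, by simpa using h⟩

lemma subset_diff_singleton' {P Z : Set S2} {p : S2} (hPZ : P ⊆ Z) (hp : p ∉ P) :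
    P ⊆ Z \ {p} :=
  fun z hz => mem_diff_singleton (hPZ hz) (fun h => hp (h ▸ hz))

lemma circle_join {Z D E : Set S2} {a b : S2} (hD : IsArcBtw D a b) (hE : IsArcBtw E a b)
    (hDZ : D ⊆ Z) (hEZ : E ⊆ Z) (hcap : D ∩ E ⊆ {a, b}) :
    ∀ p ∈ D ∪ E, ∀ q ∈ D ∪ E, q ≠ p → ∀ q' ∈ D ∪ E, q' ≠ p → JoinedIn (Z \ {p}) q q' := by
  intro p _hp
  suffices h : ∃ r, ∀ q ∈ D ∪ E, q ≠ p → JoinedIn (Z \ {p}) q r by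
    obtain ⟨r, hall⟩ := h
    intro q hq hqp q' hq' hq'p
    exact (hall q hq hqp).trans (hall q' hq' hq'p).symm
  have key : ∀ P, P ⊆ Z → IsArcBtw P a b → ∀ q ∈ P, q ≠ p →
      (p ≠ a ∧ JoinedIn (Z \ {p}) q a) ∨ (p ≠ b ∧ JoinedIn (Z \ {p}) q b) := by
    intro P hPZ hP q hq hqp
    rcases ja hP hq hqp with ⟨h1, h2⟩ | ⟨h1, h2⟩
    · exact Or.inl ⟨h1, h2.mono (diff_subset_diff_left hPZ)⟩
    · exact Or.inr ⟨h1, h2.mono (diff_subset_diff_left hPZ)⟩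
  by_cases hpa : p = a
  · refine ⟨b, ?_⟩
    intro q hq hqp
    rcases hq with hqD | hqE
    · rcases key D hDZ hD q hqD hqp with ⟨h1, _⟩ | ⟨_, h2⟩
      · exact absurd hpa h1
      · exact h2
    · rcases key E hEZ hE q hqE hqp with ⟨h1, _⟩ | ⟨_, h2⟩
      · exact absurd hpa h1
      · exact h2
  · by_cases hpb : p = b
    · refine ⟨a, ?_⟩
      intro q hq hqp
      rcases hq with hqD | hqE
      · rcases key D hDZ hD q hqD hqp with ⟨_, h2⟩ | ⟨h1, _⟩
        · exact h2
        · exact absurd hpb h1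
      · rcases key E hEZ hE q hqE hqp with ⟨_, h2⟩ | ⟨h1, _⟩
        · exact h2
        · exact absurd hpb h1
    · have habj : JoinedIn (Z \ {p}) a b := by
        by_cases hpD : p ∈ D
        · have hpE : p ∉ E := by
            intro hpE
            rcases hcap ⟨hpD, hpE⟩ with h | h
            · exact hpa h
            · exact hpb h
          exact arc_joinedIn hE (subset_diff_singleton' hEZ hpE)
        · exact arc_joinedIn hD (subset_diff_singleton' hDZ hpD)
      refine ⟨a, ?_⟩
      intro q hq hqp
      rcases hq with hqD | hqE
      · rcases key D hDZ hD q hqD hqp with ⟨_, h2⟩ | ⟨_, h2⟩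
        · exact h2
        · exact h2.trans habj.symm
      · rcases key E hEZ hE q hqE hqp with ⟨_, h2⟩ | ⟨_, h2⟩
        · exact h2
        · exact h2.trans habj.symm

lemma private_point {Z D E : Set S2} {a b : S2} (hD : IsArcBtw D a b) (hE : IsArcBtw E a b)
    (hDZ : D ⊆ Z) (hEZ : E ⊆ Z) (hcap : D ∩ E ⊆ {a, b})
    (hcut : ∀ p ∈ Z, IsCutPt Z p) :
    ∀ p ∈ D ∪ E, ∃ z, z ∈ Z ∧ z ≠ p ∧ ∀ q ∈ D ∪ E, q ≠ p → ¬ JoinedIn (Z \ {p}) z q := by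
  intro p hp
  have hab : a ≠ b := arc_ne hD
  have haJ : a ∈ D ∪ E := Or.inl (arc_mem_left hD)
  have hbJ : b ∈ D ∪ E := Or.inl (arc_mem_right hD)
  have hpZ : p ∈ Z := by
    rcases hp with h | h
    · exact hDZ h
    · exact hEZ h
  obtain ⟨α, hα, β, hβ, hnj⟩ := hcut p hpZ
  have jc := circle_join hD hE hDZ hEZ hcap p hp
  by_cases hpa : p = a
  · -- use q0 = b
    have hq0 : b ≠ p := fun h => hab (hpa ▸ h.symm)
    by_cases h1 : JoinedIn (Z \ {p}) α b
    · by_cases h2 : JoinedIn (Z \ {p}) β b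
      · exact absurd (h1.trans h2.symm) hnj
      · refine ⟨β, hβ.1, by simpa using hβ.2, ?_⟩
        intro q hq hqp hjoin
        exact h2 (hjoin.trans (jc q hq hqp b hbJ hq0))
    · refine ⟨α, hα.1, by simpa using hα.2, ?_⟩
      intro q hq hqp hjoin
      exact h1 (hjoin.trans (jc q hq hqp b hbJ hq0))
  · -- use q0 = a
    have hq0 : a ≠ p := fun h => hpa h.symm
    by_cases h1 : JoinedIn (Z \ {p}) α a
    · by_cases h2 : JoinedIn (Z \ {p}) β a
      · exact absurd (h1.trans h2.symm) hnj
      · refine ⟨β, hβ.1, by simpa using hβ.2, ?_⟩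
        intro q hq hqp hjoin
        exact h2 (hjoin.trans (jc q hq hqp a haJ hq0))
    · refine ⟨α, hα.1, by simpa using hα.2, ?_⟩
      intro q hq hqp hjoin
      exact h1 (hjoin.trans (jc q hq hqp a haJ hq0))

lemma private_arc {Z : Set S2}
    (exA : ∀ x ∈ Z, ∀ y ∈ Z, x ≠ y → ∃ B, B ⊆ Z ∧ IsArcBtw B x y)
    {J : Set S2} (hJZ : J ⊆ Z) {p z : S2} (hpZ : p ∈ Z)
    (hzZ : z ∈ Z) (hzp : z ≠ p) (hzprop : ∀ q ∈ J, q ≠ p → ¬ JoinedIn (Z \ {p}) z q) :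
    ∃ M : Set S2, M ⊆ Z ∧ (∃ c d, IsArcBtw M c d) ∧
      ∀ v ∈ M, v ≠ p ∧ ∀ q ∈ J, q ≠ p → ¬ JoinedIn (Z \ {p}) v q := by
  obtain ⟨R, hRZ, hR⟩ := exA z hzZ p hpZ hzp
  obtain ⟨η, hηc, hηi, hηim, hη0, hη1⟩ := hR
  have hhalf : (1/2 : ℝ) ∈ Icc (0:ℝ) 1 := by norm_num
  refine ⟨η '' Icc 0 (1/2), ?_, ⟨_, _, subarc hηc hηi (by norm_num) hhalf (by norm_num)⟩, ?_⟩
  · intro v hv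
    apply hRZ
    rw [← hηim]
    exact image_mono (f := η) (Icc_subset_Icc le_rfl (by norm_num)) hv
  · rintro v ⟨t, htI, rfl⟩
    have htI' : t ∈ Icc (0:ℝ) 1 := ⟨htI.1, htI.2.trans (by norm_num)⟩
    have hvp : η t ≠ p := by
      rw [← hη1]
      intro h
      have := hηi htI' (by norm_num) h
      rw [this] at htI
      linarith [htI.2]
    refine ⟨hvp, ?_⟩
    intro q hq hqp hjoin
    apply hzprop q hq hqp
    have hsubZ : η '' Icc 0 t ⊆ Z \ {p} := by
      rintro z' ⟨r, hrI, rfl⟩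
      have hrI' : r ∈ Icc (0:ℝ) 1 := ⟨hrI.1, hrI.2.trans htI'.2⟩
      refine mem_diff_singleton (hRZ (hηim ▸ mem_image_of_mem η hrI')) ?_
      rw [← hη1]
      intro h
      have := hηi hrI' (by norm_num) h
      rw [this] at hrI
      have : t < 1 := lt_of_le_of_lt htI.2 (by norm_num)
      linarith [hrI.2]
    have hjz : JoinedIn (Z \ {p}) z (η t) := by
      rw [← hη0]
      exact (joined_sub (hηc.mono (Icc_subset_Icc le_rfl htI'.2)) htI.1).mono hsubZ
    exact hjz.trans hjoin

lemma private_disj {Z : Set S2}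
    (exA : ∀ x ∈ Z, ∀ y ∈ Z, x ≠ y → ∃ B, B ⊆ Z ∧ IsArcBtw B x y)
    {J : Set S2} (hJZ : J ⊆ Z) {p p' : S2} (hp : p ∈ J) (hp' : p' ∈ J) (hne : p ≠ p')
    {v : S2} (hvZ : v ∈ Z)
    (hnj : ∀ q ∈ J, q ≠ p → ¬ JoinedIn (Z \ {p}) v q)
    (hnj' : ∀ q ∈ J, q ≠ p' → ¬ JoinedIn (Z \ {p'}) v q)
    (hvp : v ≠ p) (hvp' : v ≠ p') : False := by
  obtain ⟨G, hGZ, hG⟩ := exA v hvZ p' (hJZ hp') hvp'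
  have hpG : p ∈ G := by
    by_contra hpG
    exact hnj p' hp' (Ne.symm hne) (arc_joinedIn hG (subset_diff_singleton' hGZ hpG))
  obtain ⟨g, hgc, hgi, hgim, hg0, hg1⟩ := hG
  rw [← hgim] at hpG
  obtain ⟨e, heI, hge⟩ := hpG
  have he1 : e < 1 := by
    rcases lt_or_eq_of_le heI.2 with h | h
    · exact h
    · exfalso; apply hne; rw [← hge, h, hg1]
  have he0 : 0 < e := by
    rcases lt_or_eq_of_le heI.1 with h | h
    · exact h
    · exfalso; apply hvp; rw [← hg0, h, hge]
  have hsub : g '' Icc 0 e ⊆ Z \ {p'} := by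
    rintro z' ⟨r, hrI, rfl⟩
    have hrI' : r ∈ Icc (0:ℝ) 1 := ⟨hrI.1, hrI.2.trans heI.2⟩
    refine mem_diff_singleton (hGZ (hgim ▸ mem_image_of_mem g hrI')) ?_
    rw [← hg1]
    intro h
    have := hgi hrI' (by norm_num) h
    rw [this] at hrI
    linarith [hrI.2]
  apply hnj' p hp hne
  have : JoinedIn (Z \ {p'}) v p := by
    rw [← hg0, ← hge]
    exact (joined_sub (hgc.mono (Icc_subset_Icc le_rfl heI.2)) heI.1).mono hsub
  exact this

lemma baire_pick {Z M : Set S2} (hMZ : M ⊆ Z) (hMarc : ∃ c d, IsArcBtw M c d)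
    {F : ℕ → Set S2} (hFcl : ∀ k, IsClosed (F k)) (hFcov : Z ⊆ ⋃ k, F k)
    (hFarc : ∀ k, ∀ c d : S2, c ∈ F k → d ∈ F k → c ≠ d → ∃ a b, IsArcBtw (F k) a b)
    {θF : ℕ → ℝ → S2}
    (hθF : ∀ k, (∃ a b, IsArcBtw (F k) a b) →
      ContinuousOn (θF k) (Icc 0 1) ∧ InjOn (θF k) (Icc 0 1) ∧ θF k '' Icc 0 1 = F k) :
    ∃ kq : ℕ × ℚ, θF kq.1 ((kq.2 : ℚ) : ℝ) ∈ M := by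
  obtain ⟨cM, dM, ζ, hζc, hζi, hζim, hζ0, hζ1⟩ := hMarc
  subst hζim
  haveI : CompactSpace ↥(ζ '' Icc 0 1) :=
    isCompact_iff_compactSpace.mp (isCompact_Icc.image_of_continuousOn hζc)
  haveI : Nonempty ↥(ζ '' Icc 0 1) := ⟨⟨ζ 0, mem_image_of_mem ζ (by norm_num)⟩⟩
  have hcl : ∀ k : ℕ, IsClosed (Subtype.val ⁻¹' F k : Set ↥(ζ '' Icc 0 1)) :=
    fun k => (hFcl k).preimage continuous_subtype_val
  have hcov : (⋃ k, (Subtype.val ⁻¹' F k : Set ↥(ζ '' Icc 0 1))) = univ := by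
    ext v
    simp only [mem_iUnion, mem_univ, iff_true, mem_preimage]
    exact mem_iUnion.mp (hFcov (hMZ v.2))
  obtain ⟨k, hkne⟩ := nonempty_interior_of_iUnion_of_closed hcl hcov
  obtain ⟨w0, hw0⟩ := hkne
  obtain ⟨Hζ, hHζ⟩ := exists_arcHomeo hζc hζi
  have hu0 : Hζ.symm w0 ∈ Hζ ⁻¹' interior (Subtype.val ⁻¹' F k) := by
    simp only [mem_preimage, Homeomorph.apply_symm_apply]
    exact hw0
  have hOopen : IsOpen (Hζ ⁻¹' interior (Subtype.val ⁻¹' F k)) :=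
    isOpen_interior.preimage Hζ.continuous
  obtain ⟨U, hUopen, hUeq⟩ := isOpen_induced_iff.mp hOopen
  set τ : ℝ := ↑(Hζ.symm w0) with hτ
  have hτU : τ ∈ U := by
    have : Hζ.symm w0 ∈ Subtype.val ⁻¹' U := hUeq ▸ hu0
    exact this
  obtain ⟨ε, hε, hball⟩ := Metric.isOpen_iff.mp hUopen _ hτU
  have hτI : τ ∈ Icc (0:ℝ) 1 := (Hζ.symm w0).2
  set c := max 0 (τ - ε/2) with hcdef
  set d := min 1 (τ + ε/2) with hddef
  have hcd : c < d := by
    apply max_lt <;> apply lt_min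
    · norm_num
    · linarith [hτI.1]
    · linarith [hτI.2]
    · linarith
  have hsubU : ∀ t ∈ Icc c d, t ∈ Icc (0:ℝ) 1 ∧ ζ t ∈ F k := by
    intro t ht
    have htc : τ - ε/2 ≤ t := le_trans (le_max_right 0 _) ht.1
    have htd : t ≤ τ + ε/2 := le_trans ht.2 (min_le_right 1 _)
    have htI : t ∈ Icc (0:ℝ) 1 :=
      ⟨le_trans (le_max_left 0 _) ht.1, le_trans ht.2 (min_le_left 1 _)⟩
    have htU : t ∈ U := by
      apply hball
      rw [Metric.mem_ball, Real.dist_eq, abs_lt]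
      constructor <;> linarith
    have hmem1 : (⟨t, htI⟩ : ↥(Icc (0:ℝ) 1)) ∈ Subtype.val ⁻¹' U := htU
    have hmem2 : (⟨t, htI⟩ : ↥(Icc (0:ℝ) 1)) ∈ Hζ ⁻¹' interior (Subtype.val ⁻¹' F k) :=
      hUeq ▸ hmem1
    have h3' : Hζ ⟨t, htI⟩ ∈ (Subtype.val ⁻¹' F k : Set ↥(ζ '' Icc 0 1)) :=
      interior_subset (hmem2 : Hζ ⟨t, htI⟩ ∈ interior (Subtype.val ⁻¹' F k))
    have h3 : (Hζ ⟨t, htI⟩ : S2) ∈ F k := h3'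
    rw [hHζ ⟨t, htI⟩] at h3
    exact ⟨htI, h3⟩
  have hcmem := hsubU c ⟨le_rfl, hcd.le⟩
  have hdmem := hsubU d ⟨hcd.le, le_rfl⟩
  have hζcd : ζ c ≠ ζ d := by
    intro h
    have := hζi hcmem.1 hdmem.1 h
    rw [this] at hcd
    exact lt_irrefl d hcd
  obtain ⟨hθc, hθi, hθim⟩ := hθF k (hFarc k (ζ c) (ζ d) hcmem.2 hdmem.2 hζcd)
  obtain ⟨Hθ, hHθ⟩ := exists_arcHomeo hθc hθi
  haveI : PreconnectedSpace ↥(Icc c d) := Subtype.preconnectedSpace isPreconnected_Icc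
  have hmem : ∀ t : ↥(Icc c d), ζ ↑t ∈ θF k '' Icc 0 1 := fun t => hθim ▸ (hsubU ↑t t.2).2
  set mm : ↥(Icc c d) → ℝ := fun t => ↑(Hθ.symm ⟨ζ ↑t, hmem t⟩) with hmm
  have hmmc : Continuous mm := by
    apply continuous_subtype_val.comp
    apply Hθ.symm.continuous.comp
    apply Continuous.subtype_mk
    exact hζc.comp_continuous continuous_subtype_val (fun t => (hsubU ↑t t.2).1)
  have hmmval : ∀ t, θF k (mm t) = ζ ↑t := by
    intro t
    have h2 := hHθ (Hθ.symm ⟨ζ ↑t, hmem t⟩)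
    rw [Homeomorph.apply_symm_apply] at h2
    exact h2.symm
  set tc : ↥(Icc c d) := ⟨c, ⟨le_rfl, hcd.le⟩⟩ with htc
  set td : ↥(Icc c d) := ⟨d, ⟨hcd.le, le_rfl⟩⟩ with htd
  have hne2 : mm tc ≠ mm td := by
    intro h
    apply hζcd
    rw [← hmmval tc, ← hmmval td, h]
  obtain ⟨q, hq1, hq2⟩ := exists_rat_btwn (min_lt_max.mpr hne2)
  have hsub2 : Icc (min (mm tc) (mm td)) (max (mm tc) (mm td)) ⊆ range mm := by
    apply (isPreconnected_range hmmc).Icc_subset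
    · rcases min_choice (mm tc) (mm td) with h | h <;> rw [h] <;> exact mem_range_self _
    · rcases max_choice (mm tc) (mm td) with h | h <;> rw [h] <;> exact mem_range_self _
  obtain ⟨t1, ht1⟩ := hsub2 ⟨hq1.le, hq2.le⟩
  refine ⟨(k, q), ?_⟩
  show θF k ((q:ℚ):ℝ) ∈ ζ '' Icc 0 1
  rw [← ht1, hmmval t1]
  exact mem_image_of_mem ζ (hsubU ↑t1 t1.2).1

lemma family_of_trees {Z : Set S2}
    (hT : ∃ T : ℕ → Set S2, Monotone T ∧ (∀ n, IsFiniteTree (T n)) ∧ Z = ⋃ n, T n) :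
    ∃ F : ℕ → Set S2, (∀ k, IsClosed (F k)) ∧
      (∀ k, ∀ c d : S2, c ∈ F k → d ∈ F k → c ≠ d → ∃ a b, IsArcBtw (F k) a b) ∧
      Z ⊆ ⋃ k, F k := by
  obtain ⟨T, hmono, htree, hZ⟩ := hT
  have hper : ∀ n, ∃ G : ℕ → Set S2, (∀ i, IsClosed (G i)) ∧
      (∀ i, ∀ c d : S2, c ∈ G i → d ∈ G i → c ≠ d → ∃ a b, IsArcBtw (G i) a b) ∧
      T n ⊆ ⋃ i, G i := by
    intro n
    rcases htree n with ⟨pt, hpt⟩ | ⟨_, _, ⟨k, A, harc, hTeq⟩, _⟩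
    · refine ⟨fun _ => {pt}, fun _ => isClosed_singleton, ?_, ?_⟩
      · intro i c d hc hd hcd
        rw [mem_singleton_iff] at hc hd
        exact absurd (hc.trans hd.symm) hcd
      · rw [hpt]
        exact subset_iUnion (fun _ : ℕ => ({pt} : Set S2)) 0
    · refine ⟨fun i => if h : i < k then A ⟨i, h⟩ else ∅, ?_, ?_, ?_⟩
      · intro i
        by_cases h : i < k
        · simp only [dif_pos h]
          obtain ⟨a, b, ha⟩ := harc ⟨i, h⟩
          exact arc_isClosed ha
        · simp only [dif_neg h]; exact isClosed_empty
      · intro i c d hc hd hcd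
        by_cases h : i < k
        · simp only [dif_pos h]
          exact harc ⟨i, h⟩
        · simp only [dif_neg h] at hc
          exact absurd hc (notMem_empty c)
      · rw [hTeq]
        rintro z hz
        obtain ⟨i, hzi⟩ := mem_iUnion.mp hz
        refine mem_iUnion.mpr ⟨i.val, ?_⟩
        rw [dif_pos i.isLt]
        simpa using hzi
  choose G hGcl hGarc hGcov using hper
  refine ⟨fun m => G m.unpair.1 m.unpair.2, fun m => hGcl _ _, fun m => hGarc _ _, ?_⟩
  rw [hZ]
  rintro z hz
  obtain ⟨n, hzn⟩ := mem_iUnion.mp hz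
  obtain ⟨i, hzi⟩ := mem_iUnion.mp (hGcov n hzn)
  refine mem_iUnion.mpr ⟨Nat.pair n i, ?_⟩
  rw [Nat.unpair_pair]
  exact hzi

lemma unique_arc {Z : Set S2}
    (hT : ∃ T : ℕ → Set S2, Monotone T ∧ (∀ n, IsFiniteTree (T n)) ∧ Z = ⋃ n, T n)
    (hcut : ∀ p ∈ Z, IsCutPt Z p) {x y : S2} {B C : Set S2} (hBZ : B ⊆ Z) (hCZ : C ⊆ Z)
    (hB : IsArcBtw B x y) (hC : IsArcBtw C x y) : C = B := by
  have exA := exists_arc_zip hT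
  by_contra hne
  obtain ⟨w, hwC, hwB⟩ := not_subset.mp (fun h => hne (arc_subset_eq hB hC h))
  have hxB : x ∈ B := arc_mem_left hB
  have hyB : y ∈ B := arc_mem_right hB
  have hBcl : IsClosed B := arc_isClosed hB
  obtain ⟨γ, hγc, hγi, hγim, hγ0, hγ1⟩ := id hC
  rw [← hγim] at hwC
  obtain ⟨tw, htwI, hγtw⟩ := hwC
  -- last entry into B before tw
  set SL := {t | t ∈ Icc 0 tw ∧ γ t ∈ B} with hSL
  have hSLcl : IsClosed SL := by
    have := (hγc.mono (Icc_subset_Icc le_rfl htwI.2)).preimage_isClosed_of_isClosed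
      isClosed_Icc hBcl
    convert this using 1
    rfl
  have hSLne : SL.Nonempty := ⟨0, ⟨le_refl 0, htwI.1⟩, hγ0.symm ▸ hxB⟩
  have hbddL : BddAbove SL := ⟨tw, fun t ht => ht.1.2⟩
  set s := sSup SL with hs
  have hsS : s ∈ SL := hSLcl.csSup_mem hSLne hbddL
  have hstw : s < tw :=
    lt_of_le_of_ne hsS.1.2 (fun h => hwB (by rw [← hγtw, ← h]; exact hsS.2))
  -- first entry into B after tw
  set SR := {t | t ∈ Icc tw 1 ∧ γ t ∈ B} with hSR
  have hSRcl : IsClosed SR := by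
    have := (hγc.mono (Icc_subset_Icc htwI.1 le_rfl)).preimage_isClosed_of_isClosed
      isClosed_Icc hBcl
    convert this using 1
    rfl
  have hSRne : SR.Nonempty := ⟨1, ⟨htwI.2, le_refl 1⟩, hγ1.symm ▸ hyB⟩
  have hbddR : BddBelow SR := ⟨tw, fun t ht => ht.1.1⟩
  set u := sInf SR with hu
  have huS : u ∈ SR := hSRcl.csInf_mem hSRne hbddR
  have htwu : tw < u :=
    lt_of_le_of_ne huS.1.1 (fun h => hwB (by rw [← hγtw, h]; exact huS.2))
  have hsI : s ∈ Icc (0:ℝ) 1 := ⟨hsS.1.1, le_trans hsS.1.2 htwI.2⟩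
  have huI : u ∈ Icc (0:ℝ) 1 := ⟨le_trans htwI.1 huS.1.1, huS.1.2⟩
  have hsu : s < u := hstw.trans htwu
  have hmid : ∀ t, s < t → t < u → γ t ∉ B := by
    intro t h1 h2 htB
    by_cases h : t ≤ tw
    · exact absurd (le_csSup hbddL ⟨⟨le_trans hsS.1.1 h1.le, h⟩, htB⟩) (not_le.mpr h1)
    · push_neg at h
      exact absurd (csInf_le hbddR ⟨⟨h.le, h2.le.trans huI.2⟩, htB⟩) (not_le.mpr h2)
  set a := γ s with ha
  set b := γ u with hb
  have hab : a ≠ b := fun h => absurd (hγi hsI huI h) (ne_of_lt hsu)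
  set D := γ '' Icc s u with hDdef
  have hD : IsArcBtw D a b := subarc hγc hγi hsI huI hsu
  have hDZ : D ⊆ Z := fun z hz =>
    hCZ (hγim ▸ image_mono (f := γ) (Icc_subset_Icc hsI.1 huI.2) hz)
  obtain ⟨θ, hθc, hθi, hθim, hθ0, hθ1⟩ := id hB
  have haB : a ∈ θ '' Icc 0 1 := by rw [hθim]; exact hsS.2
  have hbB : b ∈ θ '' Icc 0 1 := by rw [hθim]; exact huS.2
  obtain ⟨ca, hcaI, hθca⟩ := haB
  obtain ⟨cb, hcbI, hθcb⟩ := hbB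
  have hcab : ca ≠ cb := fun h => hab (by rw [← hθca, ← hθcb, h])
  set E := θ '' Icc (min ca cb) (max ca cb) with hEdef
  have hE : IsArcBtw E a b := by
    have := subarcU hθc hθi hcaI hcbI hcab
    rwa [hθca, hθcb] at this
  have hEB : E ⊆ B :=
    hθim ▸ image_mono (f := θ) (Icc_subset_Icc (le_min hcaI.1 hcbI.1) (max_le hcaI.2 hcbI.2))
  have hcap : D ∩ E ⊆ {a, b} := by
    rintro z ⟨⟨t, htI, rfl⟩, hzE⟩
    have hzB : γ t ∈ B := hEB hzE
    rcases eq_or_lt_of_le htI.1 with h | h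
    · left; rw [← h]
    · rcases eq_or_lt_of_le htI.2 with h2 | h2
      · right; rw [h2]; exact rfl
      · exact absurd hzB (hmid t h h2)
  set J := D ∪ E with hJdef
  have hJZ : J ⊆ Z := union_subset hDZ (hEB.trans hBZ)
  have zkey := private_point hD hE hDZ (hEB.trans hBZ) hcap hcut
  have Mkey : ∀ p (hp : p ∈ J), ∃ M : Set S2, M ⊆ Z ∧ (∃ c d, IsArcBtw M c d) ∧
      ∀ v ∈ M, v ≠ p ∧ ∀ q ∈ J, q ≠ p → ¬ JoinedIn (Z \ {p}) v q := by
    intro p hp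
    obtain ⟨z, hzZ, hzp, hzprop⟩ := zkey p hp
    exact private_arc exA hJZ (hJZ hp) hzZ hzp hzprop
  choose Mf hMZ hMarc hMprop using Mkey
  obtain ⟨F, hFcl, hFarc, hFcov⟩ := family_of_trees hT
  have θfam : ∀ k : ℕ, ∃ θk : ℝ → S2, (∃ a' b', IsArcBtw (F k) a' b') →
      ContinuousOn θk (Icc 0 1) ∧ InjOn θk (Icc 0 1) ∧ θk '' Icc 0 1 = F k := by
    intro k
    by_cases h : ∃ a' b', IsArcBtw (F k) a' b'
    · obtain ⟨a', b', θ', h1, h2, h3, _, _⟩ := h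
      exact ⟨θ', fun _ => ⟨h1, h2, h3⟩⟩
    · exact ⟨fun _ => a, fun hh => absurd hh h⟩
  choose θF hθF using θfam
  have pick : ∀ p (hp : p ∈ J), ∃ kq : ℕ × ℚ, θF kq.1 ((kq.2 : ℚ) : ℝ) ∈ Mf p hp :=
    fun p hp => baire_pick (hMZ p hp) (hMarc p hp) hFcl hFcov hFarc hθF
  have hmemJ : ∀ t : ↥(Icc s u), γ ↑t ∈ J := fun t => Or.inl (mem_image_of_mem γ t.2)
  have hcnt : Countable ↥(Icc s u) := by
    choose kq hkq using fun t : ↥(Icc s u) => pick (γ ↑t) (hmemJ t)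
    have hinj : Function.Injective kq := by
      intro t t' h
      by_contra hne'
      have htI : (t:ℝ) ∈ Icc (0:ℝ) 1 := ⟨le_trans hsI.1 t.2.1, le_trans t.2.2 huI.2⟩
      have htI' : (t':ℝ) ∈ Icc (0:ℝ) 1 := ⟨le_trans hsI.1 t'.2.1, le_trans t'.2.2 huI.2⟩
      have hptne : γ ↑t ≠ γ ↑t' := fun hh => hne' (Subtype.ext (hγi htI htI' hh))
      have h1 := hkq t
      have h2 : θF (kq t).1 (((kq t).2 : ℚ) : ℝ) ∈ Mf (γ ↑t') (hmemJ t') := by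
        rw [h]; exact hkq t'
      obtain ⟨hvp, hnj⟩ := hMprop (γ ↑t) (hmemJ t) _ h1
      obtain ⟨hvp', hnj'⟩ := hMprop (γ ↑t') (hmemJ t') _ h2
      exact private_disj exA hJZ (hmemJ t) (hmemJ t') hptne (hMZ _ _ h1) hnj hnj' hvp hvp'
    exact hinj.countable
  have h1 := Cardinal.mk_Icc_real hsu
  have h2 : Cardinal.mk ↥(Icc s u) ≤ Cardinal.aleph0 := Cardinal.mk_le_aleph0
  rw [h1] at h2
  exact absurd h2 (not_le.mpr Cardinal.aleph0_lt_continuum)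

end Aux

/-- Unique path: in a zipper, any two distinct points of `Z⁺` are joined
by a unique embedded path in `Z⁺`, and similarly for `Z⁻`. -/
theorem stmt10 (Zp Zm : Set S2) (hz : IsZipper Zp Zm) :
    (∀ x ∈ Zp, ∀ y ∈ Zp, x ≠ y →
      ∃ B : Set S2, B ⊆ Zp ∧ IsArcBtw B x y ∧
        ∀ C : Set S2, C ⊆ Zp → IsArcBtw C x y → C = B) ∧
    (∀ x ∈ Zm, ∀ y ∈ Zm, x ≠ y →
      ∃ B : Set S2, B ⊆ Zm ∧ IsArcBtw B x y ∧
        ∀ C : Set S2, C ⊆ Zm → IsArcBtw C x y → C = B) := by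
  obtain ⟨-, -, -, -, -, hcutp, hcutm, hTp, hTm⟩ := hz
  constructor
  · intro x hx y hy hxy
    obtain ⟨B, hBZ, hB⟩ := Aux.exists_arc_zip hTp x hx y hy hxy
    exact ⟨B, hBZ, hB, fun C hCZ hC => Aux.unique_arc hTp hcutp hBZ hCZ hB hC⟩
  · intro x hx y hy hxy
    obtain ⟨B, hBZ, hB⟩ := Aux.exists_arc_zip hTm x hx y hy hxy
    exact ⟨B, hBZ, hB, fun C hCZ hC => Aux.unique_arc hTm hcutm hBZ hCZ hB hC⟩
end
end

section
/- Let h : S¹ → S¹ be a covering map of degree d > 1. Then h is topologically conjugate to the map z ↦ z^d if and only if h is locally eventually onto: for every nonempty open interval U ⊆ S¹ there exists n ≥ 0 with hⁿ(U) = S¹. -/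
open Set Topology
open Filter

noncomputable section

instance realFactZeroLtOne : Fact ((0:ℝ) < 1) := ⟨one_pos⟩

lemma coe_eq_coe (a b : ℝ) : ((a : S1) = b) ↔ ∃ k : ℤ, b = a + k := by
  rw [QuotientAddGroup.eq_iff_sub_mem]
  constructor
  · rintro hm
    obtain ⟨k, hk⟩ := AddSubgroup.mem_zmultiples_iff.mp hm
    rw [zsmul_eq_mul, mul_one] at hk
    exact ⟨-k, by push_cast; linarith⟩
  · rintro ⟨k, rfl⟩
    exact AddSubgroup.mem_zmultiples_iff.mpr ⟨-k, by rw [zsmul_eq_mul, mul_one]; push_cast; ring⟩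

lemma interior_max_not_locinj (G : ℝ → ℝ) (hGc : Continuous G) {a b c : ℝ}
    (hac : a < c) (hcb : c < b) (hmax : IsMaxOn G (Icc a b) c) {ε : ℝ} (hε : 0 < ε)
    (hinj : InjOn G (Metric.ball c ε)) : False := by
  set δ : ℝ := min (min (c - a) (b - c)) ε / 2 with hδ
  have hδpos : 0 < δ := by
    apply div_pos _ two_pos
    simp only [lt_min_iff]
    exact ⟨⟨by linarith, by linarith⟩, hε⟩
  have hδε : δ < ε := by
    have h' : min (min (c - a) (b - c)) ε ≤ ε := min_le_right _ _
    rw [hδ]; linarith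
  have hδa : a ≤ c - δ := by
    have h' : min (min (c - a) (b - c)) ε ≤ c - a := le_trans (min_le_left _ _) (min_le_left _ _)
    rw [hδ]; linarith
  have hδb : c + δ ≤ b := by
    have h' : min (min (c - a) (b - c)) ε ≤ b - c := le_trans (min_le_left _ _) (min_le_right _ _)
    rw [hδ]; linarith
  have hm1 : c - δ ∈ Metric.ball c ε := by
    rw [Metric.mem_ball, Real.dist_eq]
    rw [show c - δ - c = -δ by ring, abs_neg, abs_of_nonneg hδpos.le]
    exact hδε
  have hm2 : c + δ ∈ Metric.ball c ε := by
    rw [Metric.mem_ball, Real.dist_eq]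
    rw [show c + δ - c = δ by ring, abs_of_nonneg hδpos.le]
    exact hδε
  have hmc : c ∈ Metric.ball c ε := Metric.mem_ball_self hε
  have h1 : G (c - δ) < G c := by
    refine lt_of_le_of_ne (hmax ⟨hδa, by linarith⟩) fun he => ?_
    have := hinj hm1 hmc he
    linarith
  have h2 : G (c + δ) < G c := by
    refine lt_of_le_of_ne (hmax ⟨by linarith, hδb⟩) fun he => ?_
    have := hinj hm2 hmc he
    linarith
  set m : ℝ := (max (G (c - δ)) (G (c + δ)) + G c) / 2 with hm
  have hmlt : m < G c := by
    have := max_lt h1 h2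
    rw [hm]; cases' max_cases (G (c-δ)) (G (c+δ)) with hcs hcs <;> rw [hcs.1] <;> linarith
  have hmgt1 : G (c - δ) < m := by
    have := le_max_left (G (c - δ)) (G (c + δ)); rw [hm]; linarith
  have hmgt2 : G (c + δ) < m := by
    have := le_max_right (G (c - δ)) (G (c + δ)); rw [hm]; linarith
  obtain ⟨x, hx, hGx⟩ := intermediate_value_Icc (by linarith : c - δ ≤ c)
    hGc.continuousOn ⟨hmgt1.le, hmlt.le⟩
  obtain ⟨y, hy, hGy⟩ := intermediate_value_Icc' (by linarith : c ≤ c + δ)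
    hGc.continuousOn ⟨hmgt2.le, hmlt.le⟩
  have hxc : x < c := lt_of_le_of_ne hx.2 fun he => by rw [he] at hGx; linarith
  have hyc : c < y := lt_of_le_of_ne hy.1 fun he => by rw [← he] at hGy; linarith
  have hxball : x ∈ Metric.ball c ε := by
    rw [Metric.mem_ball, Real.dist_eq, abs_of_nonpos (by linarith)]
    linarith [hx.1]
  have hyball : y ∈ Metric.ball c ε := by
    rw [Metric.mem_ball, Real.dist_eq, abs_of_nonneg (by linarith)]
    linarith [hy.2]
  have : x = y := hinj hxball hyball (hGx.trans hGy.symm)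
  linarith

lemma F_locinj (h : S1 → S1) (F : ℝ → ℝ)
    (hlift : ∀ t : ℝ, ((F t : S1)) = h (t : S1))
    (hcov : IsCoveringMap h) (t0 : ℝ) :
    ∃ ε > 0, InjOn F (Metric.ball t0 ε) := by
  obtain ⟨U, hUopen, hmem, hUinj⟩ := hcov.isLocalHomeomorph.isLocallyInjective ((t0 : S1))
  have hop : IsOpen (((↑) : ℝ → S1) ⁻¹' U) := hUopen.preimage continuous_quotient_mk'
  obtain ⟨ε, hε, hball⟩ := Metric.isOpen_iff.mp hop t0 hmem
  refine ⟨min ε (1/2), by positivity, ?_⟩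
  intro s hs t ht hst
  have hsb : s ∈ Metric.ball t0 ε :=
    Metric.ball_subset_ball (min_le_left _ _) hs
  have htb : t ∈ Metric.ball t0 ε :=
    Metric.ball_subset_ball (min_le_left _ _) ht
  have hcc : (s : S1) = (t : S1) := by
    apply hUinj (hball hsb) (hball htb)
    rw [← hlift, ← hlift, hst]
  rw [coe_eq_coe] at hcc
  obtain ⟨k, hk⟩ := hcc
  have hs' : |s - t0| < 1/2 := lt_of_lt_of_le (Metric.mem_ball.mp hs) (min_le_right _ _)
  have ht' : |t - t0| < 1/2 := lt_of_lt_of_le (Metric.mem_ball.mp ht) (min_le_right _ _)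
  rw [abs_lt] at hs' ht'
  have h1 : (-1:ℝ) < k := by push_cast; linarith [hk]
  have h2 : (k:ℝ) < 1 := by push_cast; linarith [hk]
  have h1' : (-1:ℤ) < k := by exact_mod_cast h1
  have h2' : (k:ℤ) < 1 := by exact_mod_cast h2
  have : k = 0 := by omega
  rw [this] at hk; push_cast at hk; linarith

lemma F_strictMono (d : ℕ) (hd : 1 < d) (h : S1 → S1) (F : ℝ → ℝ) (hFc : Continuous F)
    (hlift : ∀ t : ℝ, ((F t : S1)) = h (t : S1))
    (hdeg : ∀ t : ℝ, F (t + 1) = F t + d)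
    (hcov : IsCoveringMap h) : StrictMono F := by
  have loc := F_locinj h F hlift hcov
  have hinj : Function.Injective F := by
    suffices H : ∀ a b : ℝ, a < b → F a = F b → False by
      intro a b hab
      rcases lt_trichotomy a b with hl | he | hl
      · exact absurd hab (fun hab => H a b hl hab)
      · exact he
      · exact absurd hab (fun hab => (H b a hl hab.symm))
    intro a b hab hFab
    obtain ⟨c, hc, hcmax⟩ := isCompact_Icc.exists_isMaxOn (nonempty_Icc.mpr hab.le)
      hFc.continuousOn
    obtain ⟨c', hc', hcmin⟩ := isCompact_Icc.exists_isMinOn (nonempty_Icc.mpr hab.le)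
      hFc.continuousOn
    by_cases hcint : a < c ∧ c < b
    · obtain ⟨ε, hε, hinj⟩ := loc c
      exact interior_max_not_locinj F hFc hcint.1 hcint.2 hcmax hε hinj
    by_cases hcint' : a < c' ∧ c' < b
    · obtain ⟨ε, hε, hinj⟩ := loc c'
      have hmaxneg : IsMaxOn (fun x => -F x) (Icc a b) c' := by
        intro x hx
        have : F c' ≤ F x := hcmin hx
        simp only [mem_setOf_eq]
        linarith
      refine interior_max_not_locinj (fun x => -F x) (hFc.neg) hcint'.1 hcint'.2
        hmaxneg hε ?_
      intro x hx y hy hxy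
      exact hinj hx hy (neg_injective hxy)
    -- both extrema at endpoints: F is constant on [a,b]
    · have hFc' : F c = F a := by
        rcases hc.1.eq_or_lt' with he | hlt
        · rw [← he]
        · have : c = b := le_antisymm hc.2 (by
            by_contra hcb
            exact hcint ⟨hlt, lt_of_le_of_ne hc.2 (fun hh => hcb (hh ▸ le_rfl))⟩)
          rw [this, hFab]
      have hFc'' : F c' = F a := by
        rcases hc'.1.eq_or_lt' with he | hlt
        · rw [← he]
        · have : c' = b := le_antisymm hc'.2 (by
            by_contra hcb
            exact hcint' ⟨hlt, lt_of_le_of_ne hc'.2 (fun hh => hcb (hh ▸ le_rfl))⟩)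
          rw [this, hFab]
      have hconst : ∀ x ∈ Icc a b, F x = F a := by
        intro x hx
        have h1 : F x ≤ F c := hcmax hx
        have h2 : F c' ≤ F x := hcmin hx
        rw [hFc'] at h1; rw [hFc''] at h2
        linarith
      obtain ⟨ε, hε, hinj⟩ := loc ((a+b)/2)
      set δ : ℝ := min ε ((b-a)/2) / 2 with hδ
      have hδpos : 0 < δ := by
        apply div_pos _ two_pos
        simp only [lt_min_iff]
        exact ⟨hε, by linarith⟩
      have hδε : δ < ε := by
        have h' : min ε ((b-a)/2) ≤ ε := min_le_left _ _
        rw [hδ]; linarith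
      have hδab : δ ≤ (b-a)/4 := by
        have h' : min ε ((b-a)/2) ≤ (b-a)/2 := min_le_right _ _
        rw [hδ]; linarith
      have hmem1 : (a+b)/2 ∈ Metric.ball ((a+b)/2) ε := Metric.mem_ball_self hε
      have hmem2 : (a+b)/2 + δ ∈ Metric.ball ((a+b)/2) ε := by
        rw [Metric.mem_ball, Real.dist_eq, show (a+b)/2 + δ - (a+b)/2 = δ by ring,
          abs_of_nonneg hδpos.le]
        exact hδε
      have he1 : F ((a+b)/2) = F a := hconst _ ⟨by linarith, by linarith⟩
      have he2 : F ((a+b)/2 + δ) = F a := hconst _ ⟨by linarith, by linarith⟩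
      have := hinj hmem1 hmem2 (he1.trans he2.symm)
      linarith
  rcases hFc.strictMono_of_inj hinj with hm | ha
  · exact hm
  · exfalso
    have h1 := hdeg 0
    have h2 := ha (show (0:ℝ) < 1 by norm_num)
    rw [zero_add] at h1
    have : (1:ℝ) ≤ d := by exact_mod_cast hd.le
    linarith

section Phi
variable (d : ℕ) (F : ℝ → ℝ)

def Gm : ℝ → ℝ := fun t => F t - d * t

variable {d F}
variable (hd : 1 < d) (hFc : Continuous F) (hdeg : ∀ t : ℝ, F (t + 1) = F t + d)

include hdeg in
lemma Fnat : ∀ (m : ℕ) (t : ℝ), F (t + m) = F t + d * m := by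
  intro m
  induction m with
  | zero => simp
  | succ n ih =>
    intro t
    have : t + (n+1:ℕ) = (t + n) + 1 := by push_cast; ring
    rw [this, hdeg, ih]
    push_cast; ring

include hdeg in
lemma Fint : ∀ (k : ℤ) (t : ℝ), F (t + k) = F t + d * k := by
  intro k t
  rcases le_or_gt 0 k with hk | hk
  · obtain ⟨m, rfl⟩ := Int.eq_ofNat_of_zero_le hk
    exact_mod_cast Fnat hdeg m t
  · obtain ⟨m, rfl⟩ : ∃ m : ℕ, k = -(m:ℤ) := ⟨k.natAbs, by omega⟩
    have := Fnat hdeg m (t - m)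
    push_cast
    push_cast at this
    rw [sub_add_cancel] at this
    have h2 : t + -(m:ℝ) = t - m := by ring
    rw [h2]; linarith

include hdeg in
lemma Gper : ∀ (k : ℤ) (t : ℝ), Gm d F (t + k) = Gm d F t := by
  intro k t
  simp only [Gm, Fint hdeg k t]
  ring

include hFc hdeg in
lemma Gbdd : ∃ M : ℝ, 0 ≤ M ∧ ∀ t : ℝ, |Gm d F t| ≤ M := by
  have hGc : Continuous (Gm d F) := hFc.sub (continuous_const.mul continuous_id)
  obtain ⟨M, hM⟩ := (isCompact_Icc : IsCompact (Icc (0:ℝ) 1)).exists_bound_of_continuousOn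
    hGc.continuousOn
  refine ⟨max M 0, le_max_right _ _, fun t => ?_⟩
  have hfr : Gm d F t = Gm d F (Int.fract t) := by
    have h2 : Int.fract t + (⌊t⌋ : ℤ) = t := by rw [Int.fract]; ring
    conv_lhs => rw [← h2]
    rw [Gper hdeg]
  rw [hfr]
  have : Int.fract t ∈ Icc (0:ℝ) 1 := ⟨Int.fract_nonneg t, (Int.fract_lt_one t).le⟩
  exact le_trans (by simpa using hM _ this) (le_max_left _ _)

include hd in
lemma iter_div_eq (t : ℝ) : ∀ n : ℕ,
    F^[n] t / d^n = t + ∑ k ∈ Finset.range n, Gm d F (F^[k] t) / d^(k+1) := by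
  have hd0 : (0:ℝ) < d := by positivity
  intro n
  induction n with
  | zero => simp
  | succ n ih =>
    rw [Function.iterate_succ_apply', Finset.sum_range_succ, ← add_assoc, ← ih]
    have : F (F^[n] t) = d * F^[n] t + Gm d F (F^[n] t) := by simp only [Gm]; ring
    rw [this]
    field_simp
    ring

variable (hM : ∃ M : ℝ, 0 ≤ M ∧ ∀ t : ℝ, |Gm d F t| ≤ M)

include hd hM in
lemma summable_phi (t : ℝ) : Summable (fun k : ℕ => Gm d F (F^[k] t) / d^(k+1)) := by
  obtain ⟨M, hM0, hMb⟩ := hM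
  have hd1 : (1:ℝ) < d := by exact_mod_cast hd
  apply Summable.of_norm_bounded (g := fun k : ℕ => M * (1/d)^(k+1))
  · apply Summable.mul_left
    have : Summable (fun k : ℕ => (1/(d:ℝ))^k) :=
      summable_geometric_of_lt_one (by positivity) (by rw [div_lt_one] <;> linarith)
    exact (summable_nat_add_iff 1).mpr this
  · intro k
    rw [Real.norm_eq_abs, abs_div]
    rw [abs_of_nonneg (by positivity : (0:ℝ) ≤ (d:ℝ)^(k+1))]
    rw [div_pow, one_pow, mul_one_div, div_le_div_iff₀ (by positivity) (by positivity)]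
    calc |Gm d F (F^[k] t)| * d^(k+1) ≤ M * d^(k+1) := by
          apply mul_le_mul_of_nonneg_right (hMb _) (by positivity)
      _ = M * d^(k+1) := rfl

noncomputable def Phi (e : ℕ) (Fn : ℝ → ℝ) : ℝ → ℝ :=
  fun t => t + ∑' k : ℕ, Gm e Fn (Fn^[k] t) / e^(k+1)

include hd hM in
lemma tendsto_phi (t : ℝ) :
    Tendsto (fun n => F^[n] t / d^n) atTop (𝓝 (Phi d F t)) := by
  have hs := (summable_phi hd hM t).hasSum.tendsto_sum_nat
  have := (tendsto_const_nhds (x := t) (f := atTop (α := ℕ))).add hs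
  refine this.congr fun n => (iter_div_eq hd t n).symm

include hd hM in
lemma phi_cont (hFc : Continuous F) : Continuous (Phi d F) := by
  obtain ⟨M, hM0, hMb⟩ := hM
  have hd1 : (1:ℝ) < d := by exact_mod_cast hd
  apply continuous_id.add
  apply continuous_tsum (u := fun k : ℕ => M * (1/d)^(k+1))
  · intro k
    have hGc : Continuous (Gm d F) := hFc.sub (continuous_const.mul continuous_id)
    exact (hGc.comp (hFc.iterate k)).div_const _
  · apply Summable.mul_left
    have : Summable (fun k : ℕ => (1/(d:ℝ))^k) :=
      summable_geometric_of_lt_one (by positivity) (by rw [div_lt_one] <;> linarith)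
    exact (summable_nat_add_iff 1).mpr this
  · intro k x
    rw [Real.norm_eq_abs, abs_div, abs_of_nonneg (by positivity : (0:ℝ) ≤ (d:ℝ)^(k+1)),
      div_pow, one_pow, mul_one_div, div_le_div_iff₀ (by positivity) (by positivity)]
    exact mul_le_mul_of_nonneg_right (hMb _) (by positivity)

include hd hM in
lemma phi_mono (hmono : StrictMono F) : Monotone (Phi d F) := by
  intro s t hst
  refine le_of_tendsto_of_tendsto' (tendsto_phi hd hM s) (tendsto_phi hd hM t) fun n => ?_
  have h1 : F^[n] s ≤ F^[n] t := (hmono.monotone.iterate n) hst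
  have h2 : (0:ℝ) < d^n := by positivity
  gcongr
  
include hd hM in
lemma phi_F (t : ℝ) : Phi d F (F t) = d * Phi d F t := by
  have h1 : Tendsto (fun n => F^[n] (F t) / (d:ℝ)^n) atTop (𝓝 (Phi d F (F t))) :=
    tendsto_phi hd hM (F t)
  have h2 : Tendsto (fun n : ℕ => F^[n+1] t / (d:ℝ)^(n+1)) atTop (𝓝 (Phi d F t)) :=
    (tendsto_phi hd hM t).comp (tendsto_add_atTop_nat 1)
  have h3 := h2.const_mul (d:ℝ)
  have he : (fun n : ℕ => (d:ℝ) * (F^[n+1] t / (d:ℝ)^(n+1))) =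
      fun n => F^[n] (F t) / (d:ℝ)^n := by
    funext n
    rw [Function.iterate_succ_apply, pow_succ]
    have hdn : ((d:ℝ))^n ≠ 0 := by positivity
    have hd0 : (d:ℝ) ≠ 0 := by positivity
    field_simp
  rw [he] at h3
  exact tendsto_nhds_unique h1 h3

include hdeg in
lemma iterate_shift (n : ℕ) (t : ℝ) : F^[n] (t + 1) = F^[n] t + d^n := by
  induction n generalizing t with
  | zero => simp
  | succ n ih =>
    rw [Function.iterate_succ_apply', Function.iterate_succ_apply', ih]
    have := Fnat hdeg (d^n) (F^[n] t)
    push_cast at this ⊢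
    rw [this]; ring

include hd hM hdeg in
lemma phi_one (t : ℝ) : Phi d F (t + 1) = Phi d F t + 1 := by
  have h1 : Tendsto (fun n => F^[n] (t+1) / (d:ℝ)^n) atTop (𝓝 (Phi d F (t+1))) :=
    tendsto_phi hd hM (t+1)
  have h2 : Tendsto (fun n => F^[n] t / (d:ℝ)^n + 1) atTop (𝓝 (Phi d F t + 1)) :=
    (tendsto_phi hd hM t).add_const 1
  have he : (fun n => F^[n] t / (d:ℝ)^n + 1) = fun n => F^[n] (t+1) / (d:ℝ)^n := by
    funext n
    rw [iterate_shift hdeg n t]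
    have hdn : ((d:ℝ))^n ≠ 0 := by positivity
    push_cast
    field_simp
  rw [he] at h2
  exact tendsto_nhds_unique h1 h2

include hd hM hdeg in
lemma phi_int (k : ℤ) (t : ℝ) : Phi d F (t + k) = Phi d F t + k := by
  induction k using Int.induction_on with
  | zero => simp
  | succ n ih =>
    have h2 : t + (((n:ℤ)+1 : ℤ) : ℝ) = (t + ((n:ℤ) : ℝ)) + 1 := by push_cast; ring
    rw [h2, phi_one hd hdeg hM, ih]
    push_cast; ring
  | pred n ih =>
    have h2 : t + (-(n:ℤ)-1 : ℤ) + 1 = t + (-(n:ℤ) : ℤ) := by push_cast; ring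
    have := phi_one hd hdeg hM (t + (-(n:ℤ)-1 : ℤ))
    rw [h2, ih] at this
    push_cast at this ⊢
    linarith

include hd hM hdeg in
lemma phi_surj (hFc : Continuous F) : Function.Surjective (Phi d F) := by
  intro y
  set k : ℕ := ⌈|y - Phi d F 0|⌉₊ with hk
  have hky : |y - Phi d F 0| ≤ k := Nat.le_ceil _
  rw [abs_le] at hky
  have e1 : Phi d F (-(k:ℝ)) = Phi d F 0 - k := by
    have := phi_int hd hdeg hM (-(k:ℤ)) 0
    push_cast at this
    simp at this; linarith
  have e2 : Phi d F (k:ℝ) = Phi d F 0 + k := by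
    have := phi_int hd hdeg hM (k:ℤ) 0
    push_cast at this
    simpa using this
  have hmem : y ∈ Icc (Phi d F (-(k:ℝ))) (Phi d F (k:ℝ)) := by
    rw [e1, e2]
    constructor <;> linarith [hky.1, hky.2]
  obtain ⟨x, _, hx⟩ := intermediate_value_Icc (by
      have : (0:ℝ) ≤ k := by positivity
      linarith : -(k:ℝ) ≤ (k:ℝ))
    (phi_cont hd hM hFc).continuousOn hmem
  exact ⟨x, hx⟩

include hd hM in
lemma phi_iterate (n : ℕ) (t : ℝ) : Phi d F (F^[n] t) = d^n * Phi d F t := by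
  induction n with
  | zero => simp
  | succ n ih =>
    rw [Function.iterate_succ_apply', phi_F hd hM, ih, pow_succ]
    ring

end Phi


lemma icc_full {a b : ℝ} (hab : a + 1 ≤ b) : (((↑) : ℝ → S1) '' Icc a b) = univ := by
  apply eq_univ_of_subset (image_mono (Icc_subset_Icc le_rfl hab))
  exact AddCircle.coe_image_Icc_eq 1 a

lemma icc_not_full {a b : ℝ} (hlen : b - a < 1) :
    (((↑) : ℝ → S1) '' Icc a b) ≠ univ := by
  intro hfull
  set x : S1 := ((b + (1 - (b - a)) / 2 : ℝ) : S1)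
  have hx : x ∈ (((↑) : ℝ → S1) '' Icc a b) := hfull ▸ mem_univ x
  obtain ⟨t, ht, hxt⟩ := hx
  rw [coe_eq_coe] at hxt
  obtain ⟨k, hk⟩ := hxt
  simp only [mem_Icc] at ht
  have h1 : (0:ℝ) < k := by nlinarith [ht.1, ht.2]
  have h2 : (k:ℝ) < 1 := by nlinarith [ht.1, ht.2]
  have h1' : (0:ℤ) < k := by exact_mod_cast h1
  have h2' : (k:ℤ) < 1 := by exact_mod_cast h2
  omega

lemma nsmul_coe (k : ℕ) (s : ℝ) : (k • (s : S1)) = ((k * s : ℝ) : S1) := by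
  have := map_nsmul (QuotientAddGroup.mk' (AddSubgroup.zmultiples (1:ℝ))) k s
  simp only [QuotientAddGroup.mk'_apply] at this
  rw [← this, nsmul_eq_mul]

/-- LEO: a degree-`d` covering map `h : S¹ → S¹` (with `d > 1`), i.e. a
covering map admitting a continuous lift `F : ℝ → ℝ` with `F(t+1) = F(t) + d`, is
topologically conjugate to `z ↦ z^d` (multiplication by `d` on `ℝ/ℤ`) if and only if it
is locally eventually onto: every nonempty open set has a forward iterate equal to all
of `S¹`. -/
theorem stmt17 (d : ℕ) (hd : 1 < d) (h : S1 → S1)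
    (F : ℝ → ℝ) (hFc : Continuous F)
    (hlift : ∀ t : ℝ, ((F t : S1)) = h (t : S1))
    (hdeg : ∀ t : ℝ, F (t + 1) = F t + d)
    (hcov : IsCoveringMap h) :
    (∃ φ : S1 ≃ₜ S1, ∀ x : S1, φ (h x) = d • (φ x)) ↔
      ∀ U : Set S1, IsOpen U → U.Nonempty → ∃ n : ℕ, h^[n] '' U = univ := by
  have hd1 : (1:ℝ) < d := by exact_mod_cast hd
  have hcomm : ∀ (m : ℕ) (t : ℝ), ((F^[m] t : ℝ) : S1) = h^[m] ((t : ℝ) : S1) := by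
    intro m
    induction m with
    | zero => intro t; rfl
    | succ m ih =>
      intro t
      rw [Function.iterate_succ_apply', Function.iterate_succ_apply', ← ih, ← hlift]
  constructor
  · -- conjugacy → LEO
    rintro ⟨φ, hφ⟩ U hUopen hUne
    have hφn : ∀ (n : ℕ) (x : S1), φ (h^[n] x) = d^n • (φ x) := by
      intro n
      induction n with
      | zero => intro x; simp
      | succ n ih =>
        intro x
        rw [Function.iterate_succ_apply', hφ, ih, smul_smul, ← pow_succ']
    -- V := φ '' U contains a coe-ball
    obtain ⟨x0, hx0⟩ := hUne
    obtain ⟨t0, ht0eq⟩ := QuotientAddGroup.mk_surjective (φ x0)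
    have hVopen : IsOpen (φ '' U) := (Homeomorph.isOpenMap φ) U hUopen
    have hWopen : IsOpen (((↑) : ℝ → S1) ⁻¹' (φ '' U)) :=
      hVopen.preimage continuous_quotient_mk'
    have ht0 : t0 ∈ (((↑) : ℝ → S1) ⁻¹' (φ '' U)) := by
      rw [mem_preimage, ht0eq]
      exact mem_image_of_mem φ hx0
    obtain ⟨ε, hε, hball⟩ := Metric.isOpen_iff.mp hWopen t0 ht0
    obtain ⟨n, hn⟩ := pow_unbounded_of_one_lt (2/ε) hd1
    have hdn : (0:ℝ) < (d:ℝ)^n := by positivity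
    have hεd : 1 ≤ (d:ℝ)^n * ε := by
      rw [div_lt_iff₀ hε] at hn
      nlinarith
    refine ⟨n, ?_⟩
    have hsurj : φ '' (h^[n] '' U) = univ := by
      apply eq_univ_of_forall
      intro y
      set A : ℝ := (d:ℝ)^n * (t0 - ε/2) with hA
      have : y ∈ (((↑) : ℝ → S1) '' Icc A (A + 1)) := by
        rw [AddCircle.coe_image_Icc_eq 1 A]; trivial
      obtain ⟨s, hs, rfl⟩ := this
      set u : ℝ := s / (d:ℝ)^n with hu
      have hu1 : t0 - ε/2 ≤ u := by
        rw [hu, le_div_iff₀ hdn]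
        rw [mem_Icc] at hs
        nlinarith [hs.1]
      have hu2 : u ≤ t0 + ε/2 := by
        rw [hu, div_le_iff₀ hdn]
        rw [mem_Icc] at hs
        nlinarith [hs.2]
      have huball : u ∈ Metric.ball t0 ε := by
        rw [Metric.mem_ball, Real.dist_eq, abs_lt]
        constructor <;> linarith
      have huV : ((u : ℝ) : S1) ∈ φ '' U := hball huball
      obtain ⟨z, hz, hzu⟩ := huV
      refine ⟨h^[n] z, mem_image_of_mem _ hz, ?_⟩
      rw [hφn n z, hzu, nsmul_coe]
      congr 1
      rw [hu]
      push_cast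
      field_simp
    have : h^[n] '' U = φ.symm '' (φ '' (h^[n] '' U)) := by
      rw [image_image]
      simp
    rw [this, hsurj, image_univ]
    exact (φ.symm).surjective.range_eq
  · -- LEO → conjugacy
    intro hleo
    have hmono : StrictMono F := F_strictMono d hd h F hFc hlift hdeg hcov
    have hM := Gbdd hFc hdeg
    set Φ : ℝ → ℝ := Phi d F with hΦ
    have hΦc : Continuous Φ := phi_cont hd hM hFc
    have hΦm : Monotone Φ := phi_mono hd hM hmono
    have hΦF : ∀ t, Φ (F t) = d * Φ t := phi_F hd hM
    have hΦ1 : ∀ t, Φ (t + 1) = Φ t + 1 := phi_one hd hdeg hM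
    have hΦint : ∀ (k : ℤ) (t : ℝ), Φ (t + k) = Φ t + k := phi_int hd hdeg hM
    have hΦiter : ∀ (n : ℕ) (t : ℝ), Φ (F^[n] t) = d^n * Φ t := phi_iterate hd hM
    have hΦsurj : Function.Surjective Φ := phi_surj hd hdeg hM hFc
    -- injectivity of Φ, using LEO
    have hΦinj : Function.Injective Φ := by
      suffices H : ∀ a b : ℝ, a < b → Φ a = Φ b → False by
        intro a b hab
        rcases lt_trichotomy a b with hl | he | hl
        · exact absurd hab (fun hab => H a b hl hab)
        · exact he
        · exact absurd hab (fun hab => H b a hl hab.symm)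
      intro a b hab heq
      have hUopen : IsOpen ((((↑) : ℝ → S1)) '' Ioo a b) :=
        QuotientAddGroup.isOpenMap_coe _ isOpen_Ioo
      have hUne : ((((↑) : ℝ → S1)) '' Ioo a b).Nonempty :=
        (nonempty_Ioo.mpr hab).image _
      obtain ⟨n, hn⟩ := hleo _ hUopen hUne
      have himg : (((↑) : ℝ → S1)) '' (F^[n] '' Ioo a b) = univ := by
        have hcompeq : (((↑) : ℝ → S1) ∘ F^[n]) = (h^[n] ∘ ((↑) : ℝ → S1)) :=
          funext (hcomm n)
        rw [← hn, ← image_comp, ← image_comp, hcompeq]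
      have hsub : F^[n] '' Ioo a b ⊆ Icc (F^[n] a) (F^[n] b) := by
        rintro _ ⟨t, ht, rfl⟩
        exact ⟨(hmono.monotone.iterate n) ht.1.le, (hmono.monotone.iterate n) ht.2.le⟩
      have hfull : (((↑) : ℝ → S1)) '' Icc (F^[n] a) (F^[n] b) = univ :=
        eq_univ_of_univ_subset (himg ▸ image_mono hsub)
      have hlen : 1 ≤ F^[n] b - F^[n] a := by
        by_contra hcon
        push_neg at hcon
        exact icc_not_full hcon hfull
      have e1 := hΦiter n a
      have e2 := hΦiter n b
      have e3 := hΦ1 (F^[n] a)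
      have e4 : Φ (F^[n] a + 1) ≤ Φ (F^[n] b) := hΦm (by linarith)
      rw [heq] at e1
      linarith
    -- build the circle homeomorphism
    have hresp : ∀ a b : ℝ, (QuotientAddGroup.leftRel (AddSubgroup.zmultiples (1:ℝ))) a b →
        ((Φ a : ℝ) : S1) = ((Φ b : ℝ) : S1) := by
      intro a b hab
      rw [QuotientAddGroup.leftRel_apply] at hab
      obtain ⟨k, hk⟩ := AddSubgroup.mem_zmultiples_iff.mp hab
      rw [zsmul_eq_mul, mul_one] at hk
      have hb : b = a + k := by linarith
      rw [hb, hΦint k a, coe_eq_coe]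
      exact ⟨k, rfl⟩
    set f : S1 → S1 := fun x => Quotient.liftOn' x (fun t => ((Φ t : ℝ) : S1)) hresp with hf
    have hfcoe : ∀ t : ℝ, f ((t : ℝ) : S1) = ((Φ t : ℝ) : S1) := fun t => rfl
    have hfc : Continuous f :=
      (continuous_quotient_mk'.comp hΦc).quotient_liftOn' hresp
    have hfbij : Function.Bijective f := by
      constructor
      · intro x y hxy
        obtain ⟨s, rfl⟩ := QuotientAddGroup.mk_surjective x
        obtain ⟨t, rfl⟩ := QuotientAddGroup.mk_surjective y
        rw [hfcoe, hfcoe, coe_eq_coe] at hxy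
        obtain ⟨k, hk⟩ := hxy
        have : Φ t = Φ (s + k) := by rw [hΦint k s, ← hk]
        have hst : t = s + k := hΦinj this
        rw [coe_eq_coe]
        exact ⟨k, hst⟩
      · intro y
        obtain ⟨s, rfl⟩ := QuotientAddGroup.mk_surjective y
        obtain ⟨t, ht⟩ := hΦsurj s
        exact ⟨(t : S1), by rw [hfcoe, ht]⟩
    set e : S1 ≃ S1 := Equiv.ofBijective f hfbij with he
    have hec : Continuous e := hfc
    set φ : S1 ≃ₜ S1 := Continuous.homeoOfEquivCompactToT2 hec with hφdef
    refine ⟨φ, ?_⟩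
    intro x
    obtain ⟨t, rfl⟩ := QuotientAddGroup.mk_surjective x
    have h1 : h ((t : ℝ) : S1) = ((F t : ℝ) : S1) := (hlift t).symm
    have h2 : φ ((t : ℝ) : S1) = ((Φ t : ℝ) : S1) := rfl
    have h3 : φ (((F t : ℝ)) : S1) = ((Φ (F t) : ℝ) : S1) := rfl
    rw [h1, h3, h2, hΦF t, nsmul_coe]
end
end
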